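/- arXiv:1904.06794 — 4 statements merged into one kernel-verified Lean document; each statement's English description precedes it below -/
import Mathlib

section
/- For every positive integer n, writing n = 2^t · n' with n' odd, one has ∑_{m ∈ ℤ} m² · r^{e−o}(n − m²) = (2 − 6·[t > 0])·σ(n') − 4·σ(n/4), where σ denotes the sum-of-divisors function and σ(n/4) is interpreted as 0 when 4 ∤ n. -/
noncomputable def repCount (ℓ : ℕ) (n : ℤ) : ℕ :=
  Nat.card {v : Fin ℓ → ℤ // (∀ j, v j ≠ 0) ∧ ∑ j, (v j) ^ 2 = n}

noncomputable def rEO (n : ℤ) : ℤ := ∑' ℓ : ℕ, (-1) ^ ℓ * (repCount ℓ n : ℤ)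


lemma sq_abs_le {m n : ℤ} (h : m ^ 2 ≤ n) : -n ≤ m ∧ m ≤ n := by
  have h1 : |m| ≤ m ^ 2 := by
    rcases eq_or_ne m 0 with rfl | hm
    · simp
    · have : 1 ≤ |m| := Int.one_le_abs hm
      calc |m| = |m| * 1 := by ring
        _ ≤ |m| * |m| := by nlinarith
        _ = m ^ 2 := by rw [← abs_mul, sq, abs_mul_self]
  constructor
  · nlinarith [abs_nonneg m, neg_abs_le m]
  · nlinarith [le_abs_self m]

instance repFinite (ℓ : ℕ) (n : ℤ) :
    Finite {v : Fin ℓ → ℤ // (∀ j, v j ≠ 0) ∧ ∑ j, (v j) ^ 2 = n} := by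
  have hb : ∀ (v : {v : Fin ℓ → ℤ // (∀ j, v j ≠ 0) ∧ ∑ j, (v j) ^ 2 = n}) (j : Fin ℓ),
      v.1 j ∈ Finset.Icc (-n) n := by
    intro v j
    have h1 : (v.1 j) ^ 2 ≤ ∑ i, (v.1 i) ^ 2 :=
      Finset.single_le_sum (f := fun j => (v.1 j) ^ 2)
        (fun i _ => sq_nonneg _) (Finset.mem_univ j)
    rw [v.2.2] at h1
    have := sq_abs_le h1
    simp [Finset.mem_Icc, this.1, this.2]
  apply Finite.of_injective (fun v => (fun j => (⟨v.1 j, hb v j⟩ : (Finset.Icc (-n) n : Finset ℤ))))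
  intro v w h
  ext j
  exact congrArg Subtype.val (congrFun h j)

lemma repCount_zero (n : ℤ) : repCount 0 n = if n = 0 then 1 else 0 := by
  unfold repCount
  rcases eq_or_ne n 0 with rfl | hn
  · rw [if_pos rfl]
    have : Nonempty {v : Fin 0 → ℤ // (∀ j, v j ≠ 0) ∧ ∑ j, (v j) ^ 2 = 0} :=
      ⟨⟨fun j => j.elim0, fun j => j.elim0, by simp⟩⟩
    have : Subsingleton {v : Fin 0 → ℤ // (∀ j, v j ≠ 0) ∧ ∑ j, (v j) ^ 2 = 0} := by
      constructor; rintro ⟨v, _⟩ ⟨w, _⟩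
      ext j; exact j.elim0
    rw [Nat.card_eq_one_iff_unique]
    exact ⟨this, ‹Nonempty _›⟩
  · rw [if_neg hn]
    have : IsEmpty {v : Fin 0 → ℤ // (∀ j, v j ≠ 0) ∧ ∑ j, (v j) ^ 2 = n} := by
      constructor; rintro ⟨v, _, hv⟩
      simp at hv; exact hn hv.symm
    exact Nat.card_of_isEmpty

lemma repCount_eq_zero {ℓ : ℕ} {n : ℤ} (h : n < ℓ) : repCount ℓ n = 0 := by
  unfold repCount
  have : IsEmpty {v : Fin ℓ → ℤ // (∀ j, v j ≠ 0) ∧ ∑ j, (v j) ^ 2 = n} := by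
    constructor; rintro ⟨v, hv, hs⟩
    have : (ℓ : ℤ) ≤ n := by
      rw [← hs]
      calc (ℓ : ℤ) = ∑ _j : Fin ℓ, (1 : ℤ) := by simp
        _ ≤ ∑ j, (v j) ^ 2 := by
            apply Finset.sum_le_sum
            intro i _
            have : v i ≠ 0 := hv i
            have : 0 < (v i) ^ 2 := pow_pos (abs_pos.mpr this) 2 |>.trans_eq (by rw [sq_abs]) |>.trans_le (le_refl _) |>.trans_eq rfl
            omega
    omega
  exact Nat.card_of_isEmpty

lemma repCount_ne_zero {ℓ : ℕ} {n : ℤ} (h : repCount ℓ n ≠ 0) : (ℓ : ℤ) ≤ n := by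
  by_contra hc
  exact h (repCount_eq_zero (by omega))

noncomputable def SQ (n : ℤ) : Finset ℤ := (Finset.Icc (-n) n).filter (fun m => m ≠ 0 ∧ m ^ 2 ≤ n)

lemma mem_SQ {m n : ℤ} : m ∈ SQ n ↔ m ≠ 0 ∧ m ^ 2 ≤ n := by
  simp only [SQ, Finset.mem_filter, Finset.mem_Icc]
  constructor
  · tauto
  · intro h
    exact ⟨⟨(sq_abs_le h.2).1, (sq_abs_le h.2).2⟩, h.1, h.2⟩

lemma nat_card_sigma {ι : Type*} [Fintype ι] (β : ι → Type*) [∀ i, Finite (β i)] :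
    Nat.card (Σ i, β i) = ∑ i, Nat.card (β i) := by
  letI : ∀ i, Fintype (β i) := fun i => Fintype.ofFinite _
  simp [Nat.card_eq_fintype_card, Fintype.card_sigma]

lemma repCount_succ (ℓ : ℕ) (n : ℤ) :
    repCount (ℓ + 1) n = ∑ m ∈ SQ n, repCount ℓ (n - m ^ 2) := by
  have key : repCount (ℓ + 1) n =
      Nat.card (Σ m : (SQ n : Finset ℤ), {v : Fin ℓ → ℤ //
        (∀ j, v j ≠ 0) ∧ ∑ j, (v j) ^ 2 = n - (m : ℤ) ^ 2}) := by
    apply Nat.card_congr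
    refine ⟨fun v => ⟨⟨v.1 0, ?_⟩, ⟨Fin.tail v.1, fun j => v.2.1 j.succ, ?_⟩⟩,
           fun p => ⟨Fin.cons p.1.1 p.2.1, ?_, ?_⟩, ?_, ?_⟩
    · rw [mem_SQ]
      refine ⟨v.2.1 0, ?_⟩
      have hs := v.2.2
      rw [Fin.sum_univ_succ] at hs
      have : (0:ℤ) ≤ ∑ j : Fin ℓ, (v.1 j.succ) ^ 2 :=
        Finset.sum_nonneg fun i _ => sq_nonneg _
      omega
    · have hs := v.2.2
      rw [Fin.sum_univ_succ] at hs
      simp only [Fin.tail]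
      omega
    · intro j
      refine Fin.cases ?_ ?_ j
      · simpa using (mem_SQ.mp p.1.2).1
      · intro i; simpa using p.2.2.1 i
    · rw [Fin.sum_univ_succ]
      have := p.2.2.2
      simp only [Fin.cons_zero, Fin.cons_succ]
      omega
    · intro v
      ext j
      simp [Fin.cons_self_tail]
    · rintro ⟨m, w⟩
      simp [Fin.tail_cons]
      rfl
  rw [key, nat_card_sigma]
  rw [← Finset.sum_attach (SQ n) (fun m => repCount ℓ (n - m ^ 2))]
  rfl

lemma rEO_eq_sum {n : ℤ} {B : ℕ} (h : n < B) :
    rEO n = ∑ ℓ ∈ Finset.range B, (-1) ^ ℓ * (repCount ℓ n : ℤ) := by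
  apply tsum_eq_sum
  intro ℓ hℓ
  have hB : B ≤ ℓ := by simpa using hℓ
  have : repCount ℓ n = 0 := repCount_eq_zero (by push_cast; omega)
  simp [this]

lemma rEO_neg {n : ℤ} (h : n < 0) : rEO n = 0 := by
  rw [rEO_eq_sum (B := 0) (by omega)]; simp

lemma rEO_zero : rEO 0 = 1 := by
  rw [rEO_eq_sum (B := 1) (by omega)]
  simp [repCount_zero]

noncomputable def SQ0 (n : ℤ) : Finset ℤ := (Finset.Icc (-n) n).filter (fun m => m ^ 2 ≤ n)

lemma mem_SQ0 {m n : ℤ} : m ∈ SQ0 n ↔ m ^ 2 ≤ n := by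
  simp only [SQ0, Finset.mem_filter, Finset.mem_Icc]
  constructor
  · tauto
  · intro h; exact ⟨⟨(sq_abs_le h).1, (sq_abs_le h).2⟩, h⟩

lemma SQ0_eq_insert {n : ℤ} (h : 0 ≤ n) : SQ0 n = insert 0 (SQ n) := by
  ext m
  rw [mem_SQ0, Finset.mem_insert, mem_SQ]
  constructor
  · intro hm; by_cases h0 : m = 0
    · left; exact h0
    · right; exact ⟨h0, hm⟩
  · rintro (rfl | ⟨_, hm⟩)
    · simpa using h
    · exact hm

lemma zero_not_mem_SQ (n : ℤ) : (0 : ℤ) ∉ SQ n := by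
  rw [mem_SQ]; tauto

lemma theta_conv {n : ℤ} (h : 0 ≤ n) :
    ∑ m ∈ SQ0 n, rEO (n - m ^ 2) = if n = 0 then 1 else 0 := by
  rcases eq_or_lt_of_le h with rfl | hpos
  · have : SQ0 0 = {0} := by
      ext m; rw [mem_SQ0]; simp
    rw [this]; simp [rEO_zero]
  · rw [if_neg (by omega), SQ0_eq_insert h, Finset.sum_insert (zero_not_mem_SQ n)]
    have hrn : rEO n = ∑ ℓ ∈ Finset.range (n.toNat + 1), (-1) ^ ℓ * (repCount ℓ n : ℤ) :=
      rEO_eq_sum (by omega)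
    rw [Finset.sum_range_succ'] at hrn
    have h0 : ((repCount 0 n : ℤ)) = 0 := by rw [repCount_zero, if_neg (by omega)]; simp
    have hstep : ∀ ℓ, ((repCount (ℓ + 1) n : ℤ)) = ∑ m ∈ SQ n, (repCount ℓ (n - m ^ 2) : ℤ) := by
      intro ℓ; rw [repCount_succ]; push_cast; ring
    have hin : ∀ m ∈ SQ n, ∑ ℓ ∈ Finset.range n.toNat,
        (-1) ^ ℓ * (repCount ℓ (n - m ^ 2) : ℤ) = rEO (n - m ^ 2) := by
      intro m hm
      rw [mem_SQ] at hm
      have h1 : 1 ≤ m ^ 2 := by nlinarith [sq_nonneg m, Int.one_le_abs hm.1, abs_nonneg m, sq_abs m]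
      exact (rEO_eq_sum (by omega)).symm
    have hrn2 : rEO n = - ∑ m ∈ SQ n, rEO (n - m ^ 2) := by
      calc rEO n = ∑ ℓ ∈ Finset.range n.toNat, (-1) ^ (ℓ+1) * (repCount (ℓ+1) n : ℤ) := by
            rw [hrn, h0]; ring
        _ = ∑ ℓ ∈ Finset.range n.toNat, ∑ m ∈ SQ n,
              -((-1) ^ ℓ * (repCount ℓ (n - m ^ 2) : ℤ)) := by
            refine Finset.sum_congr rfl fun ℓ _ => ?_
            rw [hstep ℓ, Finset.mul_sum]
            refine Finset.sum_congr rfl fun m _ => by ring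
        _ = ∑ m ∈ SQ n, -(∑ ℓ ∈ Finset.range n.toNat,
              ((-1) ^ ℓ * (repCount ℓ (n - m ^ 2) : ℤ))) := by
            rw [Finset.sum_comm]
            exact Finset.sum_congr rfl fun m _ => by rw [Finset.sum_neg_distrib]
        _ = - ∑ m ∈ SQ n, rEO (n - m ^ 2) := by
            rw [← Finset.sum_neg_distrib]
            exact Finset.sum_congr rfl fun m hm => by rw [hin m hm]
    have : rEO (n - 0 ^ 2) = rEO n := by norm_num
    rw [this, hrn2]
    ring

noncomputable def Tf (n : ℤ) : ℤ := ∑' m : ℤ, m ^ 2 * rEO (n - m ^ 2)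

lemma Tf_eq_sum (n : ℤ) : Tf n = ∑ m ∈ SQ0 n, m ^ 2 * rEO (n - m ^ 2) := by
  apply tsum_eq_sum
  intro m hm
  rw [mem_SQ0] at hm
  push_neg at hm
  rcases eq_or_ne m 0 with rfl | h0
  · ring
  · rw [rEO_neg (by omega)]; ring

lemma Tf_nonpos {n : ℤ} (h : n ≤ 0) : Tf n = 0 := by
  rw [Tf_eq_sum]
  apply Finset.sum_eq_zero
  intro m hm
  rw [mem_SQ0] at hm
  rcases eq_or_ne m 0 with rfl | h0
  · ring
  · have : 1 ≤ m ^ 2 := by nlinarith [sq_nonneg m, Int.one_le_abs h0, sq_abs m, abs_nonneg m]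
    rw [rEO_neg (by omega)]; ring

lemma one_le_sq {m : ℤ} (h : m ≠ 0) : 1 ≤ m ^ 2 := by
  nlinarith [sq_nonneg m, Int.one_le_abs h, sq_abs m, abs_nonneg m]

lemma SQ0_subset {K N : ℤ} (h : K ≤ N) : SQ0 K ⊆ SQ0 N := by
  intro m hm; rw [mem_SQ0] at *; omega

lemma theta_conv' {K N : ℤ} (hN : 0 ≤ N) (hKN : K ≤ N) :
    ∑ m ∈ SQ0 N, rEO (K - m ^ 2) = if K = 0 then 1 else 0 := by
  rcases le_or_gt 0 K with hK | hK
  · rw [← theta_conv hK]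
    apply (Finset.sum_subset (SQ0_subset hKN) _).symm
    intro m _ hm
    rw [mem_SQ0] at hm
    exact rEO_neg (by omega)
  · rw [if_neg (by omega)]
    apply Finset.sum_eq_zero
    intro m _
    exact rEO_neg (by nlinarith [sq_nonneg m])

lemma Tf_conv {N : ℤ} (hN : 0 ≤ N) :
    ∑ m ∈ SQ0 N, Tf (N - m ^ 2) = ∑ k ∈ SQ0 N, k ^ 2 * (if N - k ^ 2 = 0 then 1 else 0) := by
  have hT : ∀ m ∈ SQ0 N, Tf (N - m ^ 2) = ∑ k ∈ SQ0 N, k ^ 2 * rEO (N - m ^ 2 - k ^ 2) := by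
    intro m hm
    rw [mem_SQ0] at hm
    have := sq_nonneg m
    rw [Tf_eq_sum]
    apply Finset.sum_subset (SQ0_subset (by omega))
    intro k _ hk
    rw [mem_SQ0] at hk
    rw [rEO_neg (by omega)]; ring
  rw [Finset.sum_congr rfl hT, Finset.sum_comm]
  apply Finset.sum_congr rfl
  intro k hk
  rw [mem_SQ0] at hk
  have hk0 := sq_nonneg k
  have : ∀ m ∈ SQ0 N, k ^ 2 * rEO (N - m ^ 2 - k ^ 2) = k ^ 2 * rEO ((N - k ^ 2) - m ^ 2) := by
    intro m _; ring_nf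
  rw [Finset.sum_congr rfl this, ← Finset.mul_sum, theta_conv' hN (by omega)]

def Lfun (j : ℕ) : ℤ :=
  ∑ a ∈ j.divisors, (if Even a then -(a : ℤ) else 2 * a * (-1) ^ (j / a + 1))

noncomputable def LL (k : ℤ) : ℤ := if 0 < k then Lfun k.toNat else 0


lemma LL_nonpos {k : ℤ} (h : k ≤ 0) : LL k = 0 := by
  rw [LL, if_neg (by omega)]

lemma coprime_pow_two {a : ℕ} (h : ¬ Even a) (t : ℕ) : Nat.Coprime (2 ^ t) a :=
  Nat.Coprime.pow_left t (((Nat.prime_two.coprime_iff_not_dvd).2 (by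
    intro hd; exact h (even_iff_two_dvd.mpr hd))))

lemma odd_divisors_filter {t n' : ℕ} (h' : Odd n') (hpos : 0 < n') :
    ((2 ^ t * n').divisors.filter (fun a => ¬ Even a)) = n'.divisors := by
  ext a
  simp only [Finset.mem_filter, Nat.mem_divisors]
  constructor
  · rintro ⟨⟨hd, _⟩, hodd⟩
    exact ⟨Nat.Coprime.dvd_of_dvd_mul_left (coprime_pow_two hodd t).symm hd, by omega⟩
  · rintro ⟨hd, _⟩
    have hne : (2:ℕ) ^ t * n' ≠ 0 := by positivity
    refine ⟨⟨Dvd.dvd.mul_left hd _, hne⟩, ?_⟩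
    rintro ⟨b, hb⟩
    rcases hd with ⟨c, hc⟩
    have : Even n' := ⟨b * c, by rw [hc, hb]; ring⟩
    rcases h' with ⟨k, hk⟩
    rcases this with ⟨x, hx⟩
    omega

lemma geom_two (t : ℕ) : (∑ i ∈ Finset.range (t + 1), (2 : ℤ) ^ i) = 2 ^ (t + 1) - 1 := by
  induction t with
  | zero => simp
  | succ t ih => rw [Finset.sum_range_succ, ih]; ring

lemma sigma_pow_two_mul {t n' : ℕ} (h' : Odd n') (hpos : 0 < n') :
    (∑ d ∈ (2 ^ t * n').divisors, (d : ℤ))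
      = (2 ^ (t + 1) - 1) * ∑ d ∈ n'.divisors, (d : ℤ) := by
  have hcop : Nat.Coprime (2 ^ t) n' := coprime_pow_two (by
    rcases h' with ⟨k, hk⟩; rintro ⟨b, hb⟩; omega) t
  have h0 := Nat.Coprime.sum_divisors_mul hcop
  have hcast : ((∑ d ∈ (2 ^ t * n').divisors, d : ℕ) : ℤ)
      = ((∑ d ∈ (2 ^ t).divisors, d : ℕ) : ℤ) * ((∑ d ∈ n'.divisors, d : ℕ) : ℤ) := by
    exact_mod_cast congrArg (fun x : ℕ => (x : ℤ)) h0
  push_cast at hcast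
  rw [hcast]
  congr 1
  rw [Nat.sum_divisors_prime_pow Nat.prime_two]
  push_cast
  exact geom_two t

lemma pow_two_split {t : ℕ} (h : 2 ≤ t) : (2:ℕ) ^ t = 4 * 2 ^ (t - 2) := by
  rw [show t = (t - 2) + 2 by omega, pow_add]
  rw [show (t - 2) + 2 - 2 = t - 2 by omega]
  ring

lemma Lfun_eval (n n' t : ℕ) (hn : 0 < n) (hfact : n = 2 ^ t * n') (hodd : Odd n') :
    Lfun n = (2 - 6 * (if 0 < t then 1 else 0)) * (∑ d ∈ n'.divisors, (d : ℤ))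
      - 4 * (if 4 ∣ n then ∑ d ∈ (n / 4).divisors, (d : ℤ) else 0) := by
  have hpos : 0 < n' := by
    rcases Nat.eq_zero_or_pos n' with rfl | h; · simp at hfact; omega
    · exact h
  rw [Lfun, Finset.sum_ite]
  have hofil : (n.divisors.filter (fun a => ¬ Even a)) = n'.divisors := by
    rw [hfact]; exact odd_divisors_filter hodd hpos
  have hsign : ∀ a ∈ n'.divisors, ((-1 : ℤ)) ^ (n / a + 1) = (if 0 < t then -1 else 1) := by
    intro a ha
    rw [Nat.mem_divisors] at ha
    have hq : n / a = 2 ^ t * (n' / a) := by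
      rw [hfact, Nat.mul_div_assoc _ ha.1]
    rcases Nat.eq_zero_or_pos t with rfl | ht
    · rw [if_neg (by omega)]
      have hdd : a * (n' / a) = n' := Nat.mul_div_cancel' ha.1
      have hob : Odd (n' / a) := by
        rcases Nat.even_or_odd (n' / a) with ⟨b, hb⟩ | ho
        · exfalso
          have : Even n' := ⟨a * b, by rw [← hdd, hb]; ring⟩
          rcases hodd with ⟨k, hk⟩; rcases this with ⟨x, hx⟩; omega
        · exact ho
      have : Even (n / a + 1) := by
        rw [hq]; simp only [pow_zero, one_mul]
        exact Odd.add_one hob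
      exact Even.neg_one_pow this
    · rw [if_pos ht]
      have : Odd (n / a + 1) := by
        apply Even.add_one
        obtain ⟨t', rfl⟩ : ∃ t', t = t' + 1 := ⟨t - 1, by omega⟩
        exact ⟨2 ^ t' * (n' / a), by rw [hq, pow_succ]; ring⟩
      exact Odd.neg_one_pow this
  have hodd_sum : ∑ a ∈ n.divisors.filter (fun a => ¬ Even a),
      (2 * (a : ℤ) * (-1) ^ (n / a + 1))
      = (if 0 < t then -1 else 1) * (2 * ∑ d ∈ n'.divisors, (d : ℤ)) := by
    rw [hofil, Finset.sum_congr rfl (fun a ha => by rw [hsign a ha])]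
    rw [Finset.mul_sum, Finset.mul_sum]
    exact Finset.sum_congr rfl (fun a _ => by ring)
  have htot : ∑ a ∈ n.divisors, (a : ℤ) = (2 ^ (t + 1) - 1) * ∑ d ∈ n'.divisors, (d : ℤ) := by
    rw [hfact]; exact sigma_pow_two_mul hodd hpos
  have hsplit : ∑ a ∈ n.divisors.filter (fun a => Even a), (a : ℤ)
      + ∑ a ∈ n.divisors.filter (fun a => ¬ Even a), (a : ℤ)
      = ∑ a ∈ n.divisors, (a : ℤ) := Finset.sum_filter_add_sum_filter_not _ _ _
  rw [hofil] at hsplit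
  have heven : ∑ a ∈ n.divisors.filter (fun a => Even a), (-(a : ℤ))
      = -((2 ^ (t + 1) - 1) * (∑ d ∈ n'.divisors, (d : ℤ)) - ∑ d ∈ n'.divisors, (d : ℤ)) := by
    rw [Finset.sum_neg_distrib]
    rw [show ∑ a ∈ n.divisors.filter (fun a => Even a), (a : ℤ)
        = ∑ a ∈ n.divisors, (a : ℤ) - ∑ d ∈ n'.divisors, (d : ℤ) by omega, htot]
  rw [heven, hodd_sum]
  have h4dvd : 4 ∣ n ↔ 2 ≤ t := by
    constructor
    · intro hd
      by_contra hc
      push_neg at hc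
      interval_cases t
      · rcases hodd with ⟨k, hk⟩; simp at hfact; omega
      · rcases hodd with ⟨k, hk⟩; rcases hd with ⟨c, hc2⟩
        rw [pow_one] at hfact; omega
    · intro ht
      rw [hfact, pow_two_split ht]
      exact ⟨2 ^ (t-2) * n', by ring⟩
  rcases Nat.lt_or_ge t 2 with ht2 | ht2
  · have hnot4 : ¬ (4 ∣ n) := by rw [h4dvd]; omega
    rw [if_neg hnot4]
    interval_cases t
    · rw [if_neg (by omega), if_neg (by omega)]; ring
    · rw [if_pos (by omega), if_pos (by omega)]; ring
  · have h4 : 4 ∣ n := h4dvd.mpr ht2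
    rw [if_pos h4, if_pos (by omega), if_pos (by omega)]
    have hn4 : n / 4 = 2 ^ (t - 2) * n' := by
      rw [hfact, pow_two_split ht2, Nat.mul_assoc, Nat.mul_div_cancel_left _ (by norm_num)]
    have hσ4 : ∑ d ∈ (n / 4).divisors, (d : ℤ)
        = (2 ^ (t - 1) - 1) * ∑ d ∈ n'.divisors, (d : ℤ) := by
      rw [hn4, sigma_pow_two_mul hodd hpos, show t - 2 + 1 = t - 1 by omega]
    rw [hσ4]
    have h2t : (2:ℤ) ^ (t + 1) = 4 * 2 ^ (t - 1) := by
      rw [show t + 1 = (t - 1) + 2 by omega, pow_add]; ring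
    rw [h2t]
    ring


open PowerSeries

noncomputable section

abbrev R' : Type := PowerSeries ℤ

def Xp : R' := PowerSeries.X

def Vs (r : ℕ) : R' := ∏ i ∈ Finset.range r, (1 - Xp ^ (2 * i + 2))

lemma constantCoeff_Vs (r : ℕ) : constantCoeff (Vs r) = 1 := by
  rw [Vs, map_prod]
  apply Finset.prod_eq_one
  intro i _
  rw [map_sub, map_one, map_pow, Xp, constantCoeff_X]
  simp

def Us (r : ℕ) : R' := PowerSeries.invOfUnit (Vs r) 1

lemma Vs_mul_Us (r : ℕ) : Vs r * Us r = 1 :=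
  PowerSeries.mul_invOfUnit _ 1 (by simpa using constantCoeff_Vs r)

lemma Vs_ne_zero (r : ℕ) : Vs r ≠ 0 := by
  intro h
  have := constantCoeff_Vs r
  rw [h, map_zero] at this
  exact one_ne_zero this.symm

lemma Us_zero : Us 0 = 1 := by
  have h := Vs_mul_Us 0
  have h0 : Vs 0 = 1 := by rw [Vs]; simp
  rwa [h0, one_mul] at h

lemma Vs_succ (r : ℕ) : Vs (r + 1) = Vs r * (1 - Xp ^ (2 * r + 2)) :=
  Finset.prod_range_succ _ _

lemma Vs_succ_mul_Us (r : ℕ) : Vs (r + 1) * Us r = 1 - Xp ^ (2 * r + 2) := by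
  rw [Vs_succ, show Vs r * (1 - Xp ^ (2*r+2)) * Us r = (Vs r * Us r) * (1 - Xp ^ (2*r+2)) by ring,
    Vs_mul_Us, one_mul]

lemma Vs_succ_succ_mul_Us (r : ℕ) :
    Vs (r + 2) * Us r = (1 - Xp ^ (2 * r + 2)) * (1 - Xp ^ (2 * r + 4)) := by
  rw [show r + 2 = (r + 1) + 1 by rfl, Vs_succ (r+1),
    show Vs (r+1) * (1 - Xp ^ (2*(r+1)+2)) * Us r = (Vs (r+1) * Us r) * (1 - Xp ^ (2*(r+1)+2)) by ring,
    Vs_succ_mul_Us]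
  ring_nf

def eN (N j : ℕ) : ℕ := ((j : ℤ) - N).natAbs ^ 2

lemma eN_cast (N j : ℕ) : (eN N j : ℤ) = ((j : ℤ) - N) ^ 2 := by
  rw [eN]; push_cast; exact sq_abs _

lemma eN_succ (N j : ℕ) : eN (N + 1) (j + 1) = eN N j := by
  have : ((eN (N+1) (j+1) : ℤ)) = (eN N j : ℤ) := by
    rw [eN_cast, eN_cast]; push_cast; ring
  exact_mod_cast this

lemma eN_up (N j : ℕ) : eN N (j + 1) + (2 * N + 1) = eN N j + (2 * j + 2) := by
  have : ((eN N (j+1) : ℤ)) + (2 * N + 1) = (eN N j : ℤ) + (2 * j + 2) := by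
    rw [eN_cast, eN_cast]; push_cast; ring
  exact_mod_cast this

lemma eN_down (N j s : ℕ) (h : 2 * N = j + 1 + s) :
    eN N j + (2 * N + 1) = eN N (j + 1) + (2 * s + 2) := by
  have hs : (s : ℤ) = 2 * (N : ℤ) - (j : ℤ) - 1 := by omega
  have : ((eN N j : ℤ)) + (2 * N + 1) = (eN N (j+1) : ℤ) + (2 * s + 2) := by
    rw [eN_cast, eN_cast, hs]; push_cast; ring
  exact_mod_cast this

lemma eN_top (N : ℕ) : eN (N + 1) (2 * N + 2) = 2 * N + 1 + eN N (2 * N) := by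
  have : ((eN (N+1) (2*N+2) : ℤ)) = 2 * N + 1 + (eN N (2*N) : ℤ) := by
    rw [eN_cast, eN_cast]; push_cast; ring
  exact_mod_cast this

def Ds (N j : ℕ) : R' :=
  if j ≤ 2 * N then Xp ^ (eN N j) * (Vs (2 * N) * (Us j * Us (2 * N - j))) else 0

lemma Ds_zero_right (N : ℕ) : Ds N 0 = Xp ^ (eN N 0) := by
  rw [Ds, if_pos (by omega), Us_zero, Nat.sub_zero, one_mul, Vs_mul_Us, mul_one]

lemma Ds_rec (N j : ℕ) :
    Ds (N + 1) (j + 1) = (1 + Xp ^ (2 * (2 * N + 1))) * Ds N j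
      + Xp ^ (2 * N + 1) * (Ds N (j + 1) + (if j = 0 then 0 else Ds N (j - 1))) := by
  rcases le_or_gt j (2 * N) with hj | hj
  · -- main case
    obtain ⟨s, hs⟩ : ∃ s, 2 * N = j + s := ⟨2 * N - j, by omega⟩
    have hsub : 2 * N - j = s := by omega
    -- bridging equalities, c = Vs (j+1) * Vs (s+1)
    have hA : (Vs (j+1) * Vs (s+1)) * Ds N j
        = Xp ^ (eN N j) * Vs (2*N) * ((1 - Xp ^ (2*j+2)) * (1 - Xp ^ (2*s+2))) := by
      rw [Ds, if_pos hj, hsub]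
      rw [show Vs (j+1) * Vs (s+1) * (Xp ^ (eN N j) * (Vs (2*N) * (Us j * Us s)))
          = Xp ^ (eN N j) * Vs (2*N) * ((Vs (j+1) * Us j) * (Vs (s+1) * Us s)) by ring]
      rw [Vs_succ_mul_Us, Vs_succ_mul_Us]
    have hL : (Vs (j+1) * Vs (s+1)) * Ds (N+1) (j+1)
        = Xp ^ (eN N j) * Vs (2*N)
          * ((1 - Xp ^ (2*(j+s)+2)) * (1 - Xp ^ (2*(j+s)+4))) := by
      rw [Ds, if_pos (by omega)]
      have h1 : 2 * (N+1) - (j+1) = s + 1 := by omega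
      have h2 : 2 * (N+1) = (2*N) + 2 := by omega
      have hV : Vs (2*N+2) = Vs (2*N) * ((1 - Xp ^ (2*(2*N)+2)) * (1 - Xp ^ (2*(2*N)+4))) := by
        rw [show 2*N+2 = (2*N+1)+1 by ring, Vs_succ (2*N+1), Vs_succ (2*N)]
        ring_nf
      rw [h1, eN_succ, h2, hV]
      rw [show Vs (j+1) * Vs (s+1) * (Xp ^ eN N j *
            (Vs (2*N) * ((1 - Xp ^ (2*(2*N)+2)) * (1 - Xp ^ (2*(2*N)+4))) * (Us (j+1) * Us (s+1))))
          = Xp ^ (eN N j) * Vs (2*N) * ((1 - Xp ^ (2*(2*N)+2)) * (1 - Xp ^ (2*(2*N)+4)))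
              * ((Vs (j+1) * Us (j+1)) * (Vs (s+1) * Us (s+1))) by ring]
      rw [Vs_mul_Us, Vs_mul_Us, hs]
      ring_nf
    have hC : (Vs (j+1) * Vs (s+1)) * (Xp ^ (2*N+1) * Ds N (j+1))
        = Xp ^ (eN N j) * Vs (2*N)
          * (Xp ^ (2*j+2) * ((1 - Xp ^ (2*s)) * (1 - Xp ^ (2*s+2)))) := by
      rcases Nat.eq_zero_or_pos s with rfl | hspos
      · have : ¬ (j + 1 ≤ 2 * N) := by omega
        rw [Ds, if_neg this]
        simp
      · obtain ⟨s', rfl⟩ : ∃ s', s = s' + 1 := ⟨s - 1, by omega⟩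
        have h1 : j + 1 ≤ 2 * N := by omega
        have h2 : 2 * N - (j + 1) = s' := by omega
        rw [Ds, if_pos h1, h2]
        rw [show Vs (j+1) * Vs (s'+1+1) * (Xp ^ (2*N+1) *
              (Xp ^ (eN N (j+1)) * (Vs (2*N) * (Us (j+1) * Us s'))))
            = (Xp ^ (2*N+1) * Xp ^ (eN N (j+1))) * Vs (2*N)
                * ((Vs (j+1) * Us (j+1)) * (Vs (s'+2) * Us s')) by ring]
        rw [Vs_mul_Us, Vs_succ_succ_mul_Us, ← pow_add]
        have he : 2*N+1 + eN N (j+1) = eN N j + (2*j+2) := by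
          have := eN_up N j
          omega
        rw [he, pow_add]
        ring_nf
    have hB : (Vs (j+1) * Vs (s+1)) * (Xp ^ (2*N+1) * (if j = 0 then 0 else Ds N (j-1)))
        = Xp ^ (eN N j) * Vs (2*N)
          * (Xp ^ (2*s+2) * ((1 - Xp ^ (2*j)) * (1 - Xp ^ (2*j+2)))) := by
      rcases Nat.eq_zero_or_pos j with rfl | hjpos
      · rw [if_pos rfl]; simp
      · obtain ⟨j', rfl⟩ : ∃ j', j = j' + 1 := ⟨j - 1, by omega⟩
        rw [if_neg (by omega)]
        have h1 : j' + 1 - 1 = j' := by omega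
        have h2 : j' ≤ 2 * N := by omega
        have h3 : 2 * N - j' = s + 1 := by omega
        rw [h1, Ds, if_pos h2, h3]
        rw [show Vs (j'+1+1) * Vs (s+1) * (Xp ^ (2*N+1) *
              (Xp ^ (eN N j') * (Vs (2*N) * (Us j' * Us (s+1)))))
            = (Xp ^ (2*N+1) * Xp ^ (eN N j')) * Vs (2*N)
                * ((Vs (j'+2) * Us j') * (Vs (s+1) * Us (s+1))) by ring]
        rw [Vs_mul_Us, Vs_succ_succ_mul_Us, ← pow_add]
        have he : 2*N+1 + eN N j' = eN N (j'+1) + (2*s+2) := by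
          have := eN_down N j' s (by omega)
          omega
        rw [he, pow_add]
        ring_nf
    -- cancel
    have hcan : ∀ f g : R', (Vs (j+1) * Vs (s+1)) * f = (Vs (j+1) * Vs (s+1)) * g → f = g := by
      intro f g h
      have hne : Vs (j+1) * Vs (s+1) ≠ 0 := mul_ne_zero (Vs_ne_zero _) (Vs_ne_zero _)
      exact mul_left_cancel₀ hne h
    apply hcan
    rw [hL]
    rw [show (Vs (j+1) * Vs (s+1)) * ((1 + Xp ^ (2*(2*N+1))) * Ds N j
          + Xp ^ (2*N+1) * (Ds N (j+1) + (if j = 0 then 0 else Ds N (j-1))))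
        = (1 + Xp ^ (2*(2*N+1))) * ((Vs (j+1) * Vs (s+1)) * Ds N j)
          + ((Vs (j+1) * Vs (s+1)) * (Xp ^ (2*N+1) * Ds N (j+1))
            + (Vs (j+1) * Vs (s+1)) * (Xp ^ (2*N+1) * (if j = 0 then 0 else Ds N (j-1)))) by ring]
    rw [hA, hB, hC, hs]
    ring
  · -- j ≥ 2N+1
    rcases eq_or_lt_of_le (show 2 * N + 1 ≤ j by omega) with hj1 | hj2
    · -- j = 2N+1 : top boundary
      subst hj1
      have l2 : Ds N (2*N+1) = 0 := by rw [Ds, if_neg (by omega)]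
      have l3 : Ds N (2*N+1+1) = 0 := by rw [Ds, if_neg (by omega)]
      have l4 : (if 2*N+1 = 0 then (0:R') else Ds N (2*N+1-1)) = Ds N (2*N) := by
        rw [if_neg (by omega)]
        congr 1
      rw [l2, l3, l4]
      have lL : Ds (N+1) (2*N+1+1) = Xp ^ (eN (N+1) (2*N+1+1)) := by
        rw [Ds, if_pos (by omega)]
        have h1 : 2*(N+1) - (2*N+1+1) = 0 := by omega
        have h2 : 2*(N+1) = 2*N+1+1 := by omega
        rw [h1, Us_zero, mul_one, h2, Vs_mul_Us, mul_one]
      have lR : Ds N (2*N) = Xp ^ (eN N (2*N)) := by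
        rw [Ds, if_pos (by omega), Nat.sub_self, Us_zero, mul_one, Vs_mul_Us, mul_one]
      rw [lL, lR, show (2*N+1+1) = 2*N+2 from rfl, eN_top, pow_add]
      ring
    · -- j ≥ 2N+2 : everything zero
      have l1 : Ds (N+1) (j+1) = 0 := by rw [Ds, if_neg (by omega)]
      have l2 : Ds N j = 0 := by rw [Ds, if_neg (by omega)]
      have l3 : Ds N (j+1) = 0 := by rw [Ds, if_neg (by omega)]
      have l4 : Ds N (j-1) = 0 := by rw [Ds, if_neg (by omega)]
      rw [l1, l2, l3, l4, if_neg (by omega)]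
      ring

lemma eN_zero_succ (N : ℕ) : eN (N + 1) 0 = 2 * N + 1 + eN N 0 := by
  have : ((eN (N+1) 0 : ℤ)) = 2 * N + 1 + (eN N 0 : ℤ) := by
    rw [eN_cast, eN_cast]; push_cast; ring
  exact_mod_cast this

lemma Ds_big {N j : ℕ} (h : 2 * N < j) : Ds N j = 0 := by rw [Ds, if_neg (by omega)]

def Ss (N : ℕ) : R' := ∑ j ∈ Finset.range (2 * N + 1), Ds N j

lemma eN_N (N : ℕ) : eN N N = 0 := by
  have : ((eN N N : ℤ)) = 0 := by rw [eN_cast]; push_cast; ring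
  exact_mod_cast this

lemma Ss_zero : Ss 0 = 1 := by
  rw [Ss]
  simp only [Nat.mul_zero, Nat.zero_add, Finset.sum_range_one]
  rw [Ds_zero_right, eN_N 0, pow_zero]

lemma Ss_succ (N : ℕ) : Ss (N + 1) = (1 + Xp ^ (2 * N + 1)) ^ 2 * Ss N := by
  have h1 : Ss (N + 1) = ∑ j ∈ Finset.range (2 * N + 2), Ds (N+1) (j+1) + Ds (N+1) 0 := by
    rw [Ss, show 2 * (N+1) + 1 = (2*N+2) + 1 by ring, Finset.sum_range_succ']
  rw [h1]
  have h2 : ∀ j ∈ Finset.range (2*N+2), Ds (N+1) (j+1)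
      = (1 + Xp ^ (2 * (2*N+1))) * Ds N j
        + Xp ^ (2*N+1) * (Ds N (j+1) + (if j = 0 then 0 else Ds N (j-1))) :=
    fun j _ => Ds_rec N j
  rw [Finset.sum_congr rfl h2]
  rw [Finset.sum_add_distrib, ← Finset.mul_sum, ← Finset.mul_sum, Finset.sum_add_distrib]
  have e1 : ∑ j ∈ Finset.range (2*N+2), Ds N j = Ss N := by
    rw [Finset.sum_range_succ, Ds_big (by omega), add_zero, Ss]
  have e2 : ∑ j ∈ Finset.range (2*N+2), Ds N (j+1) = Ss N - Ds N 0 := by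
    rw [Finset.sum_range_succ, Ds_big (by omega), add_zero]
    have : ∑ j ∈ Finset.range (2*N+1), Ds N (j+1) + Ds N 0
        = ∑ j ∈ Finset.range (2*N+2), Ds N j := (Finset.sum_range_succ' _ _).symm
    rw [e1] at this
    linear_combination this
  have e3 : ∑ j ∈ Finset.range (2*N+2), (if j = 0 then 0 else Ds N (j-1)) = Ss N := by
    rw [Finset.sum_range_succ', Ss]
    simp
  rw [e1, e2, e3, Ds_zero_right, Ds_zero_right, eN_zero_succ, pow_add]
  ring

def Fs (N : ℕ) : R' := ∏ k ∈ Finset.range N, (1 + Xp ^ (2 * k + 1)) ^ 2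

lemma Ss_eq_Fs (N : ℕ) : Ss N = Fs N := by
  induction N with
  | zero => rw [Ss_zero, Fs]; simp
  | succ N ih => rw [Ss_succ, ih, Fs, Fs, Finset.prod_range_succ]; ring

def Ps (N : ℕ) : R' :=
  ∏ k ∈ Finset.range N, ((1 - Xp ^ (2 * k + 2)) * ((1 + Xp ^ (2 * k + 1)) * (1 + Xp ^ (2 * k + 1))))

lemma Ps_eq (N : ℕ) : Ps N = Vs N * Ss N := by
  rw [Ss_eq_Fs, Ps, Finset.prod_mul_distrib, Vs, Fs]
  congr 1
  exact Finset.prod_congr rfl fun k _ => by ring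

lemma Vs_mul_Us_general {a b : ℕ} (h : a ≤ b) :
    Vs b * Us a = ∏ i ∈ Finset.Ico a b, (1 - Xp ^ (2 * i + 2)) := by
  have hh := Finset.prod_range_mul_prod_Ico (fun i => (1 - Xp ^ (2 * i + 2))) h
  calc Vs b * Us a
      = (Vs a * ∏ i ∈ Finset.Ico a b, (1 - Xp ^ (2 * i + 2))) * Us a := by
        rw [Vs, Vs, ← hh]
    _ = (Vs a * Us a) * ∏ i ∈ Finset.Ico a b, (1 - Xp ^ (2 * i + 2)) := by ring
    _ = ∏ i ∈ Finset.Ico a b, (1 - Xp ^ (2 * i + 2)) := by rw [Vs_mul_Us, one_mul]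

lemma coeff_Xp_pow_mul (p : R') (n d : ℕ) :
    coeff (d + n) (Xp ^ n * p) = coeff d p :=
  PowerSeries.coeff_X_pow_mul p n d

lemma coeff_Xp_pow (m n : ℕ) : coeff m (Xp ^ n) = if m = n then 1 else 0 :=
  PowerSeries.coeff_X_pow m n

lemma coeff_X_pow_mul_lt {f : R'} {c M : ℕ} (h : M < c) : coeff M (Xp ^ c * f) = 0 := by
  rw [PowerSeries.coeff_mul]
  apply Finset.sum_eq_zero
  rintro ⟨p1, p2⟩ hp
  rw [Finset.HasAntidiagonal.mem_antidiagonal] at hp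
  simp only at hp ⊢
  rw [Xp, PowerSeries.coeff_X_pow, if_neg (by omega)]
  ring

lemma near_one_mul {f g : R'} {K : ℕ}
    (hf : ∀ M < K, coeff M f = if M = 0 then 1 else 0)
    (hg : ∀ M < K, coeff M g = if M = 0 then 1 else 0) :
    ∀ M < K, coeff M (f * g) = if M = 0 then 1 else 0 := by
  intro M hM
  rw [PowerSeries.coeff_mul]
  rcases Nat.eq_zero_or_pos M with rfl | hMpos
  · rw [Finset.Nat.antidiagonal_zero]
    simp only [Finset.sum_singleton]
    rw [hf 0 hM, hg 0 hM]
    simp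
  · rw [if_neg (by omega)]
    apply Finset.sum_eq_zero
    rintro ⟨p1, p2⟩ hp
    rw [Finset.HasAntidiagonal.mem_antidiagonal] at hp
    simp only at hp ⊢
    rw [hf p1 (by omega), hg p2 (by omega)]
    by_cases h1 : p1 = 0
    · rw [if_neg (show ¬ p2 = 0 by omega)]; ring
    · rw [if_neg h1]; ring

lemma near_one_prod {S : Finset ℕ} {c : ℕ → ℕ} {K : ℕ} (h : ∀ i ∈ S, K ≤ c i) :
    ∀ M < K, coeff M (∏ i ∈ S, (1 - Xp ^ (c i))) = if M = 0 then 1 else 0 := by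
  induction S using Finset.induction with
  | empty =>
    intro M hM
    simp [PowerSeries.coeff_one]
  | @insert a S ha ih =>
    have hfac : ∀ M < K, coeff M (1 - Xp ^ (c a)) = if M = 0 then 1 else 0 := by
      intro M hM
      have hKa : K ≤ c a := h a (Finset.mem_insert_self a S)
      rw [map_sub, PowerSeries.coeff_one, Xp, PowerSeries.coeff_X_pow,
        if_neg (show ¬ M = c a by omega)]
      ring
    intro M hM
    rw [Finset.prod_insert ha]
    exact near_one_mul hfac (ih (fun i hi => h i (Finset.mem_insert_of_mem hi))) M hM

lemma eN_symm {N j : ℕ} (hj : j ≤ 2 * N) : eN N (2 * N - j) = eN N j := by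
  have hc : ((2 * N - j : ℕ) : ℤ) = 2 * (N : ℤ) - j := by omega
  have : ((eN N (2 * N - j) : ℤ)) = (eN N j : ℤ) := by
    rw [eN_cast, eN_cast, hc]; push_cast; ring
  exact_mod_cast this

lemma Ds_symm {N j : ℕ} (hj : j ≤ 2 * N) : Ds N j = Ds N (2 * N - j) := by
  rw [Ds, Ds, if_pos hj, if_pos (by omega)]
  have h1 : 2 * N - (2 * N - j) = j := by omega
  rw [h1, eN_symm hj]
  ring

lemma coeff_VsDs_half {N j M : ℕ} (hM : M ≤ N) (hjl : N ≤ j) (hj : j ≤ 2 * N) :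
    coeff M (Vs N * Ds N j) = if M = eN N j then 1 else 0 := by
  rw [Ds, if_pos hj]
  have key : Vs N * (Xp ^ (eN N j) * (Vs (2 * N) * (Us j * Us (2 * N - j))))
      = Xp ^ (eN N j) * ((Vs (2 * N) * Us j) * (Vs N * Us (2 * N - j))) := by ring
  rw [key, Vs_mul_Us_general hj, Vs_mul_Us_general (show 2 * N - j ≤ N by omega)]
  have hQ : ∀ M' < 2 * (2 * N - j) + 2,
      coeff M' ((∏ i ∈ Finset.Ico j (2 * N), (1 - Xp ^ (2 * i + 2)))
        * (∏ i ∈ Finset.Ico (2 * N - j) N, (1 - Xp ^ (2 * i + 2))))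
      = if M' = 0 then 1 else 0 := by
    apply near_one_mul
    · apply near_one_prod
      intro i hi
      rw [Finset.mem_Ico] at hi
      omega
    · apply near_one_prod
      intro i hi
      rw [Finset.mem_Ico] at hi
      omega
  rcases le_or_gt (eN N j) M with he | he
  · obtain ⟨d, rfl⟩ : ∃ d, M = eN N j + d := ⟨M - eN N j, by omega⟩
    rw [add_comm (eN N j) d, coeff_Xp_pow_mul]
    have hd : d < 2 * (2 * N - j) + 2 := by
      have hm : (eN N j : ℤ) = ((j - N : ℕ) : ℤ) ^ 2 := by
        rw [eN_cast]; congr 1; omega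
      have h1 : (eN N j : ℤ) + d ≤ N := by exact_mod_cast hM
      have h2 : ((2 * N - j : ℕ) : ℤ) = (N : ℤ) - ((j - N : ℕ) : ℤ) := by omega
      have h3 : (d : ℤ) < 2 * ((2 * N - j : ℕ) : ℤ) + 2 := by
        nlinarith [sq_nonneg (((j - N : ℕ) : ℤ) - 1)]
      exact_mod_cast h3
    rw [hQ d hd]
    by_cases hd0 : d = 0
    · rw [if_pos hd0, if_pos (by omega)]
    · rw [if_neg hd0, if_neg (by omega)]
  · rw [coeff_X_pow_mul_lt he, if_neg (by omega)]

lemma coeff_VsDs {N j M : ℕ} (hM : M ≤ N) (hj : j ≤ 2 * N) :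
    coeff M (Vs N * Ds N j) = if M = eN N j then 1 else 0 := by
  rcases le_or_gt N j with hjl | hjl
  · exact coeff_VsDs_half hM hjl hj
  · rw [Ds_symm hj, ← eN_symm hj]
    exact coeff_VsDs_half hM (by omega) (by omega)

def rone (M : ℕ) : ℤ := if M = 0 then 1 else if IsSquare M then 2 else 0

lemma coeff_Ps {N M : ℕ} (hM : M ≤ N) : coeff M (Ps N) = rone M := by
  rw [Ps_eq, Ss, Finset.mul_sum, map_sum]
  have h1 : ∀ j ∈ Finset.range (2 * N + 1),
      coeff M (Vs N * Ds N j) = if M = eN N j then (1 : ℤ) else 0 := by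
    intro j hj
    rw [Finset.mem_range] at hj
    exact coeff_VsDs hM (by omega)
  rw [Finset.sum_congr rfl h1, Finset.sum_boole]
  rcases Nat.eq_zero_or_pos M with rfl | hM0
  · have hfil : (Finset.range (2 * N + 1)).filter (fun j => 0 = eN N j) = {N} := by
      ext j
      simp only [Finset.mem_filter, Finset.mem_range, Finset.mem_singleton]
      constructor
      · rintro ⟨_, hz⟩
        have : ((j : ℤ) - N).natAbs = 0 := by
          have := hz.symm
          rw [eN] at this
          exact pow_eq_zero_iff (n := 2) (by omega) |>.mp this
        omega
      · rintro rfl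
        constructor
        · omega
        · rw [eN_N]
    rw [hfil]
    simp [rone]
  · by_cases hsq : IsSquare M
    · obtain ⟨s, hs⟩ := hsq
      have hs1 : 1 ≤ s := by nlinarith
      have hsN : s ≤ N := by nlinarith
      have hcond : ∀ j, (M = eN N j) ↔ (((j : ℤ) - N).natAbs = s) := by
        intro j
        rw [eN]
        constructor
        · intro h
          have : s ^ 2 = (((j : ℤ) - N).natAbs) ^ 2 := by rw [← h, hs]; ring
          exact (Nat.pow_left_injective (by omega) this).symm
        · intro h
          rw [hs, ← h]; ring
      have hfil : (Finset.range (2 * N + 1)).filter (fun j => M = eN N j)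
          = {N - s, N + s} := by
        ext j
        simp only [Finset.mem_filter, Finset.mem_range, Finset.mem_insert, Finset.mem_singleton,
          hcond]
        omega
      rw [hfil]
      rw [Finset.card_insert_of_notMem (by simp; omega), Finset.card_singleton]
      rw [rone, if_neg (by omega), if_pos ⟨s, hs⟩]
      simp
    · have hfil : (Finset.range (2 * N + 1)).filter (fun j => M = eN N j) = ∅ := by
        ext j
        simp only [Finset.mem_filter, Finset.mem_range, Finset.notMem_empty, iff_false]
        rintro ⟨_, hz⟩
        exact hsq ⟨((j : ℤ) - N).natAbs, by rw [hz, eN]; ring⟩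
      rw [hfil]
      rw [rone, if_neg (by omega), if_neg hsq]
      simp

def qD (f : R') : R' := PowerSeries.mk fun n => (n : ℤ) * coeff n f

lemma coeff_qD (n : ℕ) (f : R') : coeff n (qD f) = n * coeff n f := by
  rw [qD, PowerSeries.coeff_mk]

lemma qD_mul (f g : R') : qD (f * g) = qD f * g + f * qD g := by
  ext n
  rw [map_add, coeff_qD, PowerSeries.coeff_mul, PowerSeries.coeff_mul, PowerSeries.coeff_mul,
    Finset.mul_sum, ← Finset.sum_add_distrib]
  apply Finset.sum_congr rfl
  rintro ⟨p1, p2⟩ hp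
  rw [Finset.HasAntidiagonal.mem_antidiagonal] at hp
  simp only
  rw [coeff_qD, coeff_qD, ← hp]
  push_cast
  ring

lemma qD_one : qD 1 = 0 := by
  ext n
  rw [coeff_qD, PowerSeries.coeff_one, map_zero]
  rcases Nat.eq_zero_or_pos n with rfl | h
  · simp
  · rw [if_neg (by omega)]; ring

def gneg (a : ℕ) : R' := PowerSeries.mk fun i => if a ∣ i ∧ i ≠ 0 then -(a : ℤ) else 0

def gpos (a : ℕ) : R' := PowerSeries.mk fun i =>
  if a ∣ i ∧ i ≠ 0 then ((-1 : ℤ)) ^ (i / a + 1) * (a : ℤ) else 0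

lemma coeff_gneg (a i : ℕ) :
    coeff i (gneg a) = if a ∣ i ∧ i ≠ 0 then -(a : ℤ) else 0 := by
  rw [gneg, PowerSeries.coeff_mk]

lemma coeff_gpos (a i : ℕ) :
    coeff i (gpos a) = if a ∣ i ∧ i ≠ 0 then ((-1 : ℤ)) ^ (i / a + 1) * (a : ℤ) else 0 := by
  rw [gpos, PowerSeries.coeff_mk]

lemma qD_one_sub {a : ℕ} (ha : 0 < a) : qD (1 - Xp ^ a) = (1 - Xp ^ a) * gneg a := by
  ext n
  rw [coeff_qD, map_sub, PowerSeries.coeff_one, coeff_Xp_pow,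
    show (1 - Xp ^ a) * gneg a = gneg a - Xp ^ a * gneg a by ring, map_sub, coeff_gneg]
  rcases le_or_gt a n with hle | hlt
  · obtain ⟨d, rfl⟩ : ∃ d, n = d + a := ⟨n - a, by omega⟩
    rw [coeff_Xp_pow_mul, coeff_gneg]
    have hdvd : a ∣ d + a ↔ a ∣ d := ⟨fun h => (Nat.dvd_add_iff_left (dvd_refl a)).mpr h, fun h => Nat.dvd_add h (dvd_refl a)⟩
    by_cases hd : a ∣ d
    · rcases Nat.eq_zero_or_pos d with rfl | hd0
      · rw [if_neg (show ¬ (0 + a = 0) by omega), if_pos (show 0 + a = a by omega),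
          if_pos ⟨hdvd.mpr hd, by omega⟩, if_neg (show ¬ (a ∣ 0 ∧ 0 ≠ 0) by simp)]
        push_cast; ring
      · rw [if_neg (show ¬ (d + a = 0) by omega), if_neg (show ¬ (d + a = a) by omega),
          if_pos ⟨hdvd.mpr hd, by omega⟩, if_pos ⟨hd, by omega⟩]
        push_cast; ring
    · have hd0 : d ≠ 0 := fun h => hd (h ▸ dvd_zero a)
      rw [if_neg (show ¬ (d + a = 0) by omega), if_neg (show ¬ (d + a = a) by omega),
        if_neg (show ¬ (a ∣ d + a ∧ d + a ≠ 0) by rw [not_and_or, hdvd]; tauto),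
        if_neg (show ¬ (a ∣ d ∧ d ≠ 0) by tauto)]
      push_cast; ring
  · rw [coeff_X_pow_mul_lt hlt]
    have hnd : ¬ (a ∣ n ∧ n ≠ 0) := by
      rintro ⟨hdvd, hne⟩
      have := Nat.le_of_dvd (by omega) hdvd
      omega
    rw [if_neg hnd, if_neg (show ¬ n = a by omega)]
    rcases Nat.eq_zero_or_pos n with rfl | h
    · simp
    · rw [if_neg (show ¬ n = 0 by omega)]; ring

lemma qD_one_add {a : ℕ} (ha : 0 < a) : qD (1 + Xp ^ a) = (1 + Xp ^ a) * gpos a := by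
  ext n
  rw [coeff_qD, map_add, PowerSeries.coeff_one, coeff_Xp_pow,
    show (1 + Xp ^ a) * gpos a = gpos a + Xp ^ a * gpos a by ring, map_add, coeff_gpos]
  rcases le_or_gt a n with hle | hlt
  · obtain ⟨d, rfl⟩ : ∃ d, n = d + a := ⟨n - a, by omega⟩
    rw [coeff_Xp_pow_mul, coeff_gpos]
    have hdvd : a ∣ d + a ↔ a ∣ d := ⟨fun h => (Nat.dvd_add_iff_left (dvd_refl a)).mpr h, fun h => Nat.dvd_add h (dvd_refl a)⟩
    by_cases hd : a ∣ d
    · rcases Nat.eq_zero_or_pos d with rfl | hd0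
      · rw [if_neg (show ¬ (0 + a = 0) by omega), if_pos (show 0 + a = a by omega),
          if_pos ⟨hdvd.mpr hd, by omega⟩, if_neg (show ¬ (a ∣ 0 ∧ 0 ≠ 0) by simp)]
        rw [show (0 + a) / a = 1 by rw [Nat.zero_add, Nat.div_self ha]]
        push_cast; ring
      · rw [if_neg (show ¬ (d + a = 0) by omega), if_neg (show ¬ (d + a = a) by omega),
          if_pos ⟨hdvd.mpr hd, by omega⟩, if_pos ⟨hd, by omega⟩]
        rw [Nat.add_div_right _ ha]
        push_cast
        rw [show d / a + 1 + 1 = (d / a + 1) + 1 by ring, pow_succ]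
        ring
    · have hd0 : d ≠ 0 := fun h => hd (h ▸ dvd_zero a)
      rw [if_neg (show ¬ (d + a = 0) by omega), if_neg (show ¬ (d + a = a) by omega),
        if_neg (show ¬ (a ∣ d + a ∧ d + a ≠ 0) by rw [not_and_or, hdvd]; tauto),
        if_neg (show ¬ (a ∣ d ∧ d ≠ 0) by tauto)]
      push_cast; ring
  · rw [coeff_X_pow_mul_lt hlt]
    have hnd : ¬ (a ∣ n ∧ n ≠ 0) := by
      rintro ⟨hdvd, hne⟩
      have := Nat.le_of_dvd (by omega) hdvd
      omega
    rw [if_neg hnd, if_neg (show ¬ n = a by omega)]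
    rcases Nat.eq_zero_or_pos n with rfl | h
    · simp
    · rw [if_neg (show ¬ n = 0 by omega)]; ring

def Gk (k : ℕ) : R' := gneg (2 * k + 2) + (gpos (2 * k + 1) + gpos (2 * k + 1))

lemma qD_factor (k : ℕ) :
    qD ((1 - Xp ^ (2 * k + 2)) * ((1 + Xp ^ (2 * k + 1)) * (1 + Xp ^ (2 * k + 1))))
      = (1 - Xp ^ (2 * k + 2)) * ((1 + Xp ^ (2 * k + 1)) * (1 + Xp ^ (2 * k + 1))) * Gk k := by
  rw [qD_mul, qD_mul, qD_one_sub (by omega), qD_one_add (by omega), Gk]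
  ring

def Es (N : ℕ) : R' := ∑ k ∈ Finset.range N, Gk k

lemma qD_Ps (N : ℕ) : qD (Ps N) = Ps N * Es N := by
  induction N with
  | zero =>
    have h1 : Ps 0 = 1 := by rw [Ps]; simp
    have h2 : Es 0 = 0 := by rw [Es]; simp
    rw [h1, h2, qD_one]; ring
  | succ N ih =>
    have hP : Ps (N + 1) = Ps N
        * ((1 - Xp ^ (2 * N + 2)) * ((1 + Xp ^ (2 * N + 1)) * (1 + Xp ^ (2 * N + 1)))) :=
      Finset.prod_range_succ _ _
    have hE : Es (N + 1) = Es N + Gk N := Finset.sum_range_succ _ _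
    rw [hP, qD_mul, ih, qD_factor, hE]
    ring


lemma coeff_Es {N i : ℕ} (hi : i ≤ N) : coeff i (Es N) = Lfun i := by
  rcases Nat.eq_zero_or_pos i with rfl | hi0
  · rw [Es, map_sum, Lfun]
    rw [Finset.sum_eq_zero, Nat.divisors_zero, Finset.sum_empty]
    intro k _
    rw [Gk, map_add, map_add, coeff_gneg, coeff_gpos]
    simp
  · rw [Es, map_sum]
    have hGk : ∀ k, coeff i (Gk k)
        = (if (2*k+2) ∣ i then -((2*k+2 : ℕ) : ℤ) else 0)
          + 2 * (if (2*k+1) ∣ i then ((-1:ℤ)) ^ (i/(2*k+1)+1) * ((2*k+1 : ℕ) : ℤ) else 0) := by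
      intro k
      rw [Gk, map_add, map_add, coeff_gneg, coeff_gpos]
      by_cases h1 : (2*k+2) ∣ i <;> by_cases h2 : (2*k+1) ∣ i
      · rw [if_pos ⟨h1, by omega⟩, if_pos ⟨h2, by omega⟩, if_pos h1, if_pos h2]
        push_cast; try ring
      · rw [if_pos ⟨h1, by omega⟩, if_neg (by tauto), if_pos h1, if_neg h2]
        push_cast; try ring
      · rw [if_neg (by tauto), if_pos ⟨h2, by omega⟩, if_neg h1, if_pos h2]
        push_cast; try ring
      · rw [if_neg (by tauto), if_neg (by tauto), if_neg h1, if_neg h2]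
        push_cast; try ring
    rw [Finset.sum_congr rfl (fun k _ => hGk k), Finset.sum_add_distrib]
    have hA : ∑ k ∈ Finset.range N, (if (2*k+2) ∣ i then -((2*k+2 : ℕ) : ℤ) else 0)
        = ∑ a ∈ i.divisors.filter (fun a => Even a), -(a : ℤ) := by
      rw [← Finset.sum_filter]
      apply Finset.sum_nbij' (i := fun k => 2*k+2) (j := fun a => a/2 - 1)
      · intro k hk
        rw [Finset.mem_filter] at hk ⊢
        rw [Finset.mem_range] at hk
        rw [Nat.mem_divisors]
        exact ⟨⟨hk.2, by omega⟩, ⟨k+1, by ring⟩⟩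
      · intro a ha
        have hapos : 0 < a := Nat.pos_of_mem_divisors (Finset.mem_filter.mp ha).1
        rw [Finset.mem_filter] at ha ⊢
        rw [Nat.mem_divisors] at ha
        obtain ⟨⟨hdvd, _⟩, ⟨b, hb⟩⟩ := ha
        have hb1 : 1 ≤ b := by omega
        have hle : a ≤ i := Nat.le_of_dvd (by omega) hdvd
        have hval : 2 * (a/2 - 1) + 2 = a := by omega
        rw [Finset.mem_range]
        constructor
        · omega
        · rw [hval]; exact hdvd
      · intro k hk; omega
      · intro a ha
        have hapos : 0 < a := Nat.pos_of_mem_divisors (Finset.mem_filter.mp ha).1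
        rw [Finset.mem_filter, Nat.mem_divisors] at ha
        obtain ⟨⟨hdvd, _⟩, ⟨b, hb⟩⟩ := ha
        omega
      · intro k hk; rfl
    have hB : ∑ k ∈ Finset.range N,
          (2 * (if (2*k+1) ∣ i then ((-1:ℤ)) ^ (i/(2*k+1)+1) * ((2*k+1 : ℕ) : ℤ) else 0))
        = ∑ a ∈ i.divisors.filter (fun a => ¬ Even a), 2 * (a : ℤ) * (-1) ^ (i/a+1) := by
      have : ∀ k ∈ Finset.range N,
          (2 * (if (2*k+1) ∣ i then ((-1:ℤ)) ^ (i/(2*k+1)+1) * ((2*k+1 : ℕ) : ℤ) else 0))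
          = (if (2*k+1) ∣ i then 2 * ((2*k+1 : ℕ) : ℤ) * (-1) ^ (i/(2*k+1)+1) else 0) := by
        intro k _
        by_cases h : (2*k+1) ∣ i
        · rw [if_pos h, if_pos h]; ring
        · rw [if_neg h, if_neg h]; ring
      rw [Finset.sum_congr rfl this, ← Finset.sum_filter]
      apply Finset.sum_nbij' (i := fun k => 2*k+1) (j := fun a => a/2)
      · intro k hk
        rw [Finset.mem_filter] at hk ⊢
        rw [Finset.mem_range] at hk
        rw [Nat.mem_divisors]
        refine ⟨⟨hk.2, by omega⟩, ?_⟩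
        rintro ⟨b, hb⟩; omega
      · intro a ha
        rw [Finset.mem_filter] at ha ⊢
        rw [Nat.mem_divisors] at ha
        obtain ⟨⟨hdvd, _⟩, hodd⟩ := ha
        have hle : a ≤ i := Nat.le_of_dvd (by omega) hdvd
        have ha2 : ¬ (2 ∣ a) := by
          intro ⟨b, hb⟩; exact hodd ⟨b, by omega⟩
        have hval : 2 * (a/2) + 1 = a := by omega
        rw [Finset.mem_range]
        constructor
        · omega
        · rw [hval]; exact hdvd
      · intro k hk; omega
      · intro a ha
        rw [Finset.mem_filter, Nat.mem_divisors] at ha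
        obtain ⟨⟨hdvd, _⟩, hodd⟩ := ha
        have ha2 : ¬ (2 ∣ a) := by
          intro ⟨b, hb⟩; exact hodd ⟨b, by omega⟩
        omega
      · intro k hk; rfl
    rw [hA, hB, Lfun, Finset.sum_ite]

lemma count_sq {n : ℤ} (hn : 0 < n) {i : ℕ} (hi : i ≤ n.toNat) :
    ∑ m ∈ SQ0 n, (if m ^ 2 = (i : ℤ) then (1 : ℤ) else 0) = rone i := by
  rw [Finset.sum_boole]
  rcases Nat.eq_zero_or_pos i with rfl | hi0
  · have hfil : (SQ0 n).filter (fun m => m ^ 2 = ((0:ℕ) : ℤ)) = {0} := by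
      ext m
      simp only [Finset.mem_filter, Finset.mem_singleton, mem_SQ0]
      constructor
      · rintro ⟨_, hz⟩
        have : m ^ 2 = 0 := by exact_mod_cast hz
        exact pow_eq_zero_iff (n := 2) (by omega) |>.mp this
      · rintro rfl
        constructor
        · simp; omega
        · simp
    rw [hfil]
    simp [rone]
  · by_cases hsq : IsSquare i
    · obtain ⟨s, hs⟩ := hsq
      have hs1 : 1 ≤ s := by nlinarith
      have hfil : (SQ0 n).filter (fun m => m ^ 2 = (i : ℤ)) = {(s : ℤ), -(s : ℤ)} := by
        ext m
        simp only [Finset.mem_filter, Finset.mem_insert, Finset.mem_singleton, mem_SQ0]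
        constructor
        · rintro ⟨_, hz⟩
          have hz2 : (m - s) * (m + s) = 0 := by
            have hcast : ((i : ℤ)) = (s : ℤ) * s := by exact_mod_cast hs
            linear_combination hz + hcast
          rcases mul_eq_zero.mp hz2 with h | h
          · left; linarith
          · right; linarith
        · have hin : ((s : ℤ)) ^ 2 ≤ n := by
            have h1 : ((i : ℤ)) ≤ n := by omega
            have hcast : ((i : ℤ)) = (s : ℤ) * s := by exact_mod_cast hs
            nlinarith
          have hsq' : ((s:ℤ)) ^ 2 = (i : ℤ) := by
            have hcast : ((i : ℤ)) = (s : ℤ) * s := by exact_mod_cast hs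
            linear_combination -hcast
          rintro (rfl | rfl)
          · exact ⟨hin, hsq'⟩
          · exact ⟨by rw [neg_pow]; simpa using hin, by rw [neg_pow]; simpa using hsq'⟩
      rw [hfil]
      rw [Finset.card_insert_of_notMem (by
        intro hmem
        rw [Finset.mem_singleton] at hmem
        omega), Finset.card_singleton]
      rw [rone, if_neg (by omega), if_pos ⟨s, hs⟩]
      simp
    · have hfil : (SQ0 n).filter (fun m => m ^ 2 = (i : ℤ)) = ∅ := by
        ext m
        simp only [Finset.mem_filter, Finset.notMem_empty, iff_false, mem_SQ0]
        rintro ⟨_, hz⟩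
        apply hsq
        refine ⟨m.natAbs, ?_⟩
        have h2 : ((m.natAbs * m.natAbs : ℕ) : ℤ) = (i : ℤ) := by
          rw [Int.natAbs_mul_self]
          linear_combination hz
        exact_mod_cast h2.symm
      rw [hfil]
      rw [rone, if_neg (by omega), if_neg hsq]
      simp

lemma LL_eq_toNat {k : ℤ} (h : 0 ≤ k) : LL k = Lfun k.toNat := by
  rw [LL]
  rcases eq_or_lt_of_le h with rfl | hk
  · rw [if_neg (by omega)]
    simp [Lfun]
  · rw [if_pos hk]

theorem Kident {n : ℤ} (h : 0 < n) :
    ∑ m ∈ SQ0 n, LL (n - m ^ 2) = ∑ k ∈ SQ0 n, k ^ 2 * (if n - k ^ 2 = 0 then 1 else 0) := by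
  set N := n.toNat with hN
  have hnN : (n : ℤ) = (N : ℤ) := by omega
  have h1 : coeff N (qD (Ps N)) = N * coeff N (Ps N) := coeff_qD N _
  rw [qD_Ps, PowerSeries.coeff_mul, coeff_Ps (le_refl N)] at h1
  have h2 : ∀ p ∈ Finset.HasAntidiagonal.antidiagonal N,
      coeff p.1 (Ps N) * coeff p.2 (Es N) = rone p.1 * Lfun p.2 := by
    intro p hp
    rw [Finset.HasAntidiagonal.mem_antidiagonal] at hp
    rw [coeff_Ps (by omega), coeff_Es (by omega)]
  rw [Finset.sum_congr rfl h2,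
    Finset.Nat.sum_antidiagonal_eq_sum_range_succ (fun i j => rone i * Lfun j)] at h1
  -- transform LHS of h1 into the SQ0 sum
  have h3 : ∑ k ∈ Finset.range (N + 1), rone k * Lfun (N - k)
      = ∑ m ∈ SQ0 n, LL (n - m ^ 2) := by
    have h4 : ∀ k ∈ Finset.range (N + 1), rone k * Lfun (N - k)
        = ∑ m ∈ SQ0 n, (if m ^ 2 = (k : ℤ) then Lfun (N - k) else 0) := by
      intro k hk
      rw [Finset.mem_range] at hk
      rw [← count_sq h (by omega), Finset.sum_mul]
      apply Finset.sum_congr rfl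
      intro m _
      by_cases hm : m ^ 2 = (k : ℤ)
      · rw [if_pos hm, if_pos hm]; ring
      · rw [if_neg hm, if_neg hm]; ring
    rw [Finset.sum_congr rfl h4, Finset.sum_comm]
    apply Finset.sum_congr rfl
    intro m hm
    rw [mem_SQ0] at hm
    have hmn : (0:ℤ) ≤ m ^ 2 := sq_nonneg m
    have hcond : ∀ k : ℕ, (m ^ 2 = (k : ℤ)) ↔ (k = (m ^ 2).toNat) := by
      intro k; omega
    have h5 : ∀ k ∈ Finset.range (N+1), (if m ^ 2 = (k : ℤ) then Lfun (N - k) else 0)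
        = (if k = (m ^ 2).toNat then Lfun (N - k) else 0) := by
      intro k _
      by_cases hc : m ^ 2 = (k : ℤ)
      · rw [if_pos hc, if_pos ((hcond k).mp hc)]
      · rw [if_neg hc, if_neg (fun hh => hc ((hcond k).mpr hh))]
    rw [Finset.sum_congr rfl h5, Finset.sum_ite_eq' (Finset.range (N+1))]
    rw [if_pos (by rw [Finset.mem_range]; omega)]
    rw [LL_eq_toNat (by omega)]
    have hee : N - (m ^ 2).toNat = (n - m ^ 2).toNat := by omega
    rw [hee]
  rw [h3] at h1
  rw [h1]
  -- now RHS : ↑N * rone N = ∑ k ∈ SQ0 n, k^2 * ite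
  have h6 : ∀ k ∈ SQ0 n, k ^ 2 * (if n - k ^ 2 = 0 then (1:ℤ) else 0)
      = (n : ℤ) * (if k ^ 2 = (N : ℤ) then (1:ℤ) else 0) := by
    intro k _
    by_cases hc : n - k ^ 2 = 0
    · rw [if_pos hc, if_pos (show k ^ 2 = ((N:ℕ) : ℤ) by omega)]
      have hkn : k ^ 2 = n := by omega
      rw [hkn]
    · rw [if_neg hc, if_neg (show ¬ (k ^ 2 = ((N:ℕ) : ℤ)) by omega)]
      ring
  rw [Finset.sum_congr rfl h6, ← Finset.mul_sum, count_sq h (le_refl N), hnN]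

lemma Tf_eq_LL : ∀ N : ℕ, Tf N = LL N := by
  intro N
  induction N using Nat.strong_induction_on with
  | _ N ih =>
    rcases Nat.eq_zero_or_pos N with rfl | hN
    · rw [Tf_nonpos (by simp), LL_nonpos (by simp)]
    · have hN' : (0 : ℤ) < N := by exact_mod_cast hN
      have h1 := Tf_conv (le_of_lt hN')
      have h2 := Kident hN'
      rw [SQ0_eq_insert (le_of_lt hN'), Finset.sum_insert (zero_not_mem_SQ _)] at h1 h2
      have hmm : ∀ m ∈ SQ (N : ℤ), Tf ((N : ℤ) - m ^ 2) = LL ((N : ℤ) - m ^ 2) := by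
        intro m hm
        rw [mem_SQ] at hm
        have h3 : 1 ≤ m ^ 2 := one_le_sq hm.1
        have h4 : (0 : ℤ) ≤ (N : ℤ) - m ^ 2 := by omega
        have h5 : ((N : ℤ) - m ^ 2).toNat < N := by omega
        have := ih ((N : ℤ) - m ^ 2).toNat h5
        rwa [Int.toNat_of_nonneg h4] at this
      have hs : ∑ m ∈ SQ (N : ℤ), Tf ((N : ℤ) - m ^ 2)
          = ∑ m ∈ SQ (N : ℤ), LL ((N : ℤ) - m ^ 2) := Finset.sum_congr rfl hmm
      have e1 : (N : ℤ) - 0 ^ 2 = N := by ring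
      rw [e1] at h1 h2
      linarith [h1, h2, hs]




theorem stmt_1 (n n' t : ℕ) (hn : 0 < n) (hfact : n = 2 ^ t * n') (hodd : Odd n') :
    ∑' m : ℤ, m ^ 2 * rEO ((n : ℤ) - m ^ 2)
      = (2 - 6 * (if 0 < t then 1 else 0)) * ∑ d ∈ n'.divisors, (d : ℤ)
        - 4 * (if 4 ∣ n then ∑ d ∈ (n / 4).divisors, (d : ℤ) else 0) := by
  have hn' : (0:ℤ) < (n : ℤ) := by exact_mod_cast hn
  have h1 : (∑' m : ℤ, m ^ 2 * rEO ((n : ℤ) - m ^ 2)) = Tf n := rfl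
  rw [h1, Tf_eq_LL n, LL, if_pos hn']
  have h2 : ((n : ℤ)).toNat = n := by omega
  rw [h2]
  exact Lfun_eval n n' t hn hfact hodd
end
end

section
/- As formal power series in q, the theta function θ(q) = ∑_{n ∈ ℤ} q^{n²} satisfies θ(q) = ∏_{n ≥ 1} (1 − q^{2n})⁵ / ((1 − q^{4n})² (1 − q^n)²). -/
open PowerSeries

noncomputable instance : TopologicalSpace ℚ⟦X⟧ :=
  inferInstanceAs (TopologicalSpace ((Unit →₀ ℕ) → ℚ))

/-- `θ(q) = ∑_{n ∈ ℤ} q^{n²}`: the coefficient of `q^k` is `#{m ∈ ℤ : m² = k}`. -/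
noncomputable def theta : ℚ⟦X⟧ :=
  PowerSeries.mk fun k => (Nat.card {m : ℤ // m ^ 2 = (k : ℤ)} : ℚ)

noncomputable instance : T2Space ℚ⟦X⟧ := inferInstanceAs (T2Space ((Unit →₀ ℕ) → ℚ))

open Finset

set_option linter.unreachableTactic false
set_option linter.unusedTactic false

namespace Aux

/-- divisibility congruence lemmas -/
lemma dvd_mul_sub_one {M : ℕ} {a b : ℚ⟦X⟧} (ha : (X:ℚ⟦X⟧)^M ∣ a - 1)
    (hb : (X:ℚ⟦X⟧)^M ∣ b - 1) : (X:ℚ⟦X⟧)^M ∣ a * b - 1 := by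
  have h : a * b - 1 = (a - 1) * b + (b - 1) := by ring
  rw [h]; exact dvd_add (ha.mul_right b) hb

lemma dvd_prod_sub_one {ι : Type} {M : ℕ} {s : Finset ι} {f : ι → ℚ⟦X⟧}
    (h : ∀ i ∈ s, (X:ℚ⟦X⟧)^M ∣ f i - 1) : (X:ℚ⟦X⟧)^M ∣ (∏ i ∈ s, f i) - 1 := by
  induction s using Finset.cons_induction with
  | empty => simp
  | cons i s his ih =>
    rw [Finset.prod_cons]
    exact dvd_mul_sub_one (h i (Finset.mem_cons_self i s))
      (ih fun j hj => h j (Finset.mem_cons.2 (Or.inr hj)))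

lemma dvd_X_pow_sub_one {M n : ℕ} (h : M ≤ n) :
    (X:ℚ⟦X⟧)^M ∣ (1 - (X:ℚ⟦X⟧)^n) - 1 := by
  have hMn : M + (n - M) = n := by omega
  have h2 : (1 - (X:ℚ⟦X⟧)^n) - 1 = -(X^M * X^(n-M)) := by
    rw [← pow_add, hMn]; ring
  rw [h2]; exact (Dvd.intro _ rfl).neg_right

/-- Gaussian binomial in `Q = X²`, defined by the Pascal recurrence. -/
noncomputable def gb : ℕ → ℕ → ℚ⟦X⟧
  | _, 0 => 1
  | 0, _+1 => 0
  | m+1, k+1 => gb m (k+1) + X^(2*(m-k)) * gb m k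

@[simp] lemma gb_zero_right (m : ℕ) : gb m 0 = 1 := by cases m <;> rfl
@[simp] lemma gb_zero_succ (k : ℕ) : gb 0 (k+1) = 0 := rfl
lemma gb_succ_succ (m k : ℕ) : gb (m+1) (k+1) = gb m (k+1) + X^(2*(m-k)) * gb m k := rfl

lemma gb_eq_zero {m k : ℕ} (h : m < k) : gb m k = 0 := by
  induction m generalizing k with
  | zero => cases k with | zero => omega | succ k => rfl
  | succ m ih =>
    cases k with
    | zero => omega
    | succ k => rw [gb_succ_succ, ih (by omega), ih (by omega)]; ring

/-- `ee k = ∏_{j<k} (1 - Q^{j+1})` -/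
noncomputable def ee (k : ℕ) : ℚ⟦X⟧ := ∏ j ∈ range k, (1 - X^(2*(j+1)))
/-- `Bf m k = ∏_{j<k} (1 - Q^{m-k+1+j})` -/
noncomputable def Bf (m k : ℕ) : ℚ⟦X⟧ := ∏ j ∈ range k, (1 - X^(2*(m-k+1+j)))

lemma constantCoeff_one_sub_X_pow {n : ℕ} (hn : 0 < n) :
    constantCoeff (1 - (X:ℚ⟦X⟧)^n) = 1 := by
  rw [map_sub, map_one, map_pow, constantCoeff_X, zero_pow (by omega), sub_zero]

lemma ee_ne_zero (k : ℕ) : ee k ≠ 0 := by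
  intro h
  have : constantCoeff (ee k) = 1 := by
    rw [ee, map_prod]
    exact Finset.prod_eq_one fun j _ => constantCoeff_one_sub_X_pow (by omega)
  rw [h, map_zero] at this; exact one_ne_zero this.symm

lemma one_sub_X_pow_ne_zero {n : ℕ} (hn : 0 < n) : (1 - (X:ℚ⟦X⟧)^n) ≠ 0 := by
  intro h
  have := constantCoeff_one_sub_X_pow (n := n) hn
  rw [h, map_zero] at this; exact one_ne_zero this.symm

lemma gb_diag (n : ℕ) : gb n n = 1 := by
  cases n with
  | zero => rfl
  | succ n => rw [gb_succ_succ, gb_eq_zero (by omega), gb_diag, Nat.sub_self]; ring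

/-- closed form: `gb m k * ee k = Bf m k` for `k ≤ m`. -/
lemma gb_mul_ee {m k : ℕ} (h : k ≤ m) : gb m k * ee k = Bf m k := by
  induction m generalizing k with
  | zero =>
    interval_cases k
    simp [ee, Bf]
  | succ m ih =>
    cases k with
    | zero => simp [ee, Bf]
    | succ k =>
      by_cases hk : k + 1 ≤ m
      · have hek : ee (k+1) = ee k * (1 - X^(2*(k+1))) := Finset.prod_range_succ _ k
        have h1 : Bf (m+1) (k+1) = Bf m k * (1 - X^(2*(m+1))) := by
          rw [Bf, Bf, Finset.prod_range_succ]
          congr 1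
          · apply Finset.prod_congr rfl; intro j hj; congr 2; omega
          · congr 2; omega
        have h2 : Bf m (k+1) = Bf m k * (1 - X^(2*(m-k))) := by
          rw [Bf, Bf, Finset.prod_range_succ']
          congr 1
          · apply Finset.prod_congr rfl; intro j hj; congr 2; omega
          · congr 2; omega
        have h3 : (X:ℚ⟦X⟧)^(2*(m-k)) * X^(2*(k+1)) = X^(2*(m+1)) := by
          rw [← pow_add]; congr 1; omega
        rw [gb_succ_succ, h1]
        linear_combination (ih hk) + h2 + (X^(2*(m-k)) * (1 - X^(2*(k+1)))) * (ih (show k ≤ m by omega)) + (X^(2*(m-k)) * gb m k) * hek + (-(Bf m k)) * h3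
      · have hk1 : m = k := by omega
        subst hk1
        rw [gb_diag, one_mul, Bf, ee]
        apply Finset.prod_congr rfl; intro j hj; congr 2; omega

lemma Bf_succ_left {m k : ℕ} (h : k ≤ m) :
    Bf (m+1) (k+1) = Bf m k * (1 - X^(2*(m+1))) := by
  rw [Bf, Bf, Finset.prod_range_succ]
  congr 1
  · apply Finset.prod_congr rfl; intro j hj; congr 2; omega
  · congr 2; omega

lemma Bf_succ_right {m k : ℕ} (h : k + 1 ≤ m) :
    Bf m (k+1) = Bf m k * (1 - X^(2*(m-k))) := by
  rw [Bf, Bf, Finset.prod_range_succ']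
  congr 1
  · apply Finset.prod_congr rfl; intro j hj; congr 2; omega
  · congr 2; omega

lemma gb_P1 (m k : ℕ) : gb (m+1) (k+1) = X^(2*(k+1)) * gb m (k+1) + gb m k := by
  rcases lt_trichotomy k m with hk | rfl | hk
  · have hek : ee (k+1) = ee k * (1 - X^(2*(k+1))) := Finset.prod_range_succ _ k
    have hB2 := Bf_succ_right (show k + 1 ≤ m by omega)
    have hmk := gb_mul_ee (show k ≤ m by omega)
    have hmk1 := gb_mul_ee (show k + 1 ≤ m by omega)
    have h3 : (X:ℚ⟦X⟧)^(2*(k+1)) * X^(2*(m-k)) = X^(2*(m+1)) := by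
      rw [← pow_add]; congr 1; omega
    apply mul_right_cancel₀ (ee_ne_zero (k+1))
    rw [gb_mul_ee (show k+1 ≤ m+1 by omega), Bf_succ_left (show k ≤ m by omega)]
    linear_combination (-(X^(2*(k+1)))) * hmk1 + (-(X^(2*(k+1)))) * hB2
      + (-(gb m k)) * hek + (-(1 - X^(2*(k+1)))) * hmk + (Bf m k) * h3
  · rw [gb_diag, gb_eq_zero (by omega), gb_diag]; ring
  · rw [gb_eq_zero (by omega), gb_eq_zero (by omega), gb_eq_zero (by omega)]; ring

lemma Bf_mul_ee {m k : ℕ} (h : k ≤ m) : Bf m k * ee (m-k) = ee m := by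
  have hm : (m-k)+k = m := by omega
  have h1 : ee m = ee (m-k) * ∏ j ∈ Finset.range k, (1 - X^(2*((m-k)+j+1))) := by
    rw [ee, ee, ← Finset.prod_range_add, hm]
  rw [h1, Bf, mul_comm]
  congr 1
  apply Finset.prod_congr rfl; intro j hj; congr 2; omega

lemma gb_symm {m k : ℕ} (h : k ≤ m) : gb m k = gb m (m-k) := by
  apply mul_right_cancel₀ (ee_ne_zero k)
  apply mul_right_cancel₀ (ee_ne_zero (m-k))
  have h1 : gb m k * ee k * ee (m-k) = ee m := by
    rw [gb_mul_ee h, Bf_mul_ee h]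
  have h2 : gb m (m-k) * ee (m-k) * ee k = ee m := by
    have hkk : k = m - (m-k) := by omega
    have hk2 : ee k = ee (m-(m-k)) := by rw [← hkk]
    rw [gb_mul_ee (show m-k ≤ m by omega), hk2]
    exact Bf_mul_ee (by omega)
  rw [h1]
  calc ee m = gb m (m-k) * ee (m-k) * ee k := h2.symm
    _ = gb m (m-k) * ee k * ee (m-k) := by ring

lemma gb_threeterm (N j : ℕ) : gb (2*N+2) (j+2) =
    X^(2*(j+2)) * gb (2*N) (j+2) + (1 + X^(2*(2*N+1))) * gb (2*N) (j+1)
      + X^(2*(2*N-j)) * gb (2*N) j := by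
  by_cases hj : j ≤ 2*N
  · have e1 : gb (2*N+1+1) (j+1+1) = gb (2*N+1) (j+2) + X^(2*((2*N+1)-(j+1))) * gb (2*N+1) (j+1) :=
      gb_succ_succ (2*N+1) (j+1)
    have e2 : gb (2*N+1) (j+2) = X^(2*(j+2)) * gb (2*N) (j+2) + gb (2*N) (j+1) := gb_P1 (2*N) (j+1)
    have e3 : gb (2*N+1) (j+1) = X^(2*(j+1)) * gb (2*N) (j+1) + gb (2*N) j := gb_P1 (2*N) j
    have h4 : (X:ℚ⟦X⟧)^(2*((2*N+1)-(j+1))) * X^(2*(j+1)) = X^(2*(2*N+1)) := by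
      rw [← pow_add]; congr 1; omega
    have h5 : (2*((2*N+1)-(j+1))) = 2*(2*N-j) := by omega
    rw [show 2*N+2 = 2*N+1+1 from rfl, show j+2 = j+1+1 from rfl, e1, e2, e3, h5]
    have h4' : (X:ℚ⟦X⟧)^(2*(2*N-j)) * X^(2*(j+1)) = X^(2*(2*N+1)) := by
      rw [← pow_add]; congr 1; omega
    linear_combination (gb (2*N) (j+1)) * h4'
  · rw [gb_eq_zero (show 2*N+2 < j+2 by omega), gb_eq_zero (show 2*N < j+2 by omega),
      gb_eq_zero (show 2*N < j+1 by omega), gb_eq_zero (show 2*N < j by omega)]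
    ring

lemma one_sub_sq_mul_gb_one (m : ℕ) : (1 - X^2) * gb m 1 = 1 - (X:ℚ⟦X⟧)^(2*m) := by
  induction m with
  | zero => simp [gb]
  | succ m ih =>
    rw [show gb (m+1) 1 = gb m 1 + X^(2*(m-0)) * gb m 0 from gb_succ_succ m 0,
      gb_zero_right, mul_one, Nat.sub_zero, mul_add, ih]
    have : (X:ℚ⟦X⟧)^2 * X^(2*m) = X^(2*(m+1)) := by rw [← pow_add]; congr 1; omega
    linear_combination (-1 : ℚ⟦X⟧) * this

/-- centered exponent `(k-N)²`. -/
def ce (N k : ℕ) : ℕ := (((k:ℤ) - N).natAbs)^2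

lemma ce_cast (N k : ℕ) : ((ce N k : ℕ) : ℤ) = ((k:ℤ) - N)^2 := by
  rw [ce]; push_cast
  first
  | exact Int.natAbs_sq _
  | exact sq_abs _

lemma ce_eq_ce {N1 k1 N2 k2 : ℕ} (h : ((k1:ℤ) - N1)^2 = ((k2:ℤ) - N2)^2) :
    ce N1 k1 = ce N2 k2 := by
  have h2 : ((ce N1 k1 : ℕ) : ℤ) = ((ce N2 k2 : ℕ) : ℤ) := by rw [ce_cast, ce_cast, h]
  exact_mod_cast h2

lemma X_pow_mul_ce (e1 e2 N1 k1 N2 k2 : ℕ)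
    (h : (e1:ℤ) + ((k1:ℤ) - N1)^2 = e2 + ((k2:ℤ) - N2)^2) :
    (X:ℚ⟦X⟧)^e1 * X^(ce N1 k1) = X^(ce N2 k2) * X^e2 := by
  rw [← pow_add, ← pow_add]
  congr 1
  have h2 : ((e1 + ce N1 k1 : ℕ) : ℤ) = ((ce N2 k2 + e2 : ℕ) : ℤ) := by
    push_cast [ce_cast]; linarith [h]
  exact_mod_cast h2

lemma ce_eval {N k v : ℕ} (h : ((k:ℤ) - N)^2 = (v:ℕ)) : ce N k = v := by
  have h2 : ((ce N k : ℕ) : ℤ) = ((v:ℕ):ℤ) := by rw [ce_cast, h]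
  exact_mod_cast h2

lemma X_ce_mul (N1 k1 e1 e2 : ℕ) (h : ((k1:ℤ) - N1)^2 + e1 = (e2:ℕ)) :
    (X:ℚ⟦X⟧)^(ce N1 k1) * X^e1 = X^e2 := by
  rw [← pow_add]
  congr 1
  have h2 : ((ce N1 k1 + e1 : ℕ) : ℤ) = ((e2:ℕ):ℤ) := by push_cast [ce_cast]; linarith [h]
  exact_mod_cast h2

/-- the finite product `∏_{j<N} (1+q^{2j+1} z)(z+q^{2j+1})`. -/
noncomputable def FF (N : ℕ) : Polynomial ℚ⟦X⟧ :=
  ∏ j ∈ Finset.range N,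
    ((1 + Polynomial.C ((X:ℚ⟦X⟧)^(2*j+1)) * Polynomial.X) *
      (Polynomial.X + Polynomial.C ((X:ℚ⟦X⟧)^(2*j+1))))

lemma FF_succ (N : ℕ) : FF (N+1) = FF N *
    ((1 + Polynomial.C ((X:ℚ⟦X⟧)^(2*N+1)) * Polynomial.X) *
      (Polynomial.X + Polynomial.C ((X:ℚ⟦X⟧)^(2*N+1)))) :=
  Finset.prod_range_succ _ N

lemma quad_expand (u : ℚ⟦X⟧) :
    (1 + Polynomial.C u * Polynomial.X) * (Polynomial.X + Polynomial.C u) =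
      Polynomial.C u + Polynomial.C (1 + u^2) * Polynomial.X
        + Polynomial.C u * Polynomial.X^2 := by
  simp only [Polynomial.C_add, Polynomial.C_mul, Polynomial.C_1, Polynomial.C_pow]
  ring

lemma coeff_mul_quad (p : Polynomial ℚ⟦X⟧) (a b c : ℚ⟦X⟧) (k : ℕ) :
    (p * (Polynomial.C a + Polynomial.C b * Polynomial.X + Polynomial.C c * Polynomial.X^2)).coeff k
      = p.coeff k * a + (if 1 ≤ k then p.coeff (k-1) else 0) * b
        + (if 2 ≤ k then p.coeff (k-2) else 0) * c := by
  rw [mul_add, mul_add, Polynomial.coeff_add, Polynomial.coeff_add,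
    show p * (Polynomial.C b * Polynomial.X) = (p * Polynomial.C b) * Polynomial.X^1 from by ring,
    show p * (Polynomial.C c * Polynomial.X^2) = (p * Polynomial.C c) * Polynomial.X^2 from by ring,
    Polynomial.coeff_mul_C, Polynomial.coeff_mul_X_pow', Polynomial.coeff_mul_X_pow']
  simp only [Polynomial.coeff_mul_C]
  split_ifs <;> simp <;> ring

lemma coeff_FF (N : ℕ) : ∀ k, (FF N).coeff k = gb (2*N) k * (X:ℚ⟦X⟧)^(ce N k) := by
  induction N with
  | zero =>
    intro k
    rw [show FF 0 = 1 from rfl]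
    cases k with
    | zero =>
      rw [Polynomial.coeff_one]
      norm_num
      rw [show ce 0 0 = 0 from by rw [ce]; norm_num]
      norm_num
    | succ k =>
      rw [Polynomial.coeff_one]
      rw [Nat.mul_zero, gb_zero_succ]
      simp
  | succ N ih =>
    intro k
    rw [FF_succ, quad_expand, coeff_mul_quad, ih, ih, ih]
    match k with
    | 0 =>
      norm_num
      have h0 := X_pow_mul_ce 0 (2*N+1) (N+1) 0 N 0 (by push_cast; ring)
      linear_combination (-1 : ℚ⟦X⟧) * h0
    | 1 =>
      norm_num
      have hg1 := one_sub_sq_mul_gb_one (2*N)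
      have hg2 := one_sub_sq_mul_gb_one (2*(N+1))
      have hce0 : ce N 0 = N^2 := ce_eval (by push_cast; ring)
      have hce1' : ce (N+1) 1 = N^2 := ce_eval (by push_cast; ring)
      have hA := X_ce_mul N 1 (2*N+1) (N^2+2) (by push_cast; ring)
      rw [hce0, hce1']
      apply mul_left_cancel₀ (one_sub_X_pow_ne_zero (n:=2) (by norm_num))
      rw [show (2*(2*N) : ℕ) = 4*N from by ring] at hg1
      rw [show (2*(2*(N+1)) : ℕ) = 4*N+4 from by ring] at hg2
      linear_combination (X^(ce N 1) * X^(2*N+1)) * hg1 + (-((X:ℚ⟦X⟧)^(N^2))) * hg2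
        + (1 - (X:ℚ⟦X⟧)^(4*N)) * hA
    | (j+2) =>
      have hif1 : (1:ℕ) ≤ j + 2 := by omega
      have hif2 : (2:ℕ) ≤ j + 2 := by omega
      rw [if_pos hif1, if_pos hif2]
      have hk1 : j + 2 - 1 = j + 1 := by omega
      have hk2 : j + 2 - 2 = j := by omega
      rw [hk1, hk2]
      by_cases hj : j ≤ 2*N
      · rw [show 2*(N+1) = 2*N+2 from by ring, gb_threeterm N j]
        rw [show ce (N+1) (j+2) = ce N (j+1) from ce_eq_ce (by push_cast; ring)]
        have hE3 := X_pow_mul_ce (2*(j+2)) (2*N+1) N (j+1) N (j+2) (by push_cast; ring)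
        have hE1 : (X:ℚ⟦X⟧)^(2*(2*N-j)) * X^(ce N (j+1)) = X^(ce N j) * X^(2*N+1) := by
          apply X_pow_mul_ce
          rw [Nat.cast_mul, Nat.cast_sub hj]
          push_cast; ring
        linear_combination (-(gb (2*N) (j+2))) * hE3 + (-(gb (2*N) j)) * hE1
      · rw [gb_eq_zero (show 2*(N+1) < j+2 by omega), gb_eq_zero (show 2*N < j+2 by omega),
          gb_eq_zero (show 2*N < j+1 by omega), gb_eq_zero (show 2*N < j by omega)]
        ring

/-- `W N = ∏_{j<N} (1+q^{2j+1})²` -/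
noncomputable def W (N : ℕ) : ℚ⟦X⟧ := ∏ j ∈ Finset.range N, (1 + X^(2*j+1))^2

lemma natDegree_FF_le (N : ℕ) : (FF N).natDegree ≤ 2*N := by
  refine le_trans (Polynomial.natDegree_prod_le _ _) ?_
  have h : ∀ j ∈ Finset.range N,
      ((1 + Polynomial.C ((X:ℚ⟦X⟧)^(2*j+1)) * Polynomial.X) *
        (Polynomial.X + Polynomial.C ((X:ℚ⟦X⟧)^(2*j+1)))).natDegree ≤ 2 := by
    intro j _
    rw [quad_expand]
    refine le_trans (Polynomial.natDegree_add_le _ _) ?_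
    refine max_le (le_trans (Polynomial.natDegree_add_le _ _) (max_le ?_ ?_)) ?_
    · simp [Polynomial.natDegree_C]
    · exact le_trans (Polynomial.natDegree_C_mul_le _ _) (by simp [Polynomial.natDegree_X])
    · exact le_trans (Polynomial.natDegree_C_mul_le _ _) (by simp [Polynomial.natDegree_X_pow])
  refine le_trans (Finset.sum_le_sum h) ?_
  rw [Finset.sum_const, smul_eq_mul, Finset.card_range]
  omega

lemma W_eq_sum (N : ℕ) : W N = ∑ k ∈ Finset.range (2*N+1), gb (2*N) k * (X:ℚ⟦X⟧)^(ce N k) := by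
  have h1 : Polynomial.eval 1 (FF N) = W N := by
    rw [FF, W, Polynomial.eval_prod]
    apply Finset.prod_congr rfl
    intro j _
    simp only [Polynomial.eval_mul, Polynomial.eval_add, Polynomial.eval_one,
      Polynomial.eval_C, Polynomial.eval_X, mul_one]
    ring
  have h2 := Polynomial.eval_eq_sum_range' (p := FF N) (n := 2*N+1)
    (by have := natDegree_FF_le N; omega) (1:ℚ⟦X⟧)
  rw [← h1, h2]
  apply Finset.sum_congr rfl
  intro k _
  rw [coeff_FF, one_pow, mul_one]

lemma ce_eq_iff (M k j : ℕ) : ce M k = j ↔ ((k:ℤ)-M)^2 = (j:ℤ) := by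
  constructor
  · intro h; rw [← ce_cast, h]
  · intro h
    have h2 : ((ce M k : ℕ):ℤ) = ((j:ℕ):ℤ) := by rw [ce_cast, h]
    exact_mod_cast h2

lemma theta_trunc (M : ℕ) :
    (X:ℚ⟦X⟧)^M ∣ theta - ∑ k ∈ Finset.range (2*M+1), (X:ℚ⟦X⟧)^(ce M k) := by
  rw [PowerSeries.X_pow_dvd_iff]
  intro j hj
  rw [map_sub, map_sum]
  simp only [theta, coeff_mk]
  have hsum : ∑ k ∈ Finset.range (2*M+1), (PowerSeries.coeff j) ((X:ℚ⟦X⟧)^(ce M k))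
      = (((Finset.range (2*M+1)).filter (fun k => j = ce M k)).card : ℚ) := by
    rw [← Finset.sum_boole]
    apply Finset.sum_congr rfl
    intro k _
    rw [PowerSeries.coeff_X_pow]
  rw [hsum]
  have hcard : Nat.card {m : ℤ // m ^ 2 = (j : ℤ)}
      = ((Finset.range (2*M+1)).filter (fun k => j = ce M k)).card := by
    have hMj : (j:ℤ) < (M:ℤ) := by exact_mod_cast hj
    set S : Finset ℤ := (Finset.Icc (-(M:ℤ)) M).filter (fun m => m^2 = (j:ℤ)) with hS
    have hset : {m : ℤ | m^2 = (j:ℤ)} = ↑S := by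
      ext m
      simp only [Set.mem_setOf_eq, hS, Finset.coe_filter, Finset.mem_Icc]
      constructor
      · intro h
        refine ⟨⟨?_, ?_⟩, h⟩ <;> nlinarith [sq_nonneg m, sq_nonneg (m - M), sq_nonneg (m + M)]
      · exact fun h => h.2
    have hA : Nat.card {m : ℤ // m ^ 2 = (j : ℤ)} = S.card := by
      rw [show {m : ℤ // m ^ 2 = (j : ℤ)} = ↥{m : ℤ | m^2 = (j:ℤ)} from rfl,
        Nat.card_coe_set_eq, hset, Set.ncard_coe_finset]
    rw [hA]
    apply Finset.card_bij' (fun (m : ℤ) (_ : m ∈ S) => (m + (M:ℤ)).toNat)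
      (fun (k : ℕ) (_ : k ∈ (Finset.range (2*M+1)).filter (fun k => j = ce M k)) => (k:ℤ) - (M:ℤ))
    · intro m hm
      simp only [hS, Finset.mem_filter, Finset.mem_Icc] at hm
      simp only [Finset.mem_filter, Finset.mem_range]
      refine ⟨by omega, ?_⟩
      apply Eq.symm
      rw [ce_eq_iff]
      have h3 : (((m + (M:ℤ)).toNat :ℕ):ℤ) = m + M := by omega
      rw [h3, show m + (M:ℤ) - M = m from by ring, hm.2]
    · intro k hk
      simp only [Finset.mem_filter, Finset.mem_range] at hk
      simp only [hS, Finset.mem_filter, Finset.mem_Icc]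
      have h2 := (ce_eq_iff M k j).mp hk.2.symm
      refine ⟨⟨?_, ?_⟩, h2⟩ <;> omega
    · intro m hm; simp only [hS, Finset.mem_filter, Finset.mem_Icc] at hm; omega
    · intro k hk; simp only [Finset.mem_filter, Finset.mem_range] at hk; omega
  rw [hcard, sub_self]

lemma cong_trans {M : ℕ} {a b c : ℚ⟦X⟧} (h1 : (X:ℚ⟦X⟧)^M ∣ a-b) (h2 : (X:ℚ⟦X⟧)^M ∣ b-c) :
    (X:ℚ⟦X⟧)^M ∣ a-c := by
  rw [show a-c = (a-b)+(b-c) from by ring]; exact dvd_add h1 h2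

lemma cong_mul {M : ℕ} {a b c d : ℚ⟦X⟧} (h1 : (X:ℚ⟦X⟧)^M ∣ a-b) (h2 : (X:ℚ⟦X⟧)^M ∣ c-d) :
    (X:ℚ⟦X⟧)^M ∣ a*c-b*d := by
  rw [show a*c-b*d = (a-b)*c + b*(c-d) from by ring]
  exact dvd_add (h1.mul_right c) (h2.mul_left b)

lemma dvd_pow_sub_one {M n : ℕ} {u : ℚ⟦X⟧} (h : (X:ℚ⟦X⟧)^M ∣ u - 1) :
    (X:ℚ⟦X⟧)^M ∣ u^n - 1 := by
  induction n with
  | zero => simp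
  | succ n ih => rw [pow_succ]; exact dvd_mul_sub_one ih h

lemma gb_mul_ee_sub_one_left {N k : ℕ} (hk : k ≤ N) :
    (X:ℚ⟦X⟧)^(2*k+2) ∣ gb (2*N) k * ee N - 1 := by
  have hNk : k + (N - k) = N := by omega
  have hN : ee N = ee k * ∏ j ∈ Finset.range (N-k), (1 - X^(2*(k+j+1))) := by
    rw [ee, ee, ← Finset.prod_range_add, hNk]
  rw [hN, ← mul_assoc, gb_mul_ee (show k ≤ 2*N by omega), Bf]
  apply dvd_mul_sub_one
  · apply dvd_prod_sub_one
    intro j hj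
    exact dvd_X_pow_sub_one (by omega)
  · apply dvd_prod_sub_one
    intro j hj
    exact dvd_X_pow_sub_one (by omega)

lemma gb_mul_ee_key {N k : ℕ} (hk : k ≤ 2*N) :
    (X:ℚ⟦X⟧)^(2*N+1) ∣ (X:ℚ⟦X⟧)^(ce N k) * (gb (2*N) k * ee N - 1) := by
  by_cases hkN : k ≤ N
  · have hce : ce N k = (N-k)^2 := ce_eval (by rw [Nat.cast_pow, Nat.cast_sub hkN]; push_cast; ring)
    have hineq : 2*N+1 ≤ ce N k + (2*k+2) := by
      rw [hce]; zify [hkN]; nlinarith [sq_nonneg ((N:ℤ)-k-1)]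
    refine dvd_trans (pow_dvd_pow X hineq) ?_
    rw [pow_add]
    exact mul_dvd_mul_left _ (gb_mul_ee_sub_one_left hkN)
  · have hsym : gb (2*N) k = gb (2*N) (2*N-k) := gb_symm hk
    have hce : ce N k = (k-N)^2 := by
      apply ce_eval
      rw [Nat.cast_pow, Nat.cast_sub (show N ≤ k by omega)]
      (try push_cast)
      (try ring)
    have hineq : 2*N+1 ≤ ce N k + (2*(2*N-k)+2) := by
      rw [hce]
      have h1 : N ≤ k := by omega
      zify [h1, hk]; nlinarith [sq_nonneg ((k:ℤ)-N-1)]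
    refine dvd_trans (pow_dvd_pow X hineq) ?_
    rw [pow_add, hsym]
    exact mul_dvd_mul_left _ (gb_mul_ee_sub_one_left (by omega))

lemma gauss_mod (M : ℕ) : (X:ℚ⟦X⟧)^M ∣ theta - W M * ee M := by
  have h1 := theta_trunc M
  have h2 : (X:ℚ⟦X⟧)^(2*M+1) ∣ W M * ee M - ∑ k ∈ Finset.range (2*M+1), (X:ℚ⟦X⟧)^(ce M k) := by
    rw [W_eq_sum, Finset.sum_mul, ← Finset.sum_sub_distrib]
    apply Finset.dvd_sum
    intro k hk
    rw [show gb (2*M) k * X^(ce M k) * ee M - X^(ce M k)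
        = X^(ce M k) * (gb (2*M) k * ee M - 1) from by ring]
    exact gb_mul_ee_key (by simp only [Finset.mem_range] at hk; omega)
  exact cong_trans h1 (dvd_sub_comm.mp ((pow_dvd_pow X (by omega : M ≤ 2*M+1)).trans h2))

noncomputable def OL (L : ℕ) : ℚ⟦X⟧ := ∏ j ∈ Finset.range L, (1 - X^(2*j+1))
noncomputable def Fq (L : ℕ) : ℚ⟦X⟧ := ∏ j ∈ Finset.range L, (1 - X^(4*(j+1)))
noncomputable def G4 (L : ℕ) : ℚ⟦X⟧ := ∏ j ∈ Finset.range L, (1 - X^(4*j+2))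
noncomputable def Pone (L : ℕ) : ℚ⟦X⟧ := ∏ j ∈ Finset.range L, (1 - X^(j+1))

lemma cong_of_eq {M : ℕ} {a b : ℚ⟦X⟧} (h : a = b) : (X:ℚ⟦X⟧)^M ∣ a - b := by
  rw [h]; simp

lemma Pone_even_odd (L : ℕ) : Pone (2*L) = ee L * OL L := by
  induction L with
  | zero => simp [Pone, ee, OL]
  | succ L ih =>
    have h1 : 2*(L+1) = (2*L)+1+1 := by ring
    have hee : ee (L+1) = ee L * (1 - X^(2*(L+1))) := Finset.prod_range_succ _ L
    have hol : OL (L+1) = OL L * (1 - X^(2*L+1)) := Finset.prod_range_succ _ L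
    rw [Pone, h1, Finset.prod_range_succ, Finset.prod_range_succ, ← Pone, ih, hee, hol]
    rw [show 2*L+1+1 = 2*(L+1) from by ring]
    ring

lemma ee_even_odd (L : ℕ) : ee (2*L) = Fq L * G4 L := by
  induction L with
  | zero => simp [ee, Fq, G4]
  | succ L ih =>
    have h1 : 2*(L+1) = (2*L)+1+1 := by ring
    have hfq : Fq (L+1) = Fq L * (1 - X^(4*(L+1))) := Finset.prod_range_succ _ L
    have hg4 : G4 (L+1) = G4 L * (1 - X^(4*L+2)) := Finset.prod_range_succ _ L
    rw [ee, h1, Finset.prod_range_succ, Finset.prod_range_succ, ← ee, ih, hfq, hg4]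
    rw [show 2*((2*L)+1) = 4*L+2 from by ring, show 2*((2*L)+1+1) = 4*(L+1) from by ring]
    ring

lemma W_mul_OL_sq (L : ℕ) : W L * (OL L)^2 = (G4 L)^2 := by
  rw [W, OL, G4, ← Finset.prod_pow, ← Finset.prod_mul_distrib, ← Finset.prod_pow]
  apply Finset.prod_congr rfl
  intro j _
  rw [show (X:ℚ⟦X⟧)^(4*j+2) = X^(2*j+1)*X^(2*j+1) from by rw [← pow_add]; congr 1; omega]
  ring

lemma Fq_split (M : ℕ) : Fq (2*M) = Fq M * ∏ j ∈ Finset.range M, (1 - X^(4*(M+j+1))) := by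
  rw [Fq, Fq, show 2*M = M + M from by ring, Finset.prod_range_add]

lemma ee_split (M : ℕ) : ee (2*M) = ee M * ∏ j ∈ Finset.range M, (1 - X^(2*(M+j+1))) := by
  rw [ee, ee, show 2*M = M + M from by ring, Finset.prod_range_add]

lemma key_mod (M : ℕ) : (X:ℚ⟦X⟧)^M ∣
    theta * (∏ n ∈ Finset.range (2*M), ((1 - X^(4*(n+1)))^2 * (1 - X^(n+1))^2))
      - ∏ n ∈ Finset.range (2*M), (1 - X^(2*(n+1)))^5 := by
  set RF : ℚ⟦X⟧ := ∏ j ∈ Finset.range M, (1 - X^(4*(M+j+1))) with hRF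
  set RE : ℚ⟦X⟧ := ∏ j ∈ Finset.range M, (1 - X^(2*(M+j+1))) with hRE
  have hRF1 : (X:ℚ⟦X⟧)^M ∣ RF - 1 := by
    apply dvd_prod_sub_one; intro j _; exact dvd_X_pow_sub_one (by omega)
  have hRE1 : (X:ℚ⟦X⟧)^M ∣ RE - 1 := by
    apply dvd_prod_sub_one; intro j _; exact dvd_X_pow_sub_one (by omega)
  have hBB : (∏ n ∈ Finset.range (2*M), ((1 - (X:ℚ⟦X⟧)^(4*(n+1)))^2 * (1 - X^(n+1))^2))
      = (Fq (2*M))^2 * (Pone (2*M))^2 := by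
    rw [Finset.prod_mul_distrib, Fq, Pone, Finset.prod_pow, Finset.prod_pow]
  have hAA : (∏ n ∈ Finset.range (2*M), (1 - (X:ℚ⟦X⟧)^(2*(n+1)))^5) = (ee (2*M))^5 := by
    rw [ee, Finset.prod_pow]
  rw [hBB, hAA]
  have e2 : (W M * ee M) * ((Fq (2*M))^2 * (Pone (2*M))^2)
      = (ee (2*M))^2 * (ee M)^3 * RF^2 := by
    rw [Pone_even_odd, Fq_split, ee_even_odd]
    linear_combination ((Fq M)^2 * RF^2 * (ee M)^3) * (W_mul_OL_sq M)
  have e5 : (ee (2*M))^2 * (ee M)^3 * RE^3 = (ee (2*M))^5 := by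
    rw [ee_split]; ring
  have s1 : (X:ℚ⟦X⟧)^M ∣ theta * ((Fq (2*M))^2 * (Pone (2*M))^2)
      - (W M * ee M) * ((Fq (2*M))^2 * (Pone (2*M))^2) := by
    rw [show theta * ((Fq (2*M))^2 * (Pone (2*M))^2)
      - (W M * ee M) * ((Fq (2*M))^2 * (Pone (2*M))^2)
      = (theta - W M * ee M) * ((Fq (2*M))^2 * (Pone (2*M))^2) from by ring]
    exact (gauss_mod M).mul_right _
  have s4 : (X:ℚ⟦X⟧)^M ∣ (ee (2*M))^2 * (ee M)^3 * RF^2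
      - (ee (2*M))^2 * (ee M)^3 * RE^3 := by
    have h := cong_trans (dvd_pow_sub_one (n:=2) hRF1)
      (dvd_sub_comm.mp (dvd_pow_sub_one (n:=3) hRE1))
    rw [show (ee (2*M))^2 * (ee M)^3 * RF^2 - (ee (2*M))^2 * (ee M)^3 * RE^3
      = ((ee (2*M))^2 * (ee M)^3) * (RF^2 - RE^3) from by ring]
    exact h.mul_left _
  exact cong_trans s1 (cong_trans (cong_of_eq e2) (cong_trans s4 (cong_of_eq e5)))

noncomputable def fA (n : ℕ) : ℚ⟦X⟧ := (1 - X^(2*(n+1)))^5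
noncomputable def fB (n : ℕ) : ℚ⟦X⟧ := (1 - X^(4*(n+1)))^2 * (1 - X^(n+1))^2
noncomputable def ff (n : ℕ) : ℚ⟦X⟧ := fA n * (fB n)⁻¹

lemma constantCoeff_fB (n : ℕ) : constantCoeff (fB n) = 1 := by
  rw [fB, map_mul, map_pow, map_pow, constantCoeff_one_sub_X_pow (by omega),
    constantCoeff_one_sub_X_pow (by omega)]
  norm_num

lemma fB_ne (n : ℕ) : constantCoeff (fB n) ≠ 0 := by
  rw [constantCoeff_fB]; exact one_ne_zero

lemma ff_mul_fB (n : ℕ) : ff n * fB n = fA n := by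
  rw [ff, mul_assoc, PowerSeries.inv_mul_cancel _ (fB_ne n), mul_one]

lemma prod_ff_mul (s : Finset ℕ) : (∏ n ∈ s, ff n) * (∏ n ∈ s, fB n) = ∏ n ∈ s, fA n := by
  rw [← Finset.prod_mul_distrib]
  exact Finset.prod_congr rfl fun n _ => ff_mul_fB n

lemma X_dvd_ff_sub_one (n : ℕ) : (X:ℚ⟦X⟧)^(n+1) ∣ ff n - 1 := by
  have h1 : (X:ℚ⟦X⟧)^(n+1) ∣ fA n - fB n := by
    rw [show fA n - fB n = (fA n - 1) - (fB n - 1) from by ring]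
    apply dvd_sub
    · exact dvd_pow_sub_one (dvd_X_pow_sub_one (by omega))
    · exact dvd_mul_sub_one (dvd_pow_sub_one (dvd_X_pow_sub_one (by omega)))
        (dvd_pow_sub_one (dvd_X_pow_sub_one (by omega)))
  have e : ff n - 1 = (fA n - fB n) * (fB n)⁻¹ := by
    rw [sub_mul, ff, mul_comm (fB n) ((fB n)⁻¹), PowerSeries.inv_mul_cancel _ (fB_ne n)]
  rw [e]
  exact h1.mul_right _

lemma coeff_eq_of_dvd {M k : ℕ} {P Q : ℚ⟦X⟧} (h : (X:ℚ⟦X⟧)^M ∣ P - Q) (hk : k < M) :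
    PowerSeries.coeff k P = PowerSeries.coeff k Q := by
  have h2 := (PowerSeries.X_pow_dvd_iff.mp h) k hk
  rw [map_sub] at h2
  exact sub_eq_zero.mp h2

lemma key2 (k : ℕ) : (X:ℚ⟦X⟧)^(k+1) ∣ theta - ∏ n ∈ Finset.range (2*(k+1)), ff n := by
  have hfBp : (∏ n ∈ Finset.range (2*(k+1)), fB n)
      = ∏ n ∈ Finset.range (2*(k+1)), ((1 - (X:ℚ⟦X⟧)^(4*(n+1)))^2 * (1 - X^(n+1))^2) :=
    Finset.prod_congr rfl fun n _ => rfl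
  have hfAp : (∏ n ∈ Finset.range (2*(k+1)), fA n)
      = ∏ n ∈ Finset.range (2*(k+1)), (1 - (X:ℚ⟦X⟧)^(2*(n+1)))^5 :=
    Finset.prod_congr rfl fun n _ => rfl
  have h : (X:ℚ⟦X⟧)^(k+1) ∣ theta * (∏ n ∈ Finset.range (2*(k+1)), fB n)
      - ∏ n ∈ Finset.range (2*(k+1)), fA n := by
    rw [hfBp, hfAp]; exact key_mod (k+1)
  have hBu : constantCoeff (∏ n ∈ Finset.range (2*(k+1)), fB n) ≠ 0 := by
    rw [map_prod]
    rw [Finset.prod_eq_one fun n _ => constantCoeff_fB n]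
    exact one_ne_zero
  have h2 := prod_ff_mul (Finset.range (2*(k+1)))
  have e : theta - ∏ n ∈ Finset.range (2*(k+1)), ff n
      = (theta * (∏ n ∈ Finset.range (2*(k+1)), fB n)
          - ∏ n ∈ Finset.range (2*(k+1)), fA n)
        * (∏ n ∈ Finset.range (2*(k+1)), fB n)⁻¹ := by
    rw [sub_mul, mul_assoc, PowerSeries.mul_inv_cancel _ hBu, mul_one, ← h2, mul_assoc,
      PowerSeries.mul_inv_cancel _ hBu, mul_one]
  rw [e]
  exact h.mul_right _

lemma coeff_prod_eq_theta (k : ℕ) (s : Finset ℕ) (hs : Finset.range (2*(k+1)) ⊆ s) :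
    PowerSeries.coeff k (∏ n ∈ s, ff n) = PowerSeries.coeff k theta := by
  have hrest : (X:ℚ⟦X⟧)^(k+1) ∣ (∏ n ∈ s \ Finset.range (2*(k+1)), ff n) - 1 := by
    apply dvd_prod_sub_one
    intro n hn
    have hn2 : 2*(k+1) ≤ n := by
      simp only [Finset.mem_sdiff, Finset.mem_range] at hn; omega
    exact (pow_dvd_pow X (by omega : k+1 ≤ n+1)).trans (X_dvd_ff_sub_one n)
  have h1 : (X:ℚ⟦X⟧)^(k+1) ∣ (∏ n ∈ s, ff n) - ∏ n ∈ Finset.range (2*(k+1)), ff n := by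
    rw [← Finset.prod_sdiff hs,
      show (∏ n ∈ s \ Finset.range (2*(k+1)), ff n) * (∏ n ∈ Finset.range (2*(k+1)), ff n)
          - ∏ n ∈ Finset.range (2*(k+1)), ff n
        = (∏ n ∈ Finset.range (2*(k+1)), ff n) * ((∏ n ∈ s \ Finset.range (2*(k+1)), ff n) - 1)
        from by ring]
    exact hrest.mul_left _
  exact coeff_eq_of_dvd (cong_trans h1 (dvd_sub_comm.mp (key2 k))) (by omega)

end Aux

theorem stmt_7 :
    theta = ∏' n : ℕ,
      (1 - (X : ℚ⟦X⟧) ^ (2 * (n + 1))) ^ 5 *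
        (((1 - (X : ℚ⟦X⟧) ^ (4 * (n + 1))) ^ 2 * (1 - (X : ℚ⟦X⟧) ^ (n + 1)) ^ 2)⁻¹) := by
  have hp : HasProd (fun n : ℕ =>
      (1 - (X : ℚ⟦X⟧) ^ (2 * (n + 1))) ^ 5 *
        (((1 - (X : ℚ⟦X⟧) ^ (4 * (n + 1))) ^ 2 * (1 - (X : ℚ⟦X⟧) ^ (n + 1)) ^ 2)⁻¹)) theta := by
    rw [HasProd]
    apply tendsto_pi_nhds.mpr
    intro d
    obtain ⟨k, rfl⟩ : ∃ k, d = Finsupp.single () k := ⟨d (), Finsupp.unique_single d⟩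
    have hcoe : ∀ φ : ℚ⟦X⟧, φ (Finsupp.single () k) = PowerSeries.coeff k φ := fun _ => rfl
    simp only [hcoe]
    refine Filter.Tendsto.congr' ?_ tendsto_const_nhds
    rw [Filter.EventuallyEq]; change ∀ᶠ x in Filter.atTop, _; rw [Filter.eventually_atTop]
    refine ⟨Finset.range (2*(k+1)), fun s hs => ?_⟩
    exact (Aux.coeff_prod_eq_theta k s hs).symm
  exact hp.tprod_eq.symm
end

section
/- As formal power series in q, θ(q) = ∏_{n ≥ 1} (1 − q^n)^{−c_n}, where c_n = 2 if n is odd, c_n = −3 if n ≡ 2 (mod 4), and c_n = −1 if n ≡ 0 (mod 4); here (1 − q^n)^{−1} denotes the formal inverse ∑_{k ≥ 0} q^{nk}. -/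
open PowerSeries

/-- `(1 − q^n)^{−c_n}` where `c_n = 2` for odd `n`, `−3` for `n ≡ 2 (mod 4)`,
`−1` for `4 ∣ n`; negative exponents are interpreted via the formal inverse. -/
noncomputable def thetaFactor (n : ℕ) : ℚ⟦X⟧ :=
  if n % 2 = 1 then ((1 - (X : ℚ⟦X⟧) ^ n)⁻¹) ^ 2
  else if n % 4 = 2 then (1 - (X : ℚ⟦X⟧) ^ n) ^ 3
  else (1 - (X : ℚ⟦X⟧) ^ n) ^ 1

namespace ThetaAux

lemma dvd_mul_sub_mul {R : Type*} [CommRing R] {d a b c e : R}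
    (h1 : d ∣ a - b) (h2 : d ∣ c - e) : d ∣ a * c - b * e := by
  have : a * c - b * e = (a - b) * c + b * (c - e) := by ring
  rw [this]
  exact dvd_add (h1.mul_right _) (h2.mul_left _)

lemma dvd_prod_sub_one {R ι : Type*} [CommRing R] {d : R} (s : Finset ι) (f : ι → R)
    (h : ∀ i ∈ s, d ∣ f i - 1) : d ∣ (∏ i ∈ s, f i) - 1 := by
  classical
  induction s using Finset.induction_on with
  | empty => simp
  | insert _ _ hx ih =>
    rename_i a s
    rw [Finset.prod_insert hx]
    have h1 := h a (Finset.mem_insert_self a s)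
    have h2 := ih (fun i hi => h i (Finset.mem_insert_of_mem hi))
    have : f a * ∏ i ∈ s, f i - 1 = (f a - 1) * ∏ i ∈ s, f i + ((∏ i ∈ s, f i) - 1) := by ring
    rw [this]
    exact dvd_add (h1.mul_right _) h2

lemma unit_cancel {R : Type*} [CommRing R] {d u a b : R} (hu : IsUnit u)
    (h : d ∣ u * a - u * b) : d ∣ a - b := by
  obtain ⟨v, rfl⟩ := hu
  have : a - b = (↑v⁻¹ : R) * ((v : R) * a - (v : R) * b) := by
    have hv : (↑v⁻¹ : R) * v = 1 := v.inv_mul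
    calc a - b = ((↑v⁻¹ : R) * v) * a - ((↑v⁻¹ : R) * v) * b := by rw [hv]; ring
    _ = (↑v⁻¹ : R) * ((v : R) * a - (v : R) * b) := by ring
  rw [this]
  exact h.mul_left _

/-- Gaussian binomial in variable `q²`, i.e. `binom(n,k)_{X²}`, as a power series. -/
noncomputable def gbq : ℕ → ℕ → ℚ⟦X⟧
  | _, 0 => 1
  | 0, _+1 => 0
  | n+1, k+1 => gbq n k + X^(2*(k+1)) * gbq n (k+1)

@[simp] lemma gbq_zero (n : ℕ) : gbq n 0 = 1 := by cases n <;> rfl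

lemma gbq_succ (n k : ℕ) : gbq (n+1) (k+1) = gbq n k + X^(2*(k+1)) * gbq n (k+1) := rfl

lemma gbq_eq_zero : ∀ {n k : ℕ}, n < k → gbq n k = 0 := by
  intro n
  induction n with
  | zero => intro k hk; match k, hk with | k+1, _ => rfl
  | succ n ih =>
    intro k hk
    match k, hk with
    | k+1, hk =>
      rw [gbq_succ, ih (by omega), ih (by omega), mul_zero, add_zero]

lemma gbq_pascal2 : ∀ n : ℕ, ∀ k : ℕ, k ≤ n →
    gbq (n+1) (k+1) = X^(2*(n-k)) * gbq n k + gbq n (k+1) := by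
  intro n
  induction n with
  | zero =>
    intro k hk
    interval_cases k
    simp [gbq_succ, gbq_eq_zero]
  | succ n ih =>
    intro k hk
    match k with
    | 0 =>
      have h1 : gbq (n+1) 1 = X^(2*(n-0)) * gbq n 0 + gbq n 1 := ih 0 (Nat.zero_le n)
      calc gbq (n+2) 1 = gbq (n+1) 0 + X^(2*1) * (X^(2*(n-0)) * gbq n 0 + gbq n 1) := by
            rw [gbq_succ, h1]
        _ = X^(2*(n+1-0)) * gbq (n+1) 0 + (gbq n 0 + X^(2*1) * gbq n 1) := by
            have e2 : (X:ℚ⟦X⟧)^(2*1) * X^(2*(n-0)) = X^(2*(n+1-0)) := by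
              rw [← pow_add]; congr 1; omega
            simp only [gbq_zero]
            linear_combination e2
        _ = X^(2*(n+1-0)) * gbq (n+1) 0 + gbq (n+1) 1 := by rw [← gbq_succ]
    | j+1 =>
      by_cases hj : j + 1 ≤ n
      · have h1 : gbq (n+1) (j+1) = X^(2*(n-j)) * gbq n j + gbq n (j+1) := ih j (by omega)
        have h2 : gbq (n+1) (j+2) = X^(2*(n-(j+1))) * gbq n (j+1) + gbq n (j+2) := ih (j+1) hj
        have h3 : gbq (n+1) (j+1) = gbq n j + X^(2*(j+1)) * gbq n (j+1) := gbq_succ _ _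
        have h4 : gbq (n+1) (j+2) = gbq n (j+1) + X^(2*(j+2)) * gbq n (j+2) := gbq_succ _ _
        calc gbq (n+2) (j+2)
            = (X^(2*(n-j)) * gbq n j + gbq n (j+1))
              + X^(2*(j+2)) * (X^(2*(n-(j+1))) * gbq n (j+1) + gbq n (j+2)) := by
              rw [gbq_succ, h1, h2]
          _ = X^(2*(n+1-(j+1))) * (gbq n j + X^(2*(j+1)) * gbq n (j+1))
              + (gbq n (j+1) + X^(2*(j+2)) * gbq n (j+2)) := by
              rw [show n+1-(j+1) = n-j from by omega]
              have e1 : (X:ℚ⟦X⟧)^(2*(j+2)) * X^(2*(n-(j+1))) = X^(2*(n+1)) := by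
                rw [← pow_add]; congr 1; omega
              have e2 : (X:ℚ⟦X⟧)^(2*(n-j)) * X^(2*(j+1)) = X^(2*(n+1)) := by
                rw [← pow_add]; congr 1; omega
              linear_combination (gbq n (j+1)) * e1 - gbq n (j+1) * e2
          _ = X^(2*(n+1-(j+1))) * gbq (n+1) (j+1) + gbq (n+1) (j+2) := by rw [← h3, ← h4]
      · have hjn : j = n := by omega
        subst hjn
        rw [gbq_succ, gbq_eq_zero (show j+1 < j+2 by omega), show j+1-(j+1) = 0 from by omega]
        simp


/-- `(q²;q²)_r = ∏_{n=1}^r (1 - q^{2n})`. -/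
noncomputable def Pq (r : ℕ) : ℚ⟦X⟧ := ∏ n ∈ Finset.range r, (1 - X^(2*n+2))

@[simp] lemma Pq_zero : Pq 0 = 1 := by simp [Pq]

lemma Pq_succ (r : ℕ) : Pq (r+1) = Pq r * (1 - X^(2*r+2)) := by
  rw [Pq, Finset.prod_range_succ]; rfl

lemma constCoeff_one_sub_X_pow (a : ℕ) :
    constantCoeff (1 - X^(a+1) : ℚ⟦X⟧) = 1 := by
  simp [zero_pow]

lemma isUnit_one_sub_X_pow (a : ℕ) : IsUnit (1 - X^(a+1) : ℚ⟦X⟧) := by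
  apply IsUnit.of_mul_eq_one _ (PowerSeries.mul_inv_cancel _ (by
    rw [constCoeff_one_sub_X_pow]; norm_num))

lemma isUnit_Pq (r : ℕ) : IsUnit (Pq r) := by
  rw [Pq]
  refine Finset.prod_induction _ IsUnit (fun a b ha hb => ha.mul hb) isUnit_one ?_
  intro n _
  exact (show (1 : ℚ⟦X⟧) - X^(2*n+2) = 1 - X^((2*n+1)+1) by norm_num) ▸ isUnit_one_sub_X_pow (2*n+1)

lemma gbq_mul_Pq : ∀ n : ℕ, ∀ a b : ℕ, a + b = n → gbq n a * Pq a * Pq b = Pq n := by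
  intro n
  induction n with
  | zero =>
    intro a b h
    obtain ⟨rfl, rfl⟩ : a = 0 ∧ b = 0 := by omega
    simp
  | succ n ih =>
    intro a b h
    match a with
    | 0 =>
      obtain rfl : b = n+1 := by omega
      simp
    | a'+1 =>
      match b with
      | 0 =>
        have ha : a' + 1 = n + 1 := by omega
        rw [gbq_succ, gbq_eq_zero (show n < a'+1 from by omega), mul_zero, add_zero]
        have := ih a' 0 (by omega)
        calc (gbq n a') * Pq (a'+1) * Pq 0
            = (gbq n a' * Pq a' * Pq 0) * (1 - X^(2*a'+2)) := by rw [Pq_succ]; ring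
          _ = Pq n * (1 - X^(2*a'+2)) := by rw [this]
          _ = Pq (n+1) := by rw [show a' = n from by omega, ← Pq_succ]
      | b'+1 =>
        have h1 := ih a' (b'+1) (by omega)
        have h2 := ih (a'+1) b' (by omega)
        calc gbq (n+1) (a'+1) * Pq (a'+1) * Pq (b'+1)
            = (gbq n a' * Pq a' * Pq (b'+1)) * (1 - X^(2*a'+2))
              + X^(2*(a'+1)) * ((gbq n (a'+1) * Pq (a'+1) * Pq b') * (1 - X^(2*b'+2))) := by
              rw [gbq_succ, Pq_succ a', Pq_succ b']; ring
          _ = Pq n * (1 - X^(2*a'+2)) + X^(2*(a'+1)) * (Pq n * (1 - X^(2*b'+2))) := by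
              rw [h1, h2]
          _ = Pq n * (1 - X^(2*n+2)) := by
              have e : (X:ℚ⟦X⟧)^(2*(a'+1)) * X^(2*b'+2) = X^(2*n+2) := by
                rw [← pow_add]; congr 1; omega
              have e2 : (X:ℚ⟦X⟧)^(2*(a'+1)) = X^(2*a'+2) := by rw [show 2*(a'+1) = 2*a'+2 from by omega]
              linear_combination - Pq n * e + Pq n * X^(2*b'+2) * e2 - Pq n * e2
          _ = Pq (n+1) := (Pq_succ n).symm

lemma Pq_sub_dvd {r s : ℕ} (h : r ≤ s) : (X:ℚ⟦X⟧)^(2*r+2) ∣ Pq s - Pq r := by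
  obtain ⟨t, rfl⟩ := Nat.exists_eq_add_of_le h
  induction t with
  | zero => simp
  | succ t ih =>
    have : Pq (r+(t+1)) - Pq r = (Pq (r+t) - Pq r) + Pq (r+t) * (-X^(2*(r+t)+2)) := by
      rw [show r+(t+1) = (r+t)+1 from by omega, Pq_succ]; ring
    rw [this]
    refine dvd_add (ih (by omega)) (Dvd.dvd.mul_left ?_ _)
    exact (dvd_neg).mpr (pow_dvd_pow _ (by omega))


lemma sum_shift (n : ℕ) (f : ℕ → ℚ⟦X⟧) (hf : f (n+1) = 0) :
    ∑ k ∈ Finset.range (n+1), f (k+1) = (∑ k ∈ Finset.range (n+1), f k) - f 0 := by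
  have h1 := Finset.sum_range_succ' f (n+1)
  have h2 := Finset.sum_range_succ f (n+1)
  rw [hf, add_zero] at h2
  rw [h2] at h1
  linear_combination -h1

lemma sum_step1 (n : ℕ) (c : ℕ → ℚ⟦X⟧) :
    ∑ k ∈ Finset.range (n+2), gbq (n+1) k * c k
      = ∑ k ∈ Finset.range (n+1), gbq n k * (c (k+1) + X^(2*k) * c k) := by
  have key : (∑ k ∈ Finset.range (n+1), X^(2*(k+1)) * gbq n (k+1) * c (k+1))
      = (∑ k ∈ Finset.range (n+1), X^(2*k) * gbq n k * c k) - X^(2*0) * gbq n 0 * c 0 := by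
    have := sum_shift n (fun k => X^(2*k) * gbq n k * c k)
      (by show X^(2*(n+1)) * gbq n (n+1) * c (n+1) = 0
          rw [gbq_eq_zero (Nat.lt_succ_self n)]; ring)
    simpa using this
  calc ∑ k ∈ Finset.range (n+2), gbq (n+1) k * c k
      = (∑ k ∈ Finset.range (n+1), gbq (n+1) (k+1) * c (k+1)) + gbq (n+1) 0 * c 0 :=
        Finset.sum_range_succ' _ _
    _ = (∑ k ∈ Finset.range (n+1), (gbq n k * c (k+1) + X^(2*(k+1)) * gbq n (k+1) * c (k+1))) + c 0 := by
        rw [gbq_zero, one_mul]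
        congr 1
        refine Finset.sum_congr rfl fun k _ => ?_
        rw [gbq_succ]; ring
    _ = ((∑ k ∈ Finset.range (n+1), gbq n k * c (k+1))
          + ∑ k ∈ Finset.range (n+1), X^(2*(k+1)) * gbq n (k+1) * c (k+1)) + c 0 := by
        rw [Finset.sum_add_distrib]
    _ = (∑ k ∈ Finset.range (n+1), gbq n k * c (k+1))
          + ∑ k ∈ Finset.range (n+1), X^(2*k) * gbq n k * c k := by
        rw [key]; simp only [pow_zero, mul_one, one_mul, mul_zero, gbq_zero]; ring
    _ = ∑ k ∈ Finset.range (n+1), gbq n k * (c (k+1) + X^(2*k) * c k) := by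
        rw [← Finset.sum_add_distrib]
        refine Finset.sum_congr rfl fun k _ => ?_
        ring

lemma sum_step2 (n : ℕ) (c : ℕ → ℚ⟦X⟧) :
    ∑ k ∈ Finset.range (n+2), gbq (n+1) k * c k
      = ∑ k ∈ Finset.range (n+1), gbq n k * (c k + X^(2*(n-k)) * c (k+1)) := by
  have key : (∑ k ∈ Finset.range (n+1), gbq n (k+1) * c (k+1))
      = (∑ k ∈ Finset.range (n+1), gbq n k * c k) - gbq n 0 * c 0 := by
    have := sum_shift n (fun k => gbq n k * c k)
      (by show gbq n (n+1) * c (n+1) = 0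
          rw [gbq_eq_zero (Nat.lt_succ_self n)]; ring)
    simpa using this
  calc ∑ k ∈ Finset.range (n+2), gbq (n+1) k * c k
      = (∑ k ∈ Finset.range (n+1), gbq (n+1) (k+1) * c (k+1)) + gbq (n+1) 0 * c 0 :=
        Finset.sum_range_succ' _ _
    _ = (∑ k ∈ Finset.range (n+1), (X^(2*(n-k)) * gbq n k * c (k+1) + gbq n (k+1) * c (k+1))) + c 0 := by
        rw [gbq_zero, one_mul]
        congr 1
        refine Finset.sum_congr rfl fun k hk => ?_
        rw [gbq_pascal2 n k (by have := Finset.mem_range.mp hk; omega)]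
        ring
    _ = ((∑ k ∈ Finset.range (n+1), X^(2*(n-k)) * gbq n k * c (k+1))
          + ∑ k ∈ Finset.range (n+1), gbq n (k+1) * c (k+1)) + c 0 := by
        rw [Finset.sum_add_distrib]
    _ = (∑ k ∈ Finset.range (n+1), X^(2*(n-k)) * gbq n k * c (k+1))
          + ∑ k ∈ Finset.range (n+1), gbq n k * c k := by
        rw [key]; simp only [gbq_zero, one_mul]; ring
    _ = ∑ k ∈ Finset.range (n+1), gbq n k * (c k + X^(2*(n-k)) * c (k+1)) := by
        rw [← Finset.sum_add_distrib]
        refine Finset.sum_congr rfl fun k _ => ?_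
        ring

/-- `X^{d²}` for an integer `d`. -/
noncomputable def Xe (d : ℤ) : ℚ⟦X⟧ := X^((d^2).toNat)

/-- The truncated theta sum with Gaussian binomial coefficients. -/
noncomputable def TT (m : ℕ) : ℚ⟦X⟧ :=
  ∑ k ∈ Finset.range (2*m+1), gbq (2*m) k * Xe ((m:ℤ) - k)

lemma step_term (m k : ℕ) (hk : k ≤ 2*m) :
    (Xe ((m:ℤ)+1-((k+1:ℕ):ℤ)) + X^(2*k) * Xe ((m:ℤ)+1-(k:ℤ)))
      + X^(2*(2*m-k)) * (Xe ((m:ℤ)+1-((k+1+1:ℕ):ℤ)) + X^(2*(k+1)) * Xe ((m:ℤ)+1-((k+1:ℕ):ℤ)))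
    = (1 + X^(2*m+1))^2 * Xe ((m:ℤ)-(k:ℤ)) := by
  set δ : ℤ := (m:ℤ) - k with hδ
  have d1 : (m:ℤ)+1-((k+1:ℕ):ℤ) = δ := by push_cast; rw [hδ]; ring
  have d2 : (m:ℤ)+1-(k:ℤ) = δ+1 := by rw [hδ]; ring
  have d3 : (m:ℤ)+1-((k+1+1:ℕ):ℤ) = δ-1 := by push_cast; rw [hδ]; ring
  rw [d1, d2, d3]
  have tn1 := Int.toNat_of_nonneg (sq_nonneg (δ+1))
  have tn2 := Int.toNat_of_nonneg (sq_nonneg (δ-1))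
  have tn0 := Int.toNat_of_nonneg (sq_nonneg δ)
  unfold Xe
  have E1 : (X:ℚ⟦X⟧)^(2*k) * X^(((δ+1)^2).toNat) = X^((δ^2).toNat) * X^(2*m+1) := by
    rw [← pow_add, ← pow_add]; congr 1
    zify [tn1, tn0]; rw [hδ]; ring
  have E2 : (X:ℚ⟦X⟧)^(2*(2*m-k)) * X^(((δ-1)^2).toNat) = X^((δ^2).toNat) * X^(2*m+1) := by
    rw [← pow_add, ← pow_add]; congr 1
    zify [tn2, tn0, hk]; rw [hδ]; ring
  have E3 : (X:ℚ⟦X⟧)^(2*(2*m-k)) * (X^(2*(k+1)) * X^((δ^2).toNat))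
      = X^((δ^2).toNat) * (X^(2*m+1))^2 := by
    rw [← pow_add, ← pow_add, ← pow_mul, ← pow_add]; congr 1
    zify [tn0, hk]; rw [hδ]; ring
  linear_combination E1 + E2 + E3

lemma TT_eq : ∀ m : ℕ, TT m = ∏ j ∈ Finset.range m, (1 + X^(2*j+1))^2 := by
  intro m
  induction m with
  | zero => simp [TT, Xe]
  | succ m ih =>
    have h0 : TT (m+1) = ∑ k ∈ Finset.range ((2*m+1)+2), gbq ((2*m+1)+1) k * Xe ((m:ℤ)+1-(k:ℤ)) := by
      rw [TT, show 2*(m+1)+1 = (2*m+1)+2 from by ring, show 2*(m+1) = (2*m+1)+1 from by ring]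
      refine Finset.sum_congr rfl fun k _ => ?_
      have e : ((m+1:ℕ):ℤ) - (k:ℤ) = (m:ℤ)+1-(k:ℤ) := by push_cast; ring
      rw [e]
    have h1 := sum_step1 (2*m+1) (fun j => Xe ((m:ℤ)+1-(j:ℤ)))
    have h2 := sum_step2 (2*m) (fun j => Xe ((m:ℤ)+1-((j+1:ℕ):ℤ)) + X^(2*j) * Xe ((m:ℤ)+1-(j:ℤ)))
    have this1 : ∀ k ∈ Finset.range (2*m+1),
        gbq (2*m) k * ((Xe ((m:ℤ)+1-((k+1:ℕ):ℤ)) + X^(2*k) * Xe ((m:ℤ)+1-(k:ℤ)))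
          + X^(2*(2*m-k)) * (Xe ((m:ℤ)+1-((k+1+1:ℕ):ℤ)) + X^(2*(k+1)) * Xe ((m:ℤ)+1-((k+1:ℕ):ℤ))))
        = (1 + X^(2*m+1))^2 * (gbq (2*m) k * Xe ((m:ℤ)-(k:ℤ))) := by
      intro k hk
      rw [step_term m k (by have := Finset.mem_range.mp hk; omega)]
      ring
    have hfinal : ∑ k ∈ Finset.range (2*m+1),
        gbq (2*m) k * ((Xe ((m:ℤ)+1-((k+1:ℕ):ℤ)) + X^(2*k) * Xe ((m:ℤ)+1-(k:ℤ)))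
          + X^(2*(2*m-k)) * (Xe ((m:ℤ)+1-((k+1+1:ℕ):ℤ)) + X^(2*(k+1)) * Xe ((m:ℤ)+1-((k+1:ℕ):ℤ))))
        = ∏ j ∈ Finset.range (m+1), (1 + X^(2*j+1))^2 := by
      rw [Finset.sum_congr rfl this1, ← Finset.mul_sum, ← TT, ih, Finset.prod_range_succ]
      ring
    exact h0.trans (h1.trans (h2.trans hfinal))


lemma gbq_Pq_near_one (N k : ℕ) (hk : k ≤ 2*N) :
    (X:ℚ⟦X⟧)^(2 * min k (2*N-k) + 2) ∣ gbq (2*N) k * Pq N - 1 := by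
  set μ := min k (2*N-k) with hμ
  have hmain : gbq (2*N) k * Pq k * Pq (2*N-k) = Pq (2*N) := gbq_mul_Pq (2*N) k (2*N-k) (by omega)
  have hsub : ∀ r s : ℕ, r ≤ s → μ ≤ r → (X:ℚ⟦X⟧)^(2*μ+2) ∣ Pq s - Pq r := by
    intro r s h1 h2
    exact dvd_trans (pow_dvd_pow X (by omega)) (Pq_sub_dvd h1)
  have c1 : (X:ℚ⟦X⟧)^(2*μ+2) ∣ Pq (2*N) - Pq k := hsub k (2*N) hk (by omega)
  have c2 : (X:ℚ⟦X⟧)^(2*μ+2) ∣ Pq N - Pq (2*N-k) := by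
    rcases le_total k N with h | h
    · have := hsub N (2*N-k) (by omega) (by omega)
      have := (dvd_neg).mpr this
      simpa [neg_sub] using this
    · exact hsub (2*N-k) N (by omega) (by omega)
  apply unit_cancel ((isUnit_Pq k).mul (isUnit_Pq (2*N-k)))
  have e1 : Pq k * Pq (2*N-k) * (gbq (2*N) k * Pq N) = Pq (2*N) * Pq N := by
    linear_combination Pq N * hmain
  rw [e1, mul_one]
  exact dvd_mul_sub_mul c1 c2

lemma toNat_sq (δ : ℤ) : (δ^2).toNat = δ.natAbs^2 := by
  have h1 := Int.natAbs_pow δ 2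
  have h2 := sq_nonneg δ
  omega

lemma card_sq_eq_zero (c : ℕ) (hns : ¬ ∃ s : ℕ, s^2 = c) :
    Nat.card {m : ℤ // m ^ 2 = (c:ℤ)} = 0 := by
  have : IsEmpty {m : ℤ // m ^ 2 = (c:ℤ)} := by
    constructor
    rintro ⟨m, hm⟩
    refine hns ⟨m.natAbs, ?_⟩
    have h1 := Int.natAbs_pow m 2
    rw [hm] at h1
    simpa using h1.symm
  exact Nat.card_of_isEmpty

lemma card_sq_zero : Nat.card {m : ℤ // m ^ 2 = ((0:ℕ):ℤ)} = 1 := by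
  have hset : {m : ℤ | m ^ 2 = ((0:ℕ):ℤ)} = {0} := by
    ext x
    simp [pow_eq_zero_iff]
  calc Nat.card {m : ℤ // m ^ 2 = ((0:ℕ):ℤ)}
      = ({m : ℤ | m ^ 2 = ((0:ℕ):ℤ)}).ncard := Nat.card_coe_set_eq _
    _ = 1 := by rw [hset]; exact Set.ncard_singleton 0

lemma card_sq_pos (s : ℕ) (hs : 0 < s) :
    Nat.card {m : ℤ // m ^ 2 = ((s^2:ℕ):ℤ)} = 2 := by
  have hset : {m : ℤ | m ^ 2 = ((s^2:ℕ):ℤ)} = {(s:ℤ), -(s:ℤ)} := by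
    ext x
    simp only [Set.mem_setOf_eq, Set.mem_insert_iff, Set.mem_singleton_iff]
    constructor
    · intro h
      have hf : (x - s) * (x + s) = 0 := by push_cast at h ⊢; linear_combination h
      rcases mul_eq_zero.mp hf with h' | h'
      · left; omega
      · right; omega
    · rintro (rfl | rfl) <;> push_cast <;> ring
  calc Nat.card {m : ℤ // m ^ 2 = ((s^2:ℕ):ℤ)}
      = ({m : ℤ | m ^ 2 = ((s^2:ℕ):ℤ)}).ncard := Nat.card_coe_set_eq _
    _ = 2 := by
        rw [hset]
        exact Set.ncard_pair (by intro h; omega)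

lemma filter_card (N j : ℕ) (hj : j ≤ N) :
    (Finset.filter (fun k : ℕ => j = (((N:ℤ)-(k:ℤ)).natAbs)^2) (Finset.range (2*N+1))).card
      = Nat.card {m : ℤ // m ^ 2 = (j:ℤ)} := by
  by_cases hsq : ∃ s : ℕ, s^2 = j
  · obtain ⟨s, rfl⟩ := hsq
    have hsN : s ≤ N := by
      have h1 : s ≤ s^2 := Nat.le_self_pow (by norm_num) s
      omega
    rcases Nat.eq_zero_or_pos s with rfl | hs
    · have hc : Nat.card {m : ℤ // m ^ 2 = (((0:ℕ)^2:ℕ):ℤ)} = 1 := by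
        simpa using card_sq_zero
      rw [hc]
      have hfil : Finset.filter (fun k : ℕ => (0:ℕ)^2 = (((N:ℤ)-(k:ℤ)).natAbs)^2) (Finset.range (2*N+1))
          = {N} := by
        ext k
        simp only [Finset.mem_filter, Finset.mem_range, Finset.mem_singleton]
        constructor
        · rintro ⟨hk, h⟩
          have h0 : (N:ℤ) - (k:ℤ) = 0 := by simpa using h.symm
          omega
        · rintro rfl
          constructor
          · omega
          · simp
      rw [hfil, Finset.card_singleton]
    · rw [card_sq_pos s hs]
      have hfil : Finset.filter (fun k : ℕ => s^2 = (((N:ℤ)-(k:ℤ)).natAbs)^2) (Finset.range (2*N+1))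
          = {N-s, N+s} := by
        ext k
        simp only [Finset.mem_filter, Finset.mem_range, Finset.mem_insert, Finset.mem_singleton]
        constructor
        · rintro ⟨hk, h⟩
          have h0 : s = ((N:ℤ)-(k:ℤ)).natAbs := Nat.pow_left_injective (by norm_num) h
          omega
        · rintro (rfl | rfl)
          · refine ⟨by omega, ?_⟩
            have e0 : ((N:ℤ)-((N-s:ℕ):ℤ)).natAbs = s := by omega
            rw [e0]
          · refine ⟨by omega, ?_⟩
            have e0 : ((N:ℤ)-((N+s:ℕ):ℤ)).natAbs = s := by omega
            rw [e0]
      rw [hfil, Finset.card_insert_of_notMem (by simp; omega), Finset.card_singleton]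
  · rw [card_sq_eq_zero j hsq, Finset.card_eq_zero, Finset.filter_eq_empty_iff]
    intro k _
    intro h
    exact hsq ⟨_, h.symm⟩

lemma counting (N : ℕ) :
    (X:ℚ⟦X⟧)^(N+1) ∣ (∑ k ∈ Finset.range (2*N+1), Xe ((N:ℤ)-(k:ℤ))) - theta := by
  rw [PowerSeries.X_pow_dvd_iff]
  intro j hj
  rw [map_sub, map_sum, sub_eq_zero]
  simp only [theta, PowerSeries.coeff_mk]
  have hco : ∀ k : ℕ, (PowerSeries.coeff j) (Xe ((N:ℤ)-(k:ℤ)))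
      = if j = (((N:ℤ)-(k:ℤ)).natAbs)^2 then 1 else 0 := by
    intro k
    rw [Xe, PowerSeries.coeff_X_pow, toNat_sq]
  rw [Finset.sum_congr rfl (fun k _ => hco k), Finset.sum_boole]
  rw [← filter_card N j (by omega)]


lemma TTPq (N : ℕ) : (X:ℚ⟦X⟧)^(N+1) ∣ TT N * Pq N - theta := by
  have hsplit : TT N * Pq N - theta
      = (∑ k ∈ Finset.range (2*N+1), (gbq (2*N) k * Pq N - 1) * Xe ((N:ℤ)-(k:ℤ)))
        + ((∑ k ∈ Finset.range (2*N+1), Xe ((N:ℤ)-(k:ℤ))) - theta) := by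
    have hterm : ∀ k ∈ Finset.range (2*N+1),
        (gbq (2*N) k * Xe ((N:ℤ)-(k:ℤ))) * Pq N
          = (gbq (2*N) k * Pq N - 1) * Xe ((N:ℤ)-(k:ℤ)) + Xe ((N:ℤ)-(k:ℤ)) :=
      fun k _ => by ring
    rw [TT, Finset.sum_mul, Finset.sum_congr rfl hterm, Finset.sum_add_distrib]
    ring
  rw [hsplit]
  refine dvd_add (Finset.dvd_sum ?_) (counting N)
  intro k hk
  have hk' : k ≤ 2*N := by have := Finset.mem_range.mp hk; omega
  have h1 := gbq_Pq_near_one N k hk'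
  set δ : ℤ := (N:ℤ)-(k:ℤ) with hδ
  have hexp : N+1 ≤ 2*min k (2*N-k) + 2 + (δ^2).toNat := by
    have h2 : δ^2 ≥ 2*δ - 1 := by nlinarith [sq_nonneg (δ-1)]
    have h3 : δ^2 ≥ -2*δ - 1 := by nlinarith [sq_nonneg (δ+1)]
    have h4 := sq_nonneg δ
    set t := δ^2 with ht
    omega
  have hterm : (X:ℚ⟦X⟧)^(2*min k (2*N-k)+2 + (δ^2).toNat)
      ∣ (gbq (2*N) k * Pq N - 1) * Xe δ := by
    rw [pow_add]
    exact mul_dvd_mul h1 (dvd_of_eq rfl)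
  exact dvd_trans (pow_dvd_pow X hexp) hterm

lemma constCoeff_ne (a : ℕ) : constantCoeff (1 - X^(a+1) : ℚ⟦X⟧) ≠ 0 := by
  rw [constCoeff_one_sub_X_pow]; norm_num

lemma tf_odd (j : ℕ) : thetaFactor (2*j+1) = ((1 - X^(2*j+1))⁻¹)^2 := by
  rw [thetaFactor, if_pos (by omega)]

lemma tf_even (j : ℕ) : thetaFactor (2*j+2)
    = (1 - X^(2*j+2)) * (if j % 2 = 0 then (1 - X^(2*j+2))^2 else 1) := by
  rw [thetaFactor, if_neg (by omega)]
  by_cases hj : j % 2 = 0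
  · rw [if_pos (by omega : (2*j+2) % 4 = 2), if_pos hj]; ring
  · rw [if_neg (by omega), if_neg hj, pow_one, mul_one]

lemma pair_prod (N : ℕ) : ∏ n ∈ Finset.range (2*N), thetaFactor (n+1)
    = ∏ j ∈ Finset.range N, (thetaFactor (2*j+1) * thetaFactor (2*j+2)) := by
  induction N with
  | zero => simp
  | succ N ih =>
    rw [show 2*(N+1) = (2*N)+1+1 from by ring, Finset.prod_range_succ, Finset.prod_range_succ,
      ih, Finset.prod_range_succ]
    rw [show 2*N+1+1 = 2*N+2 from rfl]
    ring

noncomputable def U (N : ℕ) : ℚ⟦X⟧ := ∏ j ∈ Finset.range N, (1 - X^(2*j+1))^2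

lemma hU (N : ℕ) : IsUnit (U N) := by
  rw [U]
  refine Finset.prod_induction _ IsUnit (fun a b ha hb => ha.mul hb) isUnit_one ?_
  intro j _
  exact ((show (1:ℚ⟦X⟧) - X^(2*j+1) = 1 - X^((2*j)+1) from rfl) ▸ isUnit_one_sub_X_pow (2*j)).pow 2

lemma QU (N : ℕ) : (∏ n ∈ Finset.range (2*N), thetaFactor (n+1)) * U N
    = ∏ j ∈ Finset.range N, thetaFactor (2*j+2) := by
  rw [pair_prod, U, ← Finset.prod_mul_distrib]
  refine Finset.prod_congr rfl fun j _ => ?_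
  have hx : (1 - X^(2*j+1) : ℚ⟦X⟧)⁻¹ * (1 - X^(2*j+1)) = 1 :=
    PowerSeries.inv_mul_cancel _ (constCoeff_ne (2*j))
  have hsq : ((1 - X^(2*j+1) : ℚ⟦X⟧)⁻¹)^2 * (1 - X^(2*j+1))^2 = 1 := by
    rw [← mul_pow, hx, one_pow]
  rw [tf_odd]
  linear_combination thetaFactor (2*j+2) * hsq

lemma CU (N : ℕ) : (∏ j ∈ Finset.range N, (1 + X^(2*j+1))^2) * U N
    = ∏ j ∈ Finset.range N, (1 - X^(4*j+2))^2 := by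
  rw [U, ← Finset.prod_mul_distrib]
  refine Finset.prod_congr rfl fun j _ => ?_
  rw [← mul_pow]
  congr 1
  have e : ((X:ℚ⟦X⟧)^(2*j+1))^2 = X^(4*j+2) := by
    rw [← pow_mul]; congr 1; ring
  linear_combination -e

lemma hodd (N : ℕ) : ∏ j ∈ Finset.range N, (if j % 2 = 0 then (1 - (X:ℚ⟦X⟧)^(2*j+2))^2 else 1)
    = ∏ i ∈ Finset.range ((N+1)/2), (1 - X^(4*i+2))^2 := by
  induction N with
  | zero => simp
  | succ N ih =>
    rw [Finset.prod_range_succ, ih]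
    by_cases hN : N % 2 = 0
    · rw [if_pos hN, show (N+1+1)/2 = (N+1)/2 + 1 from by omega, Finset.prod_range_succ,
        show 4*((N+1)/2)+2 = 2*N+2 from by omega]
    · rw [if_neg hN, mul_one, show (N+1+1)/2 = (N+1)/2 from by omega]

lemma prodE (N : ℕ) : ∏ j ∈ Finset.range N, thetaFactor (2*j+2)
    = Pq N * ∏ i ∈ Finset.range ((N+1)/2), (1 - X^(4*i+2))^2 := by
  rw [Finset.prod_congr rfl (fun j _ => tf_even j), Finset.prod_mul_distrib, ← hodd, Pq]

lemma hbig (N : ℕ) : (X:ℚ⟦X⟧)^(N+1) ∣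
    (∏ i ∈ Finset.range ((N+1)/2), (1 - X^(4*i+2))^2) - ∏ j ∈ Finset.range N, (1 - X^(4*j+2))^2 := by
  have hc : (N+1)/2 ≤ N := by omega
  rw [← Finset.prod_range_mul_prod_Ico (fun j => (1 - (X:ℚ⟦X⟧)^(4*j+2))^2) hc]
  have h1 : (X:ℚ⟦X⟧)^(N+1) ∣ (∏ j ∈ Finset.Ico ((N+1)/2) N, (1 - X^(4*j+2))^2) - 1 := by
    refine dvd_prod_sub_one _ _ fun j hj => ?_
    have hj' : (N+1)/2 ≤ j := (Finset.mem_Ico.mp hj).1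
    have he : ((1:ℚ⟦X⟧) - X^(4*j+2))^2 - 1 = X^(4*j+2) * (X^(4*j+2) - 2) := by ring
    rw [he]
    exact Dvd.dvd.mul_right (pow_dvd_pow X (by omega)) _
  have : (∏ i ∈ Finset.range ((N+1)/2), (1 - (X:ℚ⟦X⟧)^(4*i+2))^2)
      - (∏ i ∈ Finset.range ((N+1)/2), (1 - (X:ℚ⟦X⟧)^(4*i+2))^2) * ∏ j ∈ Finset.Ico ((N+1)/2) N, (1 - X^(4*j+2))^2
      = (∏ i ∈ Finset.range ((N+1)/2), (1 - (X:ℚ⟦X⟧)^(4*i+2))^2)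
        * (1 - ∏ j ∈ Finset.Ico ((N+1)/2) N, (1 - X^(4*j+2))^2) := by ring
  rw [this]
  refine Dvd.dvd.mul_left ?_ _
  have := (dvd_neg).mpr h1
  simpa [neg_sub] using this

lemma main_dvd (N : ℕ) : (X:ℚ⟦X⟧)^(N+1) ∣ (∏ n ∈ Finset.range (2*N), thetaFactor (n+1)) - theta := by
  have hQC : (X:ℚ⟦X⟧)^(N+1) ∣ (∏ n ∈ Finset.range (2*N), thetaFactor (n+1)) - TT N * Pq N := by
    apply unit_cancel (hU N)
    have e1 : U N * (∏ n ∈ Finset.range (2*N), thetaFactor (n+1))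
        = Pq N * ∏ i ∈ Finset.range ((N+1)/2), (1 - X^(4*i+2))^2 := by
      rw [mul_comm, QU, prodE]
    have e2 : U N * (TT N * Pq N) = Pq N * ∏ j ∈ Finset.range N, (1 - X^(4*j+2))^2 := by
      rw [TT_eq]
      linear_combination Pq N * CU N
    rw [e1, e2, ← mul_sub]
    exact (hbig N).mul_left _
  have final : (∏ n ∈ Finset.range (2*N), thetaFactor (n+1)) - theta
      = ((∏ n ∈ Finset.range (2*N), thetaFactor (n+1)) - TT N * Pq N) + (TT N * Pq N - theta) := by
    ring
  rw [final]
  exact dvd_add hQC (TTPq N)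

lemma dvd_pow_sub_one {d g : ℚ⟦X⟧} (h : d ∣ g - 1) (j : ℕ) : d ∣ g^j - 1 := by
  induction j with
  | zero => simp
  | succ j ih =>
    have : g^(j+1) - 1 = g^j * (g - 1) + (g^j - 1) := by ring
    rw [this]
    exact dvd_add (h.mul_left _) ih

lemma tf_one_mod (n : ℕ) : (X:ℚ⟦X⟧)^(n+1) ∣ thetaFactor (n+1) - 1 := by
  rw [thetaFactor]
  split_ifs with h1 h2
  · refine dvd_pow_sub_one ?_ 2
    have hx : (1 - X^(n+1) : ℚ⟦X⟧)⁻¹ * (1 - X^(n+1)) = 1 :=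
      PowerSeries.inv_mul_cancel _ (constCoeff_ne n)
    have he : (1 - X^(n+1) : ℚ⟦X⟧)⁻¹ - 1 = (1 - X^(n+1))⁻¹ * X^(n+1) := by
      linear_combination hx
    rw [he]
    exact dvd_mul_left _ _
  · refine dvd_pow_sub_one ?_ 3
    have : (1 - X^(n+1) : ℚ⟦X⟧) - 1 = -X^(n+1) := by ring
    rw [this]; exact dvd_neg.mpr dvd_rfl
  · refine dvd_pow_sub_one ?_ 1
    have : (1 - X^(n+1) : ℚ⟦X⟧) - 1 = -X^(n+1) := by ring
    rw [this]; exact dvd_neg.mpr dvd_rfl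

lemma coeff_stable (k : ℕ) (s : Finset ℕ) (hs : Finset.range k ⊆ s) :
    PowerSeries.coeff k (∏ n ∈ s, thetaFactor (n+1))
      = PowerSeries.coeff k (∏ n ∈ Finset.range k, thetaFactor (n+1)) := by
  classical
  have hsplit : ∏ n ∈ s, thetaFactor (n+1)
      = (∏ n ∈ Finset.range k, thetaFactor (n+1)) * ∏ n ∈ s \ Finset.range k, thetaFactor (n+1) := by
    rw [mul_comm]
    exact (Finset.prod_sdiff hs).symm
  have hdvd : (X:ℚ⟦X⟧)^(k+1) ∣ (∏ n ∈ s \ Finset.range k, thetaFactor (n+1)) - 1 := by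
    refine dvd_prod_sub_one _ _ fun n hn => ?_
    have hn' : k ≤ n := by
      have := (Finset.mem_sdiff.mp hn).2
      simpa [Finset.mem_range, not_lt] using this
    exact dvd_trans (pow_dvd_pow X (by omega)) (tf_one_mod n)
  have hd2 : (X:ℚ⟦X⟧)^(k+1) ∣ (∏ n ∈ s, thetaFactor (n+1)) - ∏ n ∈ Finset.range k, thetaFactor (n+1) := by
    rw [hsplit]
    have e : (∏ n ∈ Finset.range k, thetaFactor (n+1)) * (∏ n ∈ s \ Finset.range k, thetaFactor (n+1))
        - ∏ n ∈ Finset.range k, thetaFactor (n+1)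
        = (∏ n ∈ Finset.range k, thetaFactor (n+1)) * ((∏ n ∈ s \ Finset.range k, thetaFactor (n+1)) - 1) := by
      ring
    rw [e]
    exact hdvd.mul_left _
  have h3 := (PowerSeries.X_pow_dvd_iff.mp hd2) k (by omega)
  rw [map_sub, sub_eq_zero] at h3
  exact h3

lemma coeff_main (k : ℕ) :
    PowerSeries.coeff k (∏ n ∈ Finset.range k, thetaFactor (n+1)) = PowerSeries.coeff k theta := by
  have h1 := main_dvd k
  have h2 := (PowerSeries.X_pow_dvd_iff.mp h1) k (by omega)
  rw [map_sub, sub_eq_zero] at h2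
  rw [← coeff_stable k (Finset.range (2*k)) (Finset.range_subset_range.mpr (by omega))]
  exact h2


lemma coeff_apply' (f : ℚ⟦X⟧) (d : Unit →₀ ℕ) : f d = PowerSeries.coeff (d ()) f := by
  have h1 : f d = MvPowerSeries.coeff d f := rfl
  have h2 : d = Finsupp.single () (d ()) := Finsupp.unique_single d
  rw [h1, PowerSeries.coeff, ← h2]

end ThetaAux

open ThetaAux Filter

theorem stmt_8 : theta = ∏' n : ℕ, thetaFactor (n + 1) := by
  haveI hT2 : T2Space ℚ⟦X⟧ := inferInstanceAs (T2Space ((Unit →₀ ℕ) → ℚ))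
  have hprod : HasProd (fun n : ℕ => thetaFactor (n+1)) theta := by
    rw [HasProd]
    have key : ∀ d : Unit →₀ ℕ, Tendsto
        (fun s : Finset ℕ => (∏ n ∈ s, thetaFactor (n+1)) d) atTop (nhds (theta d)) := by
      intro d
      have hev : (fun _ : Finset ℕ => theta d)
          =ᶠ[atTop] (fun s : Finset ℕ => (∏ n ∈ s, thetaFactor (n+1)) d) := by
        rw [Filter.EventuallyEq, eventually_atTop]
        refine ⟨Finset.range (d ()), fun s hs => ?_⟩
        rw [coeff_apply' theta d, coeff_apply' (∏ n ∈ s, thetaFactor (n+1)) d, coeff_stable (d ()) s hs, coeff_main]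
      exact Filter.Tendsto.congr' hev tendsto_const_nhds
    exact tendsto_pi_nhds.mpr key
  exact hprod.tprod_eq.symm
end

section
/- Let N ∈ ℕ and h ∈ ℤ with |h| < N/2 and h ≠ 0. As formal power series in q, ∑_{m ≡ h (mod N)} q^{m²} = q^{h²} · ∏_{n ≥ 1} (1 + q^{(2n−1)N² + 2hN}) (1 + q^{(2n−1)N² − 2hN}) (1 − q^{2nN²}). -/
open PowerSeries

noncomputable instance : TopologicalSpace ℤ⟦X⟧ :=
  inferInstanceAs (TopologicalSpace ((Unit →₀ ℕ) → ℤ))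

/-- `ϑ_{h,N}(q) = ∑_{m ≡ h (mod N)} q^{m²}`: the coefficient of `q^k` is
`#{m ∈ ℤ : m ≡ h (mod N), m² = k}`. -/
noncomputable def thetaHN (N : ℕ) (h : ℤ) : ℤ⟦X⟧ :=
  PowerSeries.mk fun k =>
    (Nat.card {m : ℤ // m ≡ h [ZMOD (N : ℤ)] ∧ m ^ 2 = (k : ℤ)} : ℤ)

namespace JTP

open Finset

/-- `y = X^(2a)`, the base for the "Q" variable. -/
noncomputable def yy (a : ℕ) : ℤ⟦X⟧ := (X : ℤ⟦X⟧) ^ (2*a)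

/-- factor `1 - Q^n` with `Q = X^(2a)` -/
noncomputable def QQ (a n : ℕ) : ℤ⟦X⟧ := 1 - yy a ^ n

/-- product of `QQ` over `Ioc l r` -/
noncomputable def W (a l r : ℕ) : ℤ⟦X⟧ := ∏ n ∈ Ioc l r, QQ a n

/-- the Gaussian-binomial-type coefficient in the finite Jacobi identity -/
noncomputable def cc (a M : ℕ) (j : ℤ) : ℤ⟦X⟧ :=
  if j.natAbs ≤ M then W a (M - j.natAbs) M * W a (M + j.natAbs) (2*M) else 0

/-- exponent `a j² + b j` -/
def ee (a b : ℕ) (j : ℤ) : ℤ := a * j^2 + b * j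

/-- monomial with integer exponent (junk at negatives) -/
noncomputable def EE (z : ℤ) : ℤ⟦X⟧ := (X : ℤ⟦X⟧) ^ z.toNat

/-- partial sum side of the finite Jacobi identity -/
noncomputable def SS (a b M : ℕ) : ℤ⟦X⟧ :=
  ∑ j ∈ Icc (-(M:ℤ)) (M:ℤ), EE (ee a b j) * cc a M j

/-- the factors of the triple product -/
noncomputable def ff (a b n : ℕ) : ℤ⟦X⟧ :=
  (1 + (X : ℤ⟦X⟧) ^ ((2*n+1)*a + b)) * (1 + (X : ℤ⟦X⟧) ^ ((2*n+1)*a - b)) *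
    (1 - (X : ℤ⟦X⟧) ^ ((2*n+2)*a))

/-- the limit: theta-like tail series -/
noncomputable def LL (a b : ℕ) : ℤ⟦X⟧ :=
  PowerSeries.mk fun k => ∑ j ∈ Icc (-(k:ℤ)) (k:ℤ), if ee a b j = k then 1 else 0

section Basic

variable {a b : ℕ}

lemma ee_nonneg (hba : b < a) (j : ℤ) : 0 ≤ ee a b j := by
  unfold ee
  rcases le_or_gt 0 j with hj | hj
  · positivity
  · have h1 : j ≤ -1 := by omega
    have hba' : (b:ℤ) < a := by exact_mod_cast hba
    have hb0 : (0:ℤ) ≤ b := by positivity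
    have h2 : 0 ≤ j^2 + j := by nlinarith
    nlinarith [mul_nonneg hb0 h2, mul_nonneg (sub_nonneg.2 hba'.le) (sq_nonneg j)]

lemma natAbs_le_ee (hba : b < a) (j : ℤ) : (j.natAbs : ℤ) ≤ ee a b j := by
  unfold ee
  have hba' : (b:ℤ) < a := by exact_mod_cast hba
  have hb0 : (0:ℤ) ≤ b := by positivity
  rcases le_or_gt 0 j with hj | hj
  · rw [Int.natAbs_of_nonneg hj]
    rcases eq_or_lt_of_le hj with rfl | hj'
    · simp
    · have : 1 ≤ j := hj'
      nlinarith
  · rw [show (j.natAbs : ℤ) = -j by omega]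
    have h1 : j ≤ -1 := by omega
    have h2 : 0 ≤ j^2 + j := by nlinarith
    nlinarith [mul_nonneg hb0 h2,
      mul_nonneg (sub_nonneg.2 (by linarith : (1:ℤ) ≤ a - b)) (sq_nonneg j)]

lemma cc_neg (a M : ℕ) (j : ℤ) : cc a M (-j) = cc a M j := by
  simp [cc, Int.natAbs_neg]

lemma cc_of_gt {M : ℕ} {j : ℤ} (h : (M:ℤ) < j.natAbs) : cc a M j = 0 := by
  rw [cc, if_neg]; omega

lemma W_bot (a : ℕ) {l r : ℕ} (h : l < r) : W a l r = QQ a (l+1) * W a (l+1) r := by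
  rw [W, W, ← Finset.prod_Ioc_consecutive _ (by omega : l ≤ l+1) (by omega : l+1 ≤ r)]
  congr 1
  rw [show Finset.Ioc l (l+1) = {l+1} by simp, Finset.prod_singleton]

lemma W_top (a : ℕ) {l r : ℕ} (h : l ≤ r) : W a l (r+1) = W a l r * QQ a (r+1) :=
  Finset.prod_Ioc_succ_top h _

lemma W_self (a l : ℕ) : W a l l = 1 := by simp [W]

end Basic

section Rec

variable {a b : ℕ}

lemma W_single (a l : ℕ) : W a l (l+1) = QQ a (l+1) := by
  rw [W, show Finset.Ioc l (l+1) = {l+1} from by simp, Finset.prod_singleton]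

lemma cc_natCast (a M i : ℕ) (hi : i ≤ M) :
    cc a M (i:ℤ) = W a (M-i) M * W a (M+i) (2*M) := by
  rw [cc, if_pos (by simpa using hi)]
  simp

/-- the key Pascal-type recurrence for `cc`, natural index -/
lemma cc_recN (M i : ℕ) (hi : i ≤ M + 1) :
    cc a (M+1) (i:ℤ) =
      (1 - yy a ^ (M+1)) *
        ((1 + yy a ^ (2*M+1)) * cc a M (i:ℤ) + yy a ^ (M+1-i) * cc a M ((i:ℤ)-1) +
          yy a ^ (M+1+i) * cc a M ((i:ℤ)+1)) := by
  by_cases hA : i = M+1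
  · -- i = M+1
    subst hA
    rw [show ((M+1:ℕ):ℤ) - 1 = ((M:ℕ):ℤ) from by push_cast; ring,
      show ((M+1:ℕ):ℤ) + 1 = ((M+2:ℕ):ℤ) from by push_cast; ring,
      cc_natCast a (M+1) (M+1) le_rfl,
      cc_natCast a M M le_rfl,
      cc_of_gt (j := ((M+1:ℕ):ℤ)) (by omega),
      cc_of_gt (j := ((M+2:ℕ):ℤ)) (by omega),
      show (M+1)-(M+1) = 0 from by omega, show (M+1)+(M+1) = 2*(M+1) from by ring, W_self,
      mul_one,
      show M - M = 0 from by omega, show M + M = 2*M from by ring, W_self, mul_one,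
      show W a 0 (M+1) = W a 0 M * QQ a (M+1) from W_top a (by omega), QQ]
    ring
  · by_cases hB : i = M
    · -- i = M
      subst hB
      rcases Nat.eq_zero_or_pos i with rfl | hM
      · -- M = 0, i = 0
        rw [show ((0:ℕ):ℤ) - 1 = -(((1:ℕ)):ℤ) from by omega, cc_neg,
          show ((0:ℕ):ℤ) + 1 = ((1:ℕ):ℤ) from by omega,
          cc_natCast a (0+1) 0 (by omega), cc_natCast a 0 0 le_rfl,
          cc_of_gt (j := ((1:ℕ):ℤ)) (by omega)]
        simp only [W_self, show W a 1 2 = QQ a 2 from W_single a 1, QQ]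
        ring
      · -- M ≥ 1
        obtain ⟨d, rfl⟩ : ∃ d, i = d + 1 := ⟨i - 1, by omega⟩
        rw [show ((d+1:ℕ):ℤ) - 1 = ((d:ℕ):ℤ) from by push_cast; ring,
          show ((d+1:ℕ):ℤ) + 1 = ((d+2:ℕ):ℤ) from by push_cast; ring,
          cc_natCast a (d+1+1) (d+1) (by omega),
          cc_natCast a (d+1) (d+1) le_rfl,
          cc_natCast a (d+1) d (by omega),
          cc_of_gt (j := ((d+2:ℕ):ℤ)) (by omega),
          show (d+1)-(d+1) = 0 from by omega, show (d+1)+(d+1) = 2*(d+1) from by ring,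
          W_self, mul_one,
          show (d+1+1)-(d+1) = 1 from by omega, show (d+1+1)+(d+1) = 2*d+3 from by ring,
          show 2*(d+1+1) = (2*d+3)+1 from by ring, W_single,
          show (d+1)-d = 1 from by omega, show (d+1)+d = 2*d+1 from by ring,
          show 2*(d+1) = (2*d+1)+1 from by ring, W_single,
          show W a 1 (d+1+1) = W a 1 (d+1) * QQ a (d+1+1) from W_top a (by omega),
          show W a 0 (d+1) = QQ a (0+1) * W a (0+1) (d+1) from W_bot a (by omega),
          show (0:ℕ)+1 = 1 from rfl]
        simp only [QQ]
        ring
    · -- i ≤ M - 1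
      have hiM : i + 1 ≤ M := by omega
      by_cases hD : i = 0
      · -- i = 0, M ≥ 1
        subst hD
        obtain ⟨d, rfl⟩ : ∃ d, M = d + 1 := ⟨M - 1, by omega⟩
        rw [show ((0:ℕ):ℤ) - 1 = -(((1:ℕ)):ℤ) from by omega, cc_neg,
          show ((0:ℕ):ℤ) + 1 = ((1:ℕ):ℤ) from by omega,
          cc_natCast a (d+1+1) 0 (by omega), cc_natCast a (d+1) 0 (by omega),
          cc_natCast a (d+1) 1 (by omega),
          Nat.sub_zero, Nat.add_zero, Nat.sub_zero, Nat.add_zero,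
          W_self, W_self,
          show (d+1)-1 = d from by omega, show (d+1)+1 = d+2 from by ring,
          show W a d (d+1) = QQ a (d+1) from W_single a d,
          show W a (d+1) (2*(d+1)) = QQ a (d+1+1) * W a (d+1+1) (2*(d+1)) from
            W_bot a (by omega),
          show W a (d+1+1) (2*(d+1+1)) =
              (W a (d+1+1) (2*(d+1)) * QQ a (2*(d+1)+1)) * QQ a (2*(d+1)+2) from by
            rw [show 2*(d+1+1) = (2*(d+1)+1)+1 from by ring, W_top a (by omega),
              show 2*(d+1)+1 = (2*(d+1))+1 from rfl, W_top a (by omega)],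
          show d+1+1 = d+2 from rfl]
        simp only [QQ]
        ring
      · -- 1 ≤ i ≤ M-1
        obtain ⟨i', rfl⟩ : ∃ i', i = i' + 1 := ⟨i - 1, by omega⟩
        obtain ⟨d', rfl⟩ : ∃ d', M = i' + d' + 2 := ⟨M - i' - 2, by omega⟩
        rw [show (((i'+1:ℕ)):ℤ) - 1 = ((i':ℕ):ℤ) from by push_cast; ring,
          show (((i'+1:ℕ)):ℤ) + 1 = ((i'+2:ℕ):ℤ) from by push_cast; ring,
          cc_natCast a (i'+d'+2+1) (i'+1) (by omega),
          cc_natCast a (i'+d'+2) (i'+1) (by omega),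
          cc_natCast a (i'+d'+2) i' (by omega),
          cc_natCast a (i'+d'+2) (i'+2) (by omega)]
        rw [show (i'+d'+2+1)-(i'+1) = d'+2 from by omega,
          show (i'+d'+2+1)+(i'+1) = 2*i'+d'+4 from by omega,
          show (i'+d'+2)-(i'+1) = d'+1 from by omega,
          show (i'+d'+2)+(i'+1) = 2*i'+d'+3 from by omega,
          show (i'+d'+2)-i' = d'+2 from by omega,
          show (i'+d'+2)+i' = 2*i'+d'+2 from by omega,
          show (i'+d'+2)-(i'+2) = d' from by omega,
          show (i'+d'+2)+(i'+2) = 2*i'+d'+4 from by omega,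
          show 2*(i'+d'+2+1) = 2*i'+2*d'+6 from by ring,
          show 2*(i'+d'+2) = 2*i'+2*d'+4 from by ring]
        rw [show W a (d'+1) (i'+d'+2) = QQ a (d'+2) * W a (d'+2) (i'+d'+2) from by
            rw [W_bot a (show d'+1 < i'+d'+2 from by omega)],
          show W a d' (i'+d'+2) = QQ a (d'+1) * (QQ a (d'+2) * W a (d'+2) (i'+d'+2)) from by
            rw [W_bot a (show d' < i'+d'+2 from by omega),
              W_bot a (show d'+1 < i'+d'+2 from by omega)],
          show W a (d'+2) (i'+d'+2+1) = W a (d'+2) (i'+d'+2) * QQ a (i'+d'+2+1) from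
            W_top a (by omega),
          show W a (2*i'+d'+3) (2*i'+2*d'+4) =
              QQ a (2*i'+d'+4) * W a (2*i'+d'+4) (2*i'+2*d'+4) from by
            rw [W_bot a (show 2*i'+d'+3 < 2*i'+2*d'+4 from by omega)],
          show W a (2*i'+d'+2) (2*i'+2*d'+4) = QQ a (2*i'+d'+3) *
              (QQ a (2*i'+d'+4) * W a (2*i'+d'+4) (2*i'+2*d'+4)) from by
            rw [W_bot a (show 2*i'+d'+2 < 2*i'+2*d'+4 from by omega),
              W_bot a (show 2*i'+d'+3 < 2*i'+2*d'+4 from by omega)],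
          show W a (2*i'+d'+4) (2*i'+2*d'+6) =
              (W a (2*i'+d'+4) (2*i'+2*d'+4) * QQ a (2*i'+2*d'+5)) * QQ a (2*i'+2*d'+6) from by
            rw [show 2*i'+2*d'+6 = (2*i'+2*d'+5)+1 from by ring, W_top a (by omega),
              show 2*i'+2*d'+5 = (2*i'+2*d'+4)+1 from by ring, W_top a (by omega)]]
        simp only [QQ]
        ring

/-- the key Pascal-type recurrence for `cc` -/
lemma cc_rec (M : ℕ) (j : ℤ) (hj : j.natAbs ≤ M + 1) :
    cc a (M+1) j =
      (1 - yy a ^ (M+1)) *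
        ((1 + yy a ^ (2*M+1)) * cc a M j + yy a ^ ((M+1-j).toNat) * cc a M (j-1) +
          yy a ^ ((M+1+j).toNat) * cc a M (j+1)) := by
  rcases le_or_gt 0 j with hj0 | hj0
  · obtain ⟨i, rfl⟩ : ∃ i : ℕ, j = (i:ℤ) := ⟨j.toNat, by omega⟩
    rw [show ((M:ℤ)+1-(i:ℤ)).toNat = M+1-i from by omega,
      show ((M:ℤ)+1+(i:ℤ)).toNat = M+1+i from by omega]
    exact cc_recN M i (by omega)
  · obtain ⟨i, rfl⟩ : ∃ i : ℕ, j = -(i:ℤ) := ⟨(-j).toNat, by omega⟩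
    rw [cc_neg, cc_neg,
      show (-(i:ℤ)) - 1 = -((i:ℤ)+1) from by ring, cc_neg,
      show (-(i:ℤ)) + 1 = -((i:ℤ)-1) from by ring, cc_neg,
      show ((M:ℤ)+1-(-(i:ℤ))).toNat = M+1+i from by omega,
      show ((M:ℤ)+1+(-(i:ℤ))).toNat = M+1-i from by omega,
      cc_recN M i (by omega)]
    ring

/-- the finite Jacobi triple product identity -/
lemma reindex_x (hba : b < a) (M : ℕ) (j : ℤ) (hjl : -(M:ℤ) ≤ j) (hjr : j ≤ M) :
    EE (ee a b (j+1)) * (yy a ^ (((M:ℤ)+1-(j+1)).toNat) * cc a M j) =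
      EE (ee a b j) * cc a M j * (X:ℤ⟦X⟧) ^ ((2*M+1)*a + b) := by
  have hE : EE (ee a b (j+1)) * yy a ^ (((M:ℤ)+1-(j+1)).toNat) =
      EE (ee a b j) * (X:ℤ⟦X⟧) ^ ((2*M+1)*a + b) := by
    rw [show ((M:ℤ)+1-(j+1)).toNat = ((M:ℤ)-j).toNat from by omega,
      EE, EE, yy, ← pow_mul, ← pow_add, ← pow_add]
    congr 1
    have e1 : ((ee a b (j+1)).toNat : ℤ) = ee a b (j+1) :=
      Int.toNat_of_nonneg (ee_nonneg hba _)
    have e2 : ((ee a b j).toNat : ℤ) = ee a b j := Int.toNat_of_nonneg (ee_nonneg hba _)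
    have e3 : ((((M:ℤ)-j).toNat) : ℤ) = (M:ℤ)-j := by omega
    have hZ : (((ee a b (j+1)).toNat + 2*a*(((M:ℤ)-j).toNat) : ℕ) : ℤ) =
        (((ee a b j).toNat + ((2*M+1)*a + b) : ℕ) : ℤ) := by
      push_cast [e1, e2, e3]
      rw [ee, ee]
      push_cast
      ring
    exact Nat.cast_inj.mp hZ
  calc EE (ee a b (j+1)) * (yy a ^ (((M:ℤ)+1-(j+1)).toNat) * cc a M j)
      = (EE (ee a b (j+1)) * yy a ^ (((M:ℤ)+1-(j+1)).toNat)) * cc a M j := by ring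
    _ = (EE (ee a b j) * (X:ℤ⟦X⟧) ^ ((2*M+1)*a + b)) * cc a M j := by rw [hE]
    _ = EE (ee a b j) * cc a M j * (X:ℤ⟦X⟧) ^ ((2*M+1)*a + b) := by ring

lemma reindex_y (hba : b < a) (M : ℕ) (j : ℤ) (hjl : -(M:ℤ) ≤ j) (hjr : j ≤ M) :
    EE (ee a b (j-1)) * (yy a ^ (((M:ℤ)+1+(j-1)).toNat) * cc a M j) =
      EE (ee a b j) * cc a M j * (X:ℤ⟦X⟧) ^ ((2*M+1)*a - b) := by
  have hble : b ≤ (2*M+1)*a := le_trans hba.le (Nat.le_mul_of_pos_left a (by omega))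
  have hE : EE (ee a b (j-1)) * yy a ^ (((M:ℤ)+1+(j-1)).toNat) =
      EE (ee a b j) * (X:ℤ⟦X⟧) ^ ((2*M+1)*a - b) := by
    rw [show ((M:ℤ)+1+(j-1)).toNat = ((M:ℤ)+j).toNat from by omega,
      EE, EE, yy, ← pow_mul, ← pow_add, ← pow_add]
    congr 1
    have e1 : ((ee a b (j-1)).toNat : ℤ) = ee a b (j-1) :=
      Int.toNat_of_nonneg (ee_nonneg hba _)
    have e2 : ((ee a b j).toNat : ℤ) = ee a b j := Int.toNat_of_nonneg (ee_nonneg hba _)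
    have e3 : ((((M:ℤ)+j).toNat) : ℤ) = (M:ℤ)+j := by omega
    have hZ : (((ee a b (j-1)).toNat + 2*a*(((M:ℤ)+j).toNat) : ℕ) : ℤ) =
        (((ee a b j).toNat + ((2*M+1)*a - b) : ℕ) : ℤ) := by
      push_cast [e1, e2, e3, Nat.cast_sub hble]
      rw [ee, ee]
      push_cast
      ring
    exact Nat.cast_inj.mp hZ
  calc EE (ee a b (j-1)) * (yy a ^ (((M:ℤ)+1+(j-1)).toNat) * cc a M j)
      = (EE (ee a b (j-1)) * yy a ^ (((M:ℤ)+1+(j-1)).toNat)) * cc a M j := by ring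
    _ = (EE (ee a b j) * (X:ℤ⟦X⟧) ^ ((2*M+1)*a - b)) * cc a M j := by rw [hE]
    _ = EE (ee a b j) * cc a M j * (X:ℤ⟦X⟧) ^ ((2*M+1)*a - b) := by ring

lemma prod_ff (hb : 0 < b) (hba : b < a) (M : ℕ) :
    ∏ n ∈ range M, ff a b n = SS a b M := by
  induction M with
  | zero =>
    rw [Finset.range_zero, Finset.prod_empty, SS]
    rw [show (-(0:ℕ):ℤ) = 0 from by norm_num, show ((0:ℕ):ℤ) = 0 from rfl,
      Finset.Icc_self, Finset.sum_singleton,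
      show ee a b 0 = 0 from by rw [ee]; ring, EE, cc]
    norm_num [W_self]
  | succ M ih =>
    rw [Finset.prod_range_succ, ih]
    have hble : b ≤ (2*M+1)*a := le_trans hba.le (Nat.le_mul_of_pos_left a (by omega))
    have hxy : (X:ℤ⟦X⟧)^((2*M+1)*a+b) * (X:ℤ⟦X⟧)^((2*M+1)*a-b) = yy a^(2*M+1) := by
      rw [← pow_add, yy, ← pow_mul]
      congr 1
      have h1 : (2*M+1)*a + b + ((2*M+1)*a - b) = 2*((2*M+1)*a) := by omega
      rw [h1]; ring
    have hz : (X:ℤ⟦X⟧)^((2*M+2)*a) = yy a^(M+1) := by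
      rw [yy, ← pow_mul]
      congr 1
      ring
    have hff : ff a b M = (1 + yy a^(2*M+1) + X^((2*M+1)*a+b) + X^((2*M+1)*a-b)) *
        (1 - yy a^(M+1)) := by
      rw [ff, hz, ← hxy]; ring
    have hsub : Icc (-(M:ℤ)) (M:ℤ) ⊆ Icc (-(M:ℤ)-1) ((M:ℤ)+1) := by
      intro x hx
      rw [Finset.mem_Icc] at hx ⊢
      omega
    have hS0 : SS a b M * (1 + yy a^(2*M+1)) =
        ∑ j ∈ Icc (-(M:ℤ)-1) ((M:ℤ)+1), EE (ee a b j) * ((1 + yy a^(2*M+1)) * cc a M j) := by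
      rw [SS, Finset.sum_mul,
        Finset.sum_congr rfl (fun j _ => by
          show EE (ee a b j) * cc a M j * (1 + yy a^(2*M+1)) =
            EE (ee a b j) * ((1 + yy a^(2*M+1)) * cc a M j)
          ring)]
      apply Finset.sum_subset hsub
      intro j hjB hjs
      rw [Finset.mem_Icc] at hjB hjs
      rw [cc_of_gt (j := j) (by omega)]
      ring
    have hSx : SS a b M * (X:ℤ⟦X⟧)^((2*M+1)*a+b) =
        ∑ j ∈ Icc (-(M:ℤ)-1) ((M:ℤ)+1),
          EE (ee a b j) * (yy a ^ (((M:ℤ)+1-j).toNat) * cc a M (j-1)) := by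
      rw [SS, Finset.sum_mul]
      have hmap : ∑ j ∈ Icc (-(M:ℤ)) (M:ℤ), EE (ee a b j) * cc a M j * (X:ℤ⟦X⟧)^((2*M+1)*a+b)
          = ∑ j ∈ Icc (-(M:ℤ)+1) ((M:ℤ)+1),
              EE (ee a b j) * (yy a ^ (((M:ℤ)+1-j).toNat) * cc a M (j-1)) := by
        rw [show Icc (-(M:ℤ)+1) ((M:ℤ)+1) =
            Finset.map (addRightEmbedding 1) (Icc (-(M:ℤ)) (M:ℤ)) from
            (Finset.map_add_right_Icc _ _ _).symm, Finset.sum_map]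
        apply Finset.sum_congr rfl
        intro j hj
        rw [Finset.mem_Icc] at hj
        simp only [addRightEmbedding_apply]
        rw [add_sub_cancel_right]
        exact (reindex_x hba M j hj.1 hj.2).symm
      rw [hmap]
      apply Finset.sum_subset
      · intro x hx
        rw [Finset.mem_Icc] at hx ⊢
        omega
      · intro j hjB hjs
        rw [Finset.mem_Icc] at hjB hjs
        rw [cc_of_gt (j := j-1) (by omega)]
        ring
    have hSy : SS a b M * (X:ℤ⟦X⟧)^((2*M+1)*a-b) =
        ∑ j ∈ Icc (-(M:ℤ)-1) ((M:ℤ)+1),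
          EE (ee a b j) * (yy a ^ (((M:ℤ)+1+j).toNat) * cc a M (j+1)) := by
      rw [SS, Finset.sum_mul]
      have hmap : ∑ j ∈ Icc (-(M:ℤ)) (M:ℤ), EE (ee a b j) * cc a M j * (X:ℤ⟦X⟧)^((2*M+1)*a-b)
          = ∑ j ∈ Icc (-(M:ℤ)-1) ((M:ℤ)-1),
              EE (ee a b j) * (yy a ^ (((M:ℤ)+1+j).toNat) * cc a M (j+1)) := by
        rw [show Icc (-(M:ℤ)-1) ((M:ℤ)-1) =
            Finset.map (addRightEmbedding (-1)) (Icc (-(M:ℤ)) (M:ℤ)) from by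
            rw [Finset.map_add_right_Icc]
            congr 1 <;> ring, Finset.sum_map]
        apply Finset.sum_congr rfl
        intro j hj
        rw [Finset.mem_Icc] at hj
        simp only [addRightEmbedding_apply]
        rw [show j + (-1) = j - 1 from by ring, sub_add_cancel]
        exact (reindex_y hba M j hj.1 hj.2).symm
      rw [hmap]
      apply Finset.sum_subset
      · intro x hx
        rw [Finset.mem_Icc] at hx ⊢
        omega
      · intro j hjB hjs
        rw [Finset.mem_Icc] at hjB hjs
        rw [cc_of_gt (j := j+1) (by omega)]
        ring
    calc SS a b M * ff a b M
        = SS a b M * (1 + yy a^(2*M+1)) * (1 - yy a^(M+1)) +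
            SS a b M * (X:ℤ⟦X⟧)^((2*M+1)*a+b) * (1 - yy a^(M+1)) +
            SS a b M * (X:ℤ⟦X⟧)^((2*M+1)*a-b) * (1 - yy a^(M+1)) := by
          rw [hff]; ring
      _ = ∑ j ∈ Icc (-(M:ℤ)-1) ((M:ℤ)+1),
            (EE (ee a b j) * ((1 + yy a^(2*M+1)) * cc a M j) +
              EE (ee a b j) * (yy a ^ (((M:ℤ)+1-j).toNat) * cc a M (j-1)) +
              EE (ee a b j) * (yy a ^ (((M:ℤ)+1+j).toNat) * cc a M (j+1))) * (1 - yy a^(M+1)) := by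
          rw [hS0, hSx, hSy, ← add_mul, ← add_mul, ← Finset.sum_add_distrib,
            ← Finset.sum_add_distrib, Finset.sum_mul]
      _ = ∑ j ∈ Icc (-(M:ℤ)-1) ((M:ℤ)+1), EE (ee a b j) * cc a (M+1) j := by
          apply Finset.sum_congr rfl
          intro j hj
          rw [Finset.mem_Icc] at hj
          rw [cc_rec M j (by omega)]
          ring
      _ = SS a b (M+1) := by
          rw [SS, show (-((M+1:ℕ):ℤ)) = -(M:ℤ)-1 from by push_cast; ring,
            show (((M+1:ℕ)):ℤ) = (M:ℤ)+1 from by push_cast; ring]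

end Rec

section Coeff

variable {a b : ℕ}

lemma prod_sub_one_dvd {d : ℕ} {G : Finset ℕ} {g : ℕ → ℤ⟦X⟧}
    (h : ∀ n ∈ G, (X : ℤ⟦X⟧)^d ∣ (g n - 1)) :
    (X : ℤ⟦X⟧)^d ∣ (∏ n ∈ G, g n) - 1 := by
  classical
  induction G using Finset.induction_on with
  | empty => simp
  | @insert x s hx ih =>
    rw [Finset.prod_insert hx]
    have h1 : (X : ℤ⟦X⟧)^d ∣ g x - 1 := h x (Finset.mem_insert_self _ _)
    have h2 : (X : ℤ⟦X⟧)^d ∣ (∏ n ∈ s, g n) - 1 :=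
      ih fun n hn => h n (Finset.mem_insert_of_mem hn)
    have he : g x * ∏ n ∈ s, g n - 1 = (g x - 1) * ∏ n ∈ s, g n + ((∏ n ∈ s, g n) - 1) := by
      ring
    rw [he]
    exact dvd_add (h1.mul_right _) h2

lemma mul_sub_one_dvd {d : ℕ} {u v : ℤ⟦X⟧} (hu : (X : ℤ⟦X⟧)^d ∣ u - 1)
    (hv : (X : ℤ⟦X⟧)^d ∣ v - 1) : (X : ℤ⟦X⟧)^d ∣ u * v - 1 := by
  have he : u * v - 1 = (u - 1) * v + (v - 1) := by ring
  rw [he]; exact dvd_add (hu.mul_right _) hv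

lemma W_sub_one_dvd {l r d : ℕ} (hd : d ≤ 2*a*(l+1)) :
    (X : ℤ⟦X⟧)^d ∣ W a l r - 1 := by
  apply prod_sub_one_dvd
  intro n hn
  rw [Finset.mem_Ioc] at hn
  have he : QQ a n - 1 = -((X:ℤ⟦X⟧) ^ (2*a*n)) := by
    simp [QQ, yy, ← pow_mul]
  rw [he]
  exact (pow_dvd_pow (X:ℤ⟦X⟧) (le_trans hd (by nlinarith [hn.1]))).neg_right

lemma cc_sub_one_dvd {M : ℕ} {j : ℤ} (hj : j.natAbs ≤ M) :
    (X : ℤ⟦X⟧)^(2*a*(M - j.natAbs + 1)) ∣ cc a M j - 1 := by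
  rw [cc, if_pos hj]
  exact mul_sub_one_dvd (W_sub_one_dvd (by omega))
    (W_sub_one_dvd (Nat.mul_le_mul_left _ (by omega)))

lemma ff_sub_one_dvd (hba : b < a) (n : ℕ) :
    (X : ℤ⟦X⟧)^(n+1) ∣ ff a b n - 1 := by
  have ha : 1 ≤ a := by omega
  apply mul_sub_one_dvd (mul_sub_one_dvd ?_ ?_) ?_
  · rw [add_sub_cancel_left]
    exact pow_dvd_pow _ (by nlinarith)
  · rw [add_sub_cancel_left]
    have hx : b + (n+1) ≤ (2*n+1)*a := by nlinarith
    exact pow_dvd_pow _ (by omega)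
  · rw [show (1:ℤ⟦X⟧) - X ^ ((2*n+2)*a) - 1 = -(X ^ ((2*n+2)*a)) by ring]
    exact (pow_dvd_pow (X:ℤ⟦X⟧) (by nlinarith)).neg_right

lemma coeff_of_X_pow_dvd {k d : ℕ} {φ : ℤ⟦X⟧} (h : (X : ℤ⟦X⟧)^d ∣ φ) (hk : k < d) :
    coeff k φ = 0 := by
  rw [PowerSeries.X_pow_dvd_iff] at h; exact h k hk

lemma coeff_term (hba : b < a) {k M : ℕ} (hM : k ≤ M) (j : ℤ) (hjM : j.natAbs ≤ M) :
    coeff k (EE (ee a b j) * cc a M j) = if ee a b j = k then 1 else 0 := by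
  have ha : 1 ≤ a := by omega
  have he0 : 0 ≤ ee a b j := ee_nonneg hba j
  have hje : (j.natAbs : ℤ) ≤ ee a b j := natAbs_le_ee hba j
  rcases le_or_gt (ee a b j) (k : ℤ) with hek | hek
  · -- ee j ≤ k
    have hterm : EE (ee a b j) * cc a M j =
        (X:ℤ⟦X⟧) ^ (ee a b j).toNat + (X:ℤ⟦X⟧) ^ (ee a b j).toNat * (cc a M j - 1) := by
      rw [EE]; ring
    rw [hterm, map_add, PowerSeries.coeff_X_pow]
    have hdvd : (X:ℤ⟦X⟧) ^ ((ee a b j).toNat + 2*a*(M - j.natAbs + 1)) ∣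
        (X:ℤ⟦X⟧) ^ (ee a b j).toNat * (cc a M j - 1) := by
      rw [pow_add]
      exact mul_dvd_mul_left _ (cc_sub_one_dvd hjM)
    have h2a : 2*(M - j.natAbs + 1) ≤ 2*a*(M - j.natAbs + 1) := by
      apply Nat.mul_le_mul_right; omega
    have hklt : k < (ee a b j).toNat + 2*a*(M - j.natAbs + 1) := by omega
    rw [coeff_of_X_pow_dvd hdvd hklt, add_zero]
    congr 1
    simp only [eq_iff_iff]
    omega
  · -- k < ee j
    have hdvd : (X:ℤ⟦X⟧) ^ (ee a b j).toNat ∣ EE (ee a b j) * cc a M j :=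
      Dvd.dvd.mul_right (by rw [EE]) _
    rw [coeff_of_X_pow_dvd hdvd (by omega), if_neg (by omega)]

lemma coeff_SS (hb : 0 < b) (hba : b < a) {k M : ℕ} (hM : k ≤ M) :
    coeff k (SS a b M) = coeff k (LL a b) := by
  have hje : ∀ j : ℤ, (j.natAbs : ℤ) ≤ ee a b j := natAbs_le_ee hba
  rw [SS, map_sum, LL, PowerSeries.coeff_mk]
  have h1 : ∀ j ∈ Icc (-(M:ℤ)) (M:ℤ),
      coeff k (EE (ee a b j) * cc a M j) = if ee a b j = k then 1 else 0 := by
    intro j hj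
    rw [Finset.mem_Icc] at hj
    exact coeff_term hba hM j (by omega)
  rw [Finset.sum_congr rfl h1]
  symm
  apply Finset.sum_subset
  · intro j hj
    rw [Finset.mem_Icc] at hj ⊢
    omega
  · intro j _ hj
    rw [Finset.mem_Icc] at hj
    rw [if_neg]
    intro hc
    have := hje j
    omega

lemma coeff_prod_ff (hb : 0 < b) (hba : b < a) {k : ℕ} {s : Finset ℕ}
    (hs : range (k+1) ⊆ s) :
    coeff k (∏ n ∈ s, ff a b n) = coeff k (LL a b) := by
  classical
  have hD : (X:ℤ⟦X⟧)^(k+1) ∣ (∏ n ∈ s \ range (k+1), ff a b n) - 1 := by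
    apply prod_sub_one_dvd
    intro n hn
    rw [Finset.mem_sdiff, Finset.mem_range] at hn
    exact dvd_trans (pow_dvd_pow _ (by omega)) (ff_sub_one_dvd hba n)
  rw [← Finset.prod_sdiff hs]
  have hsplit : (∏ n ∈ s \ range (k+1), ff a b n) * ∏ n ∈ range (k+1), ff a b n =
      (∏ n ∈ range (k+1), ff a b n) +
        (∏ n ∈ range (k+1), ff a b n) * ((∏ n ∈ s \ range (k+1), ff a b n) - 1) := by
    ring
  rw [hsplit, map_add, coeff_of_X_pow_dvd (Dvd.dvd.mul_left hD _) (by omega), add_zero,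
    prod_ff hb hba, coeff_SS hb hba (by omega)]

lemma hasProd_ff (hb : 0 < b) (hba : b < a) : HasProd (ff a b) (LL a b) := by
  rw [HasProd]
  refine tendsto_pi_nhds.2 fun d => ?_
  have hd : d = Finsupp.single () (d ()) := Finsupp.unique_single d
  apply Filter.Tendsto.congr' _ (tendsto_const_nhds (x := LL a b d))
  rw [Filter.eventuallyEq_iff_exists_mem]
  refine ⟨{s | range (d () + 1) ⊆ s}, Filter.mem_atTop _, fun s hs => ?_⟩
  have h1 : (∏ n ∈ s, ff a b n) d = coeff (d ()) (∏ n ∈ s, ff a b n) := by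
    conv_lhs => rw [hd]
    exact (MvPowerSeries.coeff_apply _ (Finsupp.single () (d ()))).symm
  have h2 : LL a b d = coeff (d ()) (LL a b) := by
    conv_lhs => rw [hd]
    exact (MvPowerSeries.coeff_apply _ (Finsupp.single () (d ()))).symm
  show LL a b d = (∏ n ∈ s, ff a b n) d
  rw [h1, h2, coeff_prod_ff hb hba hs]

lemma tprod_ff (hb : 0 < b) (hba : b < a) : ∏' n, ff a b n = LL a b := by
  haveI : T2Space ℤ⟦X⟧ := inferInstanceAs (T2Space ((Unit →₀ ℕ) → ℤ))
  exact (hasProd_ff hb hba).tprod_eq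

end Coeff

section Theta

lemma theta_eq (N : ℕ) (hN : 0 < N) (t : ℕ) (ht : 0 < t) (hlt : 2 * t < N) :
    thetaHN N t = (X : ℤ⟦X⟧) ^ (t^2) * LL (N^2) (2*t*N) := by
  apply PowerSeries.ext
  intro k
  rw [thetaHN, PowerSeries.coeff_mk]
  rcases lt_or_ge k (t^2) with hk | hk
  · -- small k : both sides are 0
    rw [coeff_of_X_pow_dvd (Dvd.dvd.mul_right dvd_rfl _) hk]
    have : IsEmpty {m : ℤ // m ≡ (t:ℤ) [ZMOD (N : ℤ)] ∧ m ^ 2 = (k : ℤ)} := by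
      constructor
      rintro ⟨m, hm1, hm2⟩
      have hd : (N:ℤ) ∣ m - t := hm1.symm.dvd
      rcases eq_or_ne m (t:ℤ) with rfl | hmt
      · have : (k:ℤ) = (t:ℤ)^2 := hm2.symm
        have : (t:ℕ)^2 ≤ k := by exact_mod_cast this.ge
        omega
      · have h1 : (N:ℤ) ≤ |m - t| :=
          Int.le_of_dvd (abs_pos.2 (sub_ne_zero.2 hmt)) ((dvd_abs _ _).2 hd)
        have h2 : |m - (t:ℤ)| ≤ |m| + |(t:ℤ)| := abs_sub m (t:ℤ)
        have h3 : |(t:ℤ)| = t := by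
          rw [abs_of_nonneg (by positivity)]
        have h4 : (t:ℤ) + 1 ≤ |m| := by
          have h5 : (2*t:ℤ) < N := by exact_mod_cast hlt
          omega
        have h6 : ((t:ℤ)+1)^2 ≤ m^2 := by
          rw [← sq_abs m]
          have : (0:ℤ) ≤ t + 1 := by positivity
          nlinarith
        have h7 : (k:ℤ) < (t:ℤ)^2 := by exact_mod_cast hk
        rw [hm2] at h6
        nlinarith
    rw [Nat.card_of_isEmpty]
    simp
  · -- k = t^2 + k'
    obtain ⟨k', rfl⟩ : ∃ k', k = k' + t^2 := ⟨k - t^2, by omega⟩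
    rw [PowerSeries.coeff_X_pow_mul, LL, PowerSeries.coeff_mk]
    have hNQ : (0:ℤ) < N := by exact_mod_cast hN
    -- the equivalence between solutions m and solutions j
    have hEq : {m : ℤ // m ≡ (t:ℤ) [ZMOD (N : ℤ)] ∧ m ^ 2 = ((k' + t^2 : ℕ) : ℤ)} ≃
        {j : ℤ // ee (N^2) (2*t*N) j = (k' : ℤ)} := by
      refine Equiv.symm (Equiv.ofBijective (fun jp => ⟨(t:ℤ) + jp.1 * N, ?_, ?_⟩) ⟨?_, ?_⟩)
      · exact (Int.modEq_iff_dvd.2 ⟨jp.1, by ring⟩).symm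
      · have hj := jp.2
        rw [ee] at hj
        push_cast
        push_cast at hj
        nlinarith [hj]
      · rintro ⟨j1, h1⟩ ⟨j2, h2⟩ hj
        simp only [Subtype.mk.injEq] at hj ⊢
        have : j1 * (N:ℤ) = j2 * N := by omega
        exact mul_right_cancel₀ (by positivity) this
      · rintro ⟨m, hm1, hm2⟩
        have hd : (N:ℤ) ∣ m - t := hm1.symm.dvd
        obtain ⟨j, hj⟩ := hd
        rw [mul_comm] at hj
        refine ⟨⟨j, ?_⟩, ?_⟩
        · rw [ee]
          have hm : m = t + j * N := by omega
          rw [hm] at hm2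
          push_cast at hm2 ⊢
          nlinarith [hm2]
        · simp only [Subtype.mk.injEq]
          omega
    rw [Nat.card_congr hEq]
    have hsub : ∀ j : ℤ, ee (N^2) (2*t*N) j = (k' : ℤ) →
        j ∈ Finset.Icc (-(k':ℤ)) (k':ℤ) := by
      intro j hj
      have hba : 2*t*N < N^2 := by nlinarith
      have := natAbs_le_ee hba j
      rw [Finset.mem_Icc]
      omega
    classical
    have hEq2 : {j : ℤ // ee (N^2) (2*t*N) j = (k' : ℤ)} ≃
        {j : ℤ // j ∈ (Finset.Icc (-(k':ℤ)) (k':ℤ)).filter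
          (fun j => ee (N^2) (2*t*N) j = (k' : ℤ))} :=
      Equiv.subtypeEquivRight (fun j => by
        simp only [Finset.mem_filter]
        exact ⟨fun hj => ⟨hsub j hj, hj⟩, fun hj => hj.2⟩)
    rw [Nat.card_congr hEq2, Nat.card_eq_finsetCard, Finset.card_filter]
    push_cast
    rfl

lemma thetaHN_neg (N : ℕ) (h : ℤ) : thetaHN N (-h) = thetaHN N h := by
  apply PowerSeries.ext
  intro k
  rw [thetaHN, thetaHN, PowerSeries.coeff_mk, PowerSeries.coeff_mk]
  congr 1
  refine Nat.card_congr ⟨fun p => ⟨-p.1, by simpa using p.2.1.neg, by rw [neg_sq]; exact p.2.2⟩,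
    fun p => ⟨-p.1, by simpa using p.2.1.neg, by rw [neg_sq]; exact p.2.2⟩,
    fun p => by simp, fun p => by simp⟩

lemma stmt_pos (N : ℕ) (hN : 0 < N) (t : ℕ) (ht : 0 < t) (hlt : 2 * t < N) :
    thetaHN N (t:ℤ) = (X : ℤ⟦X⟧) ^ (((t:ℤ) ^ 2).toNat) *
      ∏' n : ℕ,
        ((1 + (X : ℤ⟦X⟧) ^ (((2 * (n + 1) - 1) * (N : ℤ) ^ 2 + 2 * (t:ℤ) * N).toNat)) *
          (1 + (X : ℤ⟦X⟧) ^ (((2 * (n + 1) - 1) * (N : ℤ) ^ 2 - 2 * (t:ℤ) * N).toNat)) *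
          (1 - (X : ℤ⟦X⟧) ^ (2 * (n + 1) * N ^ 2))) := by
  have hb : 0 < 2*t*N := by positivity
  have hba : 2*t*N < N^2 := by nlinarith
  have hfun : (fun n : ℕ =>
      (1 + (X : ℤ⟦X⟧) ^ (((2 * ((n:ℕ) + 1) - 1) * (N : ℤ) ^ 2 + 2 * (t:ℤ) * N).toNat)) *
        (1 + (X : ℤ⟦X⟧) ^ (((2 * ((n:ℕ) + 1) - 1) * (N : ℤ) ^ 2 - 2 * (t:ℤ) * N).toNat)) *
        (1 - (X : ℤ⟦X⟧) ^ (2 * ((n:ℕ) + 1) * N ^ 2))) = ff (N^2) (2*t*N) := by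
    funext n
    have hble : 2*t*N ≤ (2*n+1)*N^2 := by nlinarith
    rw [ff,
      show (2 * ((n:ℤ) + 1) - 1) * (N : ℤ) ^ 2 + 2 * (t:ℤ) * N =
        (((2*n+1) * N^2 + 2*t*N : ℕ) : ℤ) by push_cast; ring,
      show (2 * ((n:ℤ) + 1) - 1) * (N : ℤ) ^ 2 - 2 * (t:ℤ) * N =
        (((2*n+1) * N^2 - 2*t*N : ℕ) : ℤ) by rw [Nat.cast_sub hble]; push_cast; ring,
      Int.toNat_natCast, Int.toNat_natCast,
      show 2 * (n + 1) * N ^ 2 = (2*n+2) * N^2 by ring]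
  rw [hfun, tprod_ff hb hba,
    show (((t:ℤ) ^ 2).toNat) = t^2 by rw [show ((t:ℤ)^2) = ((t^2 : ℕ) : ℤ) by push_cast; ring,
      Int.toNat_natCast]]
  exact theta_eq N hN t ht hlt

end Theta

end JTP

theorem stmt_9 (N : ℕ) (hN : 0 < N) (h : ℤ) (hh : h ≠ 0) (hlt : 2 * |h| < N) :
    thetaHN N h = (X : ℤ⟦X⟧) ^ (h ^ 2).toNat *
      ∏' n : ℕ,
        ((1 + (X : ℤ⟦X⟧) ^ (((2 * (n + 1) - 1) * (N : ℤ) ^ 2 + 2 * h * N).toNat)) *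
          (1 + (X : ℤ⟦X⟧) ^ (((2 * (n + 1) - 1) * (N : ℤ) ^ 2 - 2 * h * N).toNat)) *
          (1 - (X : ℤ⟦X⟧) ^ (2 * (n + 1) * N ^ 2))) := by
  rcases hh.lt_or_gt with hneg | hpos
  · -- h < 0
    obtain ⟨t, rfl⟩ : ∃ t : ℕ, h = -(t:ℤ) := ⟨(-h).toNat, by omega⟩
    have ht : 0 < t := by omega
    have hlt' : 2 * t < N := by
      rw [abs_of_neg hneg] at hlt; push_cast at hlt ⊢; omega
    rw [JTP.thetaHN_neg N (t:ℤ), JTP.stmt_pos N hN t ht hlt',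
      show ((-(t:ℤ)) ^ 2) = ((t:ℤ)^2) by ring]
    congr 1
    apply tprod_congr
    intro n
    rw [show (2 * ((n:ℤ) + 1) - 1) * (N : ℤ) ^ 2 + 2 * (-(t:ℤ)) * N =
        (2 * ((n:ℤ) + 1) - 1) * (N : ℤ) ^ 2 - 2 * (t:ℤ) * N by ring,
      show (2 * ((n:ℤ) + 1) - 1) * (N : ℤ) ^ 2 - 2 * (-(t:ℤ)) * N =
        (2 * ((n:ℤ) + 1) - 1) * (N : ℤ) ^ 2 + 2 * (t:ℤ) * N by ring]
    ring
  · -- h > 0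
    obtain ⟨t, rfl⟩ : ∃ t : ℕ, h = (t:ℤ) := ⟨h.toNat, by omega⟩
    have ht : 0 < t := by exact_mod_cast hpos
    have hlt' : 2 * t < N := by
      rw [abs_of_pos hpos] at hlt; push_cast at hlt ⊢; omega
    exact JTP.stmt_pos N hN t ht hlt'
end
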